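/- arXiv:2405.17948 — 3 statements merged into one kernel-verified Lean document; each statement's English description precedes it below -/
import Mathlib

section
/- Hexagon property: let C be a dendritic face complex, let α, α', β, β' ∈ {+,−}, and suppose c ≺⁻ b, c' ≺⁻ b, d ≺^α c, d' ≺^{α'} c', e ≺^β d and e ≺^{β'} d'. Then either c = c', or, possibly after exchanging the quadruple (c, d, α, β) with (c', d', α', β'), there exist p ≥ 1, an index r with 0 ≤ r ≤ p, faces c = c₀, c₁, …, c_p = c' with c_i ≺⁻ b for all i, and pairwise distinct faces d₀, …, d_{p−1} such that: for all 0 ≤ i < r, d_i ≺⁺ c_i, d_i ≺⁻ c_{i+1} and e ≺^β d_i; and for all r ≤ i ≤ p−1, d_i ≺⁻ c_i, d_i ≺⁺ c_{i+1} and e ≺^{−β} d_i (this is a non-trivial simple δ(b)-zig-zag from c to c'). -/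
/-- The signed codimension-1 face relation: `true` stands for `≺⁺`, `false` for `≺⁻`. -/
def sprec {α : Type*} (precN precP : α → α → Prop) : Bool → α → α → Prop
  | true => precP
  | false => precN

/-- A dendritic face complex (DFC) on a finite type `α` of faces: a positive-to-one
poset (graded by `dim`, with source relation `precN` = `≺⁻`, target relation
`precP` = `≺⁺`, and target map `tgt` = `γ`) together with a greatest element `top` = `ω`,
oriented thinness (`thin`), and acyclicity (`src_singleton`, `src_exists`, `no_cycle`). -/
structure DFC (α : Type*) [Fintype α] where
  dim : α → ℕ
  precN : α → α → Prop
  precP : α → α → Prop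
  tgt : α → α
  dim_precN : ∀ {y x}, precN y x → dim x = dim y + 1
  dim_precP : ∀ {y x}, precP y x → dim x = dim y + 1
  not_both : ∀ y x, ¬ (precN y x ∧ precP y x)
  tgt_precP : ∀ x, 1 ≤ dim x → precP (tgt x) x
  precP_unique : ∀ {y x}, precP y x → y = tgt x
  src_exists : ∀ x, 1 ≤ dim x → ∃ y, precN y x
  top : α
  le_top : ∀ x, Relation.ReflTransGen (fun a b => precN a b ∨ precP a b) x top
  thin : ∀ (a b : Bool) (x y z : α), sprec precN precP b z y → sprec precN precP a y x →
    ∃! y', y' ≠ y ∧ ∃ a' b', sprec precN precP b' z y' ∧ sprec precN precP a' y' x ∧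
      ((a = b) ↔ ¬ (a' = b'))
  src_singleton : ∀ x, dim x = 1 → ∃! y, precN y x
  no_cycle : ∀ (x : α) (p : ℕ), 1 ≤ p → ∀ y : ℕ → α,
    (∀ i, 1 ≤ i → i ≤ p → precN (y i) x) → y (p + 1) = y 1 →
    ¬ (∀ i, 1 ≤ i → i ≤ p → precN (tgt (y (i + 1))) (y i))

namespace DFC

variable {α : Type*} [Fintype α]

/-- `x ◁ y` : there is `t` with `x ≺⁻ t` and `y ≺⁺ t`. -/
def tri (D : DFC α) (x y : α) : Prop := ∃ t, D.precN x t ∧ D.precP y t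

/-- `<⁺` : the transitive closure of `◁`. -/
def ltP (D : DFC α) : α → α → Prop := Relation.TransGen D.tri

/-- The iterated target `γ^{(k)}ω ∈ C_k` (for `k ≤ n = dim ω`). -/
def itTgt (D : DFC α) (k : ℕ) : α := D.tgt^[D.dim D.top - k] D.top

/-- Membership in `Λ_k` : a `k`-dimensional face that is the target of no face. -/
def lam (D : DFC α) (k : ℕ) (x : α) : Prop := D.dim x = k ∧ ∀ c, ¬ D.precP x c

/-- A (possibly trivial) lower path from `c` to `c'` inside `δ(b)`, all of whose
lower witnesses `dᵢ` have `e` as a `≺^β`-face: `c = c₀ ≻⁻ d₀ ≺⁺ c₁ ≻⁻ d₁ ≺⁺ ⋯ ≺⁺ c_p = c'`. -/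
def lowerPath (D : DFC α) (β : Bool) (b e c c' : α) : Prop :=
  ∃ (p : ℕ) (cs ds : ℕ → α), cs 0 = c ∧ cs p = c' ∧
    (∀ i ≤ p, D.precN (cs i) b) ∧
    ∀ i < p, D.precN (ds i) (cs i) ∧ D.precP (ds i) (cs (i + 1)) ∧
      sprec D.precN D.precP β e (ds i)

/-- A non-trivial simple `δ(b)`-zig-zag from `c` to `c'`: first `r` ascending steps
`cᵢ ≻⁺ dᵢ ≺⁻ c_{i+1}` with `e ≺^β dᵢ`, then `p − r` descending steps
`cᵢ ≻⁻ dᵢ ≺⁺ c_{i+1}` with `e ≺^{−β} dᵢ`, with pairwise distinct `dᵢ`. -/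
def zigzag (D : DFC α) (β : Bool) (b e c c' : α) : Prop :=
  ∃ (p r : ℕ), 1 ≤ p ∧ r ≤ p ∧ ∃ cs ds : ℕ → α,
    cs 0 = c ∧ cs p = c' ∧ (∀ i ≤ p, D.precN (cs i) b) ∧
    (∀ i j, i < p → j < p → i ≠ j → ds i ≠ ds j) ∧
    (∀ i < r, D.precP (ds i) (cs i) ∧ D.precN (ds i) (cs (i + 1)) ∧
      sprec D.precN D.precP β e (ds i)) ∧
    (∀ i, r ≤ i → i < p → D.precN (ds i) (cs i) ∧ D.precP (ds i) (cs (i + 1)) ∧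
      sprec D.precN D.precP (!β) e (ds i))

end DFC

namespace DFC

variable {α : Type*} [Fintype α]

/-- Abbreviation for the signed face relation. -/
def sp (D : DFC α) (s : Bool) (y x : α) : Prop := sprec D.precN D.precP s y x

variable (D : DFC α)

@[simp] lemma sp_false (y x : α) : D.sp false y x = D.precN y x := rfl
@[simp] lemma sp_true (y x : α) : D.sp true y x = D.precP y x := rfl

lemma sp_dim {s : Bool} {y x : α} (h : D.sp s y x) : D.dim x = D.dim y + 1 := by
  cases s
  · exact D.dim_precN h
  · exact D.dim_precP h

lemma sp_sign {s t : Bool} {y x : α} (h : D.sp s y x) (h' : D.sp t y x) : s = t := by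
  cases s <;> cases t <;> first
    | rfl
    | exact absurd ⟨‹D.precN y x›, ‹D.precP y x›⟩ (D.not_both y x)

lemma sp_ne {s : Bool} {y x : α} (h : D.sp s y x) : y ≠ x := by
  intro e; subst e; have := D.sp_dim h; omega

/-- The thinness partner relation: `y'` is the other middle face of the chain
`z ≺ y ≺ x`. -/
def mate (x z y y' : α) : Prop :=
  y' ≠ y ∧ ∃ a b a' b', D.sp b z y ∧ D.sp a y x ∧ D.sp b' z y' ∧ D.sp a' y' x ∧
    ((a = b) ↔ ¬ (a' = b'))

lemma mate_ne {x z y y' : α} (h : D.mate x z y y') : y' ≠ y := h.1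

lemma mate_symm {x z y y' : α} (h : D.mate x z y y') : D.mate x z y' y := by
  obtain ⟨hne, a, b, a', b', h1, h2, h3, h4, h5⟩ := h
  exact ⟨hne.symm, a', b', a, b, h3, h4, h1, h2, by tauto⟩

lemma mate_unique {x z y y₁ y₂ : α} (h1 : D.mate x z y y₁) (h2 : D.mate x z y y₂) :
    y₁ = y₂ := by
  obtain ⟨hne1, a1, b1, a1', b1', k1, k2, k3, k4, k5⟩ := h1
  obtain ⟨hne2, a2, b2, a2', b2', m1, m2, m3, m4, m5⟩ := h2
  have hb : b1 = b2 := D.sp_sign k1 m1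
  have ha : a1 = a2 := D.sp_sign k2 m2
  subst hb; subst ha
  obtain ⟨w, hw, huniq⟩ := D.thin a1 b1 x y z k1 k2
  have e1 : y₁ = w := huniq y₁ ⟨hne1, a1', b1', k3, k4, k5⟩
  have e2 : y₂ = w := huniq y₂ ⟨hne2, a2', b2', m3, m4, m5⟩
  rw [e1, e2]

lemma mate_exists {x z y : α} {a b : Bool} (hb : D.sp b z y) (ha : D.sp a y x) :
    ∃ y', D.mate x z y y' := by
  obtain ⟨w, ⟨hne, a', b', h1, h2, h3⟩, -⟩ := D.thin a b x y z hb ha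
  exact ⟨w, hne, a, b, a', b', hb, ha, h1, h2, h3⟩

open Classical in
/-- The thinness partner as a function. -/
noncomputable def mateF (x z y : α) : α :=
  if h : ∃ y', D.mate x z y y' then h.choose else y

lemma mateF_spec {x z y : α} (h : ∃ y', D.mate x z y y') :
    D.mate x z y (D.mateF x z y) := by
  rw [mateF, dif_pos h]; exact h.choose_spec

lemma mate_mateF {x z y w : α} (h : D.mate x z y w) : D.mateF x z y = w :=
  D.mate_unique (D.mateF_spec ⟨w, h⟩) h

lemma mateF_invol {x z y : α} (h : ∃ y', D.mate x z y y') :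
    D.mateF x z (D.mateF x z y) = y :=
  D.mate_mateF (D.mate_symm (D.mateF_spec h))

/-- Sign flip across a `mate` pair when both outer faces are negative. -/
lemma mate_flip {x z y y' : α} {sy sy' : Bool} (h : D.mate x z y y')
    (hy : D.sp sy z y) (hy' : D.sp sy' z y') (hx : D.precN y x) (hx' : D.precN y' x) :
    sy' = !sy := by
  obtain ⟨hne, a, b, a', b', k1, k2, k3, k4, k5⟩ := h
  have hb : b = sy := D.sp_sign k1 hy
  have hb' : b' = sy' := D.sp_sign k3 hy'
  have ha : a = false := D.sp_sign k2 (show D.sp false y x from hx)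
  have ha' : a' = false := D.sp_sign k4 (show D.sp false y' x from hx')
  subst hb; subst hb'; subst ha; subst ha'
  cases b <;> cases b' <;> simp_all

/-- Sign preservation across a `mate` pair when one outer face is positive. -/
lemma mate_keep {x z y y' : α} {sy sy' : Bool} (h : D.mate x z y y')
    (hy : D.sp sy z y) (hy' : D.sp sy' z y') (hx : D.precN y x) (hx' : D.precP y' x) :
    sy' = sy := by
  obtain ⟨hne, a, b, a', b', k1, k2, k3, k4, k5⟩ := h
  have hb : b = sy := D.sp_sign k1 hy
  have hb' : b' = sy' := D.sp_sign k3 hy'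
  have ha : a = false := D.sp_sign k2 (show D.sp false y x from hx)
  have ha' : a' = true := D.sp_sign k4 (show D.sp true y' x from hx')
  subst hb; subst hb'; subst ha; subst ha'
  cases b <;> cases b' <;> simp_all

/-- Any negative face `C` of `x` with `e ≺^s C` is a mate of the target `g` of `x`
whenever `e ≺^s g` with the same sign. -/
lemma gamma_mate {x g e C : α} {s : Bool} (hg : D.precP g x) (hge : D.sp s e g)
    (hC : D.precN C x) (hCe : D.sp s e C) : D.mate x e g C := by
  refine ⟨?_, true, s, false, s, hge, by simpa using hg, hCe, by simpa using hC, ?_⟩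
  · intro hEq; subst hEq; exact D.not_both C x ⟨hC, hg⟩
  · cases s <;> simp

/-- The "parity trick": two negative faces of `x` containing `e` with the same sign
as `e ≺ γ(x)` must coincide. -/
lemma gamma_uniq {x g e C₁ C₂ : α} {s : Bool} (hg : D.precP g x) (hge : D.sp s e g)
    (hC₁ : D.precN C₁ x) (hC₁e : D.sp s e C₁) (hC₂ : D.precN C₂ x) (hC₂e : D.sp s e C₂) :
    C₁ = C₂ :=
  D.mate_unique (D.gamma_mate hg hge hC₁ hC₁e) (D.gamma_mate hg hge hC₂ hC₂e)

end DFC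

namespace DFC

variable {α : Type*} [Fintype α] (D : DFC α)

/-- A flag for the pair `(x, f)`: a pair `(C, l)` with `f ≺ l ≺ C ≺ x`. -/
def IsFlag (x f : α) (v : α × α) : Prop :=
  (∃ s, D.sp s v.2 v.1) ∧ (∃ s, D.sp s v.1 x) ∧ (∃ s, D.sp s f v.2)

/-- The E-step: replace the label by its thinness partner inside the position. -/
noncomputable def eSt (f : α) (v : α × α) : α × α := (v.1, D.mateF v.1 f v.2)

/-- The B-step: replace the position by its thinness partner below `x`. -/
noncomputable def bSt (x : α) (v : α × α) : α × α := (D.mateF x v.2 v.1, v.2)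

/-- One full step of the flag walk. -/
noncomputable def gSt (x f : α) (v : α × α) : α × α := D.bSt x (D.eSt f v)

/-- The inverse full step. -/
noncomputable def gIn (x f : α) (v : α × α) : α × α := D.eSt f (D.bSt x v)

section flags

variable {x f : α}

lemma eSt_fst (v : α × α) : (D.eSt f v).1 = v.1 := rfl

lemma eSt_mate_ex {v : α × α} (hv : D.IsFlag x f v) : ∃ l', D.mate v.1 f v.2 l' := by
  obtain ⟨⟨a, ha⟩, -, ⟨b, hb⟩⟩ := hv
  exact D.mate_exists hb ha

lemma eSt_mate {v : α × α} (hv : D.IsFlag x f v) : D.mate v.1 f v.2 (D.eSt f v).2 :=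
  D.mateF_spec (D.eSt_mate_ex hv)

lemma bSt_mate_ex {v : α × α} (hv : D.IsFlag x f v) : ∃ C', D.mate x v.2 v.1 C' := by
  obtain ⟨⟨a, ha⟩, ⟨b, hb⟩, -⟩ := hv
  exact D.mate_exists ha hb

lemma bSt_snd (v : α × α) : (D.bSt x v).2 = v.2 := rfl

lemma bSt_mate {v : α × α} (hv : D.IsFlag x f v) : D.mate x v.2 v.1 (D.bSt x v).1 :=
  D.mateF_spec (D.bSt_mate_ex hv)

lemma isFlag_eSt {v : α × α} (hv : D.IsFlag x f v) : D.IsFlag x f (D.eSt f v) := by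
  obtain ⟨hne, a, b, a', b', k1, k2, k3, k4, k5⟩ := D.eSt_mate hv
  exact ⟨⟨a', k4⟩, hv.2.1, ⟨b', k3⟩⟩

lemma isFlag_bSt {v : α × α} (hv : D.IsFlag x f v) : D.IsFlag x f (D.bSt x v) := by
  obtain ⟨hne, a, b, a', b', k1, k2, k3, k4, k5⟩ := D.bSt_mate hv
  exact ⟨⟨b', k3⟩, ⟨a', k4⟩, hv.2.2⟩

lemma isFlag_gSt {v : α × α} (hv : D.IsFlag x f v) : D.IsFlag x f (D.gSt x f v) :=
  D.isFlag_bSt (D.isFlag_eSt hv)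

lemma isFlag_gIn {v : α × α} (hv : D.IsFlag x f v) : D.IsFlag x f (D.gIn x f v) :=
  D.isFlag_eSt (D.isFlag_bSt hv)

lemma eSt_ne {v : α × α} (hv : D.IsFlag x f v) : (D.eSt f v).2 ≠ v.2 :=
  D.mate_ne (D.eSt_mate hv)

lemma bSt_ne {v : α × α} (hv : D.IsFlag x f v) : (D.bSt x v).1 ≠ v.1 :=
  D.mate_ne (D.bSt_mate hv)

lemma eSt_eSt {v : α × α} (hv : D.IsFlag x f v) : D.eSt f (D.eSt f v) = v := by
  have : D.mateF v.1 f (D.mateF v.1 f v.2) = v.2 := D.mateF_invol (D.eSt_mate_ex hv)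
  simp [eSt, this]

lemma bSt_bSt {v : α × α} (hv : D.IsFlag x f v) : D.bSt x (D.bSt x v) = v := by
  have : D.mateF x v.2 (D.mateF x v.2 v.1) = v.1 := D.mateF_invol (D.bSt_mate_ex hv)
  simp [bSt, this]

lemma gIn_gSt {v : α × α} (hv : D.IsFlag x f v) : D.gIn x f (D.gSt x f v) = v := by
  unfold gIn gSt
  rw [D.bSt_bSt (D.isFlag_eSt hv), D.eSt_eSt hv]

lemma gSt_gIn {v : α × α} (hv : D.IsFlag x f v) : D.gSt x f (D.gIn x f v) = v := by
  unfold gIn gSt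
  rw [D.eSt_eSt (D.isFlag_bSt hv), D.bSt_bSt hv]

lemma eSt_gSt (v : α × α) : D.eSt f (D.gSt x f v) = D.gIn x f (D.eSt f v) := by
  unfold gIn gSt bSt eSt
  rfl

end flags

/-- The orbit of a flag under the walk. -/
noncomputable def orb (x f : α) (v₀ : α × α) (k : ℕ) : α × α := (D.gSt x f)^[k] v₀

section orbit

variable {x f : α} {v₀ : α × α}

lemma orb_zero : D.orb x f v₀ 0 = v₀ := rfl

lemma orb_succ (k : ℕ) : D.orb x f v₀ (k + 1) = D.gSt x f (D.orb x f v₀ k) :=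
  Function.iterate_succ_apply' _ _ _

lemma isFlag_orb (hv : D.IsFlag x f v₀) (k : ℕ) : D.IsFlag x f (D.orb x f v₀ k) := by
  induction k with
  | zero => exact hv
  | succ n ih => rw [orb_succ]; exact D.isFlag_gSt ih

lemma orb_add (a b : ℕ) : D.orb x f v₀ (a + b) = (D.gSt x f)^[a] (D.orb x f v₀ b) :=
  Function.iterate_add_apply _ _ _ _

lemma orb_cancel (hv : D.IsFlag x f v₀) {a b : ℕ}
    (h : D.orb x f v₀ (a + 1) = D.orb x f v₀ (b + 1)) : D.orb x f v₀ a = D.orb x f v₀ b := by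
  have := congrArg (D.gIn x f) h
  rwa [orb_succ, orb_succ, D.gIn_gSt (D.isFlag_orb hv a), D.gIn_gSt (D.isFlag_orb hv b)] at this

lemma orb_cancel_many (hv : D.IsFlag x f v₀) :
    ∀ i j, D.orb x f v₀ i = D.orb x f v₀ j → i ≤ j → D.orb x f v₀ (j - i) = v₀ := by
  intro i
  induction i with
  | zero => intro j h _; rw [Nat.sub_zero, ← h]; rfl
  | succ n ih =>
    intro j h hle
    cases j with
    | zero => omega
    | succ m =>
      have := D.orb_cancel hv h
      have h2 := ih m this (by omega)
      simpa using h2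

lemma period_exists (hv : D.IsFlag x f v₀) : ∃ T, 0 < T ∧ D.orb x f v₀ T = v₀ := by
  classical
  have : ¬ Function.Injective (fun k : Fin (Fintype.card (α × α) + 1) => D.orb x f v₀ k) := by
    intro hinj
    have := Fintype.card_le_of_injective _ hinj
    simp at this
  rw [Function.not_injective_iff] at this
  obtain ⟨i, j, hij, hne⟩ := this
  rcases Nat.lt_or_ge (i : ℕ) (j : ℕ) with h | h
  · exact ⟨j - i, by omega, D.orb_cancel_many hv i j hij (by omega)⟩
  · have h' : (j : ℕ) < i := by
      rcases Nat.lt_or_ge (j : ℕ) (i : ℕ) with h2 | h2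
      · exact h2
      · exact absurd (Fin.ext (by omega)) hne
    exact ⟨i - j, by omega, D.orb_cancel_many hv j i hij.symm (by omega)⟩

end orbit

end DFC

namespace DFC

variable {α : Type*} [Fintype α] (D : DFC α)

/-- `Ab x`: no codimension-2 face of `x` is covered inside `x` by three distinct faces. -/
def Ab (x : α) : Prop :=
  ∀ e l₁ l₂ l₃ : α,
    ((∃ s, D.sp s e l₁) ∧ ∃ s, D.sp s l₁ x) →
    ((∃ s, D.sp s e l₂) ∧ ∃ s, D.sp s l₂ x) →
    ((∃ s, D.sp s e l₃) ∧ ∃ s, D.sp s l₃ x) →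
    l₁ = l₂ ∨ l₁ = l₃ ∨ l₂ = l₃

/-- Bundled data of a periodic orbit of flags. -/
structure OrbData (x f : α) (v₀ : α × α) (T : ℕ) : Prop where
  flag : D.IsFlag x f v₀
  posT : 0 < T
  per : D.orb x f v₀ T = v₀
  min : ∀ m, 0 < m → D.orb x f v₀ m = v₀ → T ≤ m

section orbdata

variable {x f : α} {v₀ : α × α} {T : ℕ}

lemma orb_add_T (h : D.OrbData x f v₀ T) (k : ℕ) :
    D.orb x f v₀ (k + T) = D.orb x f v₀ k := by
  have : D.orb x f v₀ (k + T) = (D.gSt x f)^[k] (D.orb x f v₀ T) := D.orb_add k T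
  rw [this, h.per]; rfl

lemma orb_add_mul_T (h : D.OrbData x f v₀ T) (k m : ℕ) :
    D.orb x f v₀ (k + T * m) = D.orb x f v₀ k := by
  induction m with
  | zero => rfl
  | succ n ih =>
    have : k + T * (n + 1) = (k + T * n) + T := by ring
    rw [this, D.orb_add_T h, ih]

lemma orb_mod (h : D.OrbData x f v₀ T) (k : ℕ) :
    D.orb x f v₀ k = D.orb x f v₀ (k % T) := by
  conv_lhs => rw [show k = k % T + T * (k / T) from (Nat.mod_add_div k T).symm]
  exact D.orb_add_mul_T h _ _

lemma orb_inj (h : D.OrbData x f v₀ T) {i j : ℕ} (hi : i < T) (hj : j < T)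
    (hij : D.orb x f v₀ i = D.orb x f v₀ j) : i = j := by
  rcases le_or_gt i j with hle | hlt
  · have := D.orb_cancel_many h.flag i j hij hle
    by_contra hne
    have := h.min (j - i) (by omega) this
    omega
  · have := D.orb_cancel_many h.flag j i hij.symm (by omega)
    have := h.min (i - j) (by omega) this
    omega

lemma e_orb (h : D.OrbData x f v₀ T) (k : ℕ) :
    D.eSt f (D.orb x f v₀ k) = (D.gIn x f)^[k] (D.eSt f v₀) := by
  induction k with
  | zero => rfl
  | succ n ih =>
    rw [D.orb_succ, D.eSt_gSt, ih, ← Function.iterate_succ_apply' (D.gIn x f)]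

lemma g_gIn_iter {v : α × α} (hv : D.IsFlag x f v) :
    ∀ k, (D.gSt x f)^[k] ((D.gIn x f)^[k] v) = v := by
  intro k
  induction k generalizing v hv with
  | zero => rfl
  | succ n ih =>
    rw [Function.iterate_succ_apply (D.gIn x f), Function.iterate_succ_apply' (D.gSt x f),
      ih (D.isFlag_gIn hv), D.gSt_gIn hv]

lemma noE (h : D.OrbData x f v₀ T) {a b : ℕ}
    (hab : D.eSt f (D.orb x f v₀ a) = D.orb x f v₀ b) : False := by
  -- first, E v₀ = orb (a + b)
  have h1 : D.eSt f v₀ = D.orb x f v₀ (a + b) := by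
    have := congrArg ((D.gSt x f)^[a]) hab
    rw [D.e_orb h, D.g_gIn_iter (D.isFlag_eSt h.flag), ← D.orb_add] at this
    exact this
  set s := a + b with hs
  have key : ∀ j, j ≤ s → D.eSt f (D.orb x f v₀ j) = D.orb x f v₀ (s - j) := by
    intro j
    induction j with
    | zero => intro _; exact h1
    | succ n ih =>
      intro hns
      rw [D.orb_succ, D.eSt_gSt, ih (by omega)]
      have : s - n = (s - (n + 1)) + 1 := by omega
      rw [this, D.orb_succ, D.gIn_gSt (D.isFlag_orb h.flag _)]
  rcases Nat.even_or_odd s with ⟨m, hm⟩ | ⟨m, hm⟩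
  · have := key m (by omega)
    rw [show s - m = m by omega] at this
    exact D.eSt_ne (D.isFlag_orb h.flag m) (congrArg Prod.snd this)
  · -- s = 2 m + 1
    have hkey := key m (by omega)
    rw [show s - m = m + 1 by omega] at hkey
    have : D.bSt x (D.orb x f v₀ (m + 1)) = D.eSt f (D.orb x f v₀ m) := by
      rw [D.orb_succ]
      show D.bSt x (D.bSt x (D.eSt f (D.orb x f v₀ m))) = _
      exact D.bSt_bSt (D.isFlag_eSt (D.isFlag_orb h.flag m))
    rw [hkey] at this
    exact D.bSt_ne (D.isFlag_orb h.flag (m + 1)) (congrArg Prod.fst this)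

lemma pos_inj (h : D.OrbData x f v₀ T) (hab : ∀ C, (∃ s, D.sp s C x) → D.Ab C)
    {i j : ℕ} (hi : i < T) (hj : j < T)
    (hij : (D.orb x f v₀ i).1 = (D.orb x f v₀ j).1) : i = j := by
  set vi := D.orb x f v₀ i with hvi
  set vj := D.orb x f v₀ j with hvj
  have hfi : D.IsFlag x f vi := D.isFlag_orb h.flag i
  have hfj : D.IsFlag x f vj := D.isFlag_orb h.flag j
  have hfe : D.IsFlag x f (D.eSt f vi) := D.isFlag_eSt hfi
  have htr := hab vi.1 hfi.2.1 f vi.2 (D.eSt f vi).2 vj.2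
    ⟨hfi.2.2, hfi.1⟩ ⟨hfe.2.2, hfe.1⟩ ⟨hfj.2.2, hij ▸ hfj.1⟩
  rcases htr with h1 | h1 | h1
  · exact absurd h1.symm (D.eSt_ne hfi)
  · exact D.orb_inj h hi hj (Prod.ext hij h1)
  · exfalso
    exact D.noE h (a := i) (b := j) (Prod.ext hij h1)

/-- ascent predicate of the `k`-th step of the orbit. -/
def Asc (x f : α) (v₀ : α × α) (k : ℕ) : Prop :=
  D.precP ((D.orb x f v₀ (k + 1)).2) ((D.orb x f v₀ k).1)

lemma orb_snd_succ (k : ℕ) :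
    (D.orb x f v₀ (k + 1)).2 = (D.eSt f (D.orb x f v₀ k)).2 := by
  rw [D.orb_succ]; rfl

lemma step_bmate (h : D.IsFlag x f v₀) (k : ℕ) :
    D.mate x ((D.orb x f v₀ (k + 1)).2) ((D.orb x f v₀ k).1) ((D.orb x f v₀ (k + 1)).1) := by
  have hf : D.IsFlag x f (D.eSt f (D.orb x f v₀ k)) := D.isFlag_eSt (D.isFlag_orb h k)
  have := D.bSt_mate hf
  rw [D.orb_succ]
  exact this

lemma step_lab_rel (h : D.IsFlag x f v₀) (k : ℕ) :
    ∃ s, D.sp s ((D.orb x f v₀ (k + 1)).2) ((D.orb x f v₀ k).1) := by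
  have hf : D.IsFlag x f (D.eSt f (D.orb x f v₀ k)) := D.isFlag_eSt (D.isFlag_orb h k)
  rw [D.orb_snd_succ]
  exact hf.1

lemma step_emate (h : D.IsFlag x f v₀) (k : ℕ) :
    D.mate ((D.orb x f v₀ (k + 1)).1) f ((D.orb x f v₀ (k + 1)).2) ((D.orb x f v₀ (k + 2)).2) := by
  have := D.eSt_mate (D.isFlag_orb h (k + 1))
  rw [D.orb_snd_succ (v₀ := v₀) (k + 1)]
  exact this

lemma desc_B (h : D.IsFlag x f v₀) {k : ℕ} (hk : ¬ D.Asc x f v₀ k)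
    (hN : D.precN ((D.orb x f v₀ k).1) x) (hN' : D.precN ((D.orb x f v₀ (k + 1)).1) x) :
    D.precP ((D.orb x f v₀ (k + 1)).2) ((D.orb x f v₀ (k + 1)).1) := by
  obtain ⟨s, hs⟩ := D.step_lab_rel h k
  have hsf : s = false := by
    cases s
    · rfl
    · exact absurd hs hk
  subst hsf
  obtain ⟨s', hs'⟩ := (D.isFlag_orb h (k + 1)).1
  have := D.mate_flip (D.step_bmate h k) hs hs' hN hN'
  subst this
  exact hs'

lemma asc_B (h : D.IsFlag x f v₀) {k : ℕ} (hk : D.Asc x f v₀ k)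
    (hN : D.precN ((D.orb x f v₀ k).1) x) (hN' : D.precN ((D.orb x f v₀ (k + 1)).1) x) :
    D.precN ((D.orb x f v₀ (k + 1)).2) ((D.orb x f v₀ (k + 1)).1) := by
  obtain ⟨s', hs'⟩ := (D.isFlag_orb h (k + 1)).1
  have := D.mate_flip (D.step_bmate h k) (show D.sp true _ _ from hk) hs' hN hN'
  subst this
  exact hs'

lemma desc_propagate (h : D.IsFlag x f v₀) {k : ℕ} (hk : ¬ D.Asc x f v₀ k)
    (hN : D.precN ((D.orb x f v₀ k).1) x) (hN' : D.precN ((D.orb x f v₀ (k + 1)).1) x) :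
    ¬ D.Asc x f v₀ (k + 1) := by
  intro hasc
  have h1 := D.desc_B h hk hN hN'
  have e1 := D.precP_unique h1
  have e2 := D.precP_unique hasc
  exact D.mate_ne (D.step_emate h k) (by rw [← e1] at e2; exact e2)

lemma asc_iff_add_T (h : D.OrbData x f v₀ T) (k : ℕ) :
    D.Asc x f v₀ (k + T) ↔ D.Asc x f v₀ k := by
  unfold Asc
  rw [show k + T + 1 = (k + 1) + T by omega, D.orb_add_T h, D.orb_add_T h]

/-- MONO: a periodic orbit cannot stay entirely among the negative faces of `x`. -/
lemma exists_gamma (h : D.OrbData x f v₀ T) :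
    ∃ k, k < T ∧ D.precP ((D.orb x f v₀ k).1) x := by
  by_contra hno
  push_neg at hno
  have posN : ∀ k, D.precN ((D.orb x f v₀ k).1) x := by
    intro k
    obtain ⟨s, hs⟩ := (D.isFlag_orb h.flag k).2.1
    cases s
    · exact hs
    · exfalso
      have hk := hno (k % T) (Nat.mod_lt _ h.posT)
      rw [← D.orb_mod h] at hk
      exact hk hs
  by_cases hall : ∀ k, k < T → D.Asc x f v₀ k
  · -- all ascending: reversed cycle
    refine D.no_cycle x T h.posT (fun i => (D.orb x f v₀ (T + 1 - i)).1)
      (fun i _ _ => posN _) ?_ ?_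
    · simp [h.per, D.orb_zero]
    · intro i hi1 hiT
      show D.precN (D.tgt ((D.orb x f v₀ (T + 1 - (i + 1))).1)) ((D.orb x f v₀ (T + 1 - i)).1)
      have hk : T + 1 - (i + 1) = T - i := by omega
      rw [hk]
      set k := T - i with hkdef
      have hkT : k < T := by omega
      have hasc : D.Asc x f v₀ k := hall k hkT
      have e1 : (D.orb x f v₀ (k + 1)).2 = D.tgt ((D.orb x f v₀ k).1) := D.precP_unique hasc
      have e2 : T + 1 - i = k + 1 := by omega
      rw [← e1, e2]
      exact D.asc_B h.flag hasc (posN k) (posN (k + 1))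
  · -- some descent: all steps descend
    push_neg at hall
    obtain ⟨k₀, hk₀T, hk₀⟩ := hall
    have hdesc0 : ∀ j, ¬ D.Asc x f v₀ (k₀ + j) := by
      intro j
      induction j with
      | zero => simpa using hk₀
      | succ n ih =>
        have := D.desc_propagate h.flag ih (posN _) (posN _)
        rwa [show k₀ + n + 1 = k₀ + (n + 1) by omega] at this
    have hdesc : ∀ m, ¬ D.Asc x f v₀ m := by
      intro m
      have h1 : ¬ D.Asc x f v₀ (k₀ + (m + T * k₀ + T - k₀)) := hdesc0 _
      have hTk : T * (k₀ + 1) = T * k₀ + T := by ring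
      have hle : k₀ ≤ T * k₀ + T := by
        have h3 : T * k₀ ≥ 1 * k₀ := Nat.mul_le_mul_right k₀ h.posT
        omega
      have h2 : k₀ + (m + T * k₀ + T - k₀) = m + T * (k₀ + 1) := by omega
      rw [h2] at h1
      intro hm
      apply h1
      unfold Asc
      rw [show m + T * (k₀ + 1) + 1 = (m + 1) + T * (k₀ + 1) by omega,
        D.orb_add_mul_T h, D.orb_add_mul_T h]
      exact hm
    refine D.no_cycle x T h.posT (fun i => (D.orb x f v₀ (i - 1)).1)
      (fun i _ _ => posN _) ?_ ?_
    · simp [h.per, D.orb_zero]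
    · intro i hi1 hiT
      show D.precN (D.tgt ((D.orb x f v₀ (i + 1 - 1)).1)) ((D.orb x f v₀ (i - 1)).1)
      have e0 : i + 1 - 1 = (i - 1) + 1 := by omega
      rw [e0]
      have hd : ¬ D.Asc x f v₀ (i - 1) := hdesc _
      have h1 := D.desc_B h.flag hd (posN _) (posN _)
      have e1 : (D.orb x f v₀ ((i - 1) + 1)).2 = D.tgt ((D.orb x f v₀ ((i - 1) + 1)).1) :=
        D.precP_unique h1
      rw [← e1]
      obtain ⟨s, hs⟩ := D.step_lab_rel h.flag (i - 1)
      have hsf : s = false := by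
        cases s
        · rfl
        · exact absurd hs hd
      subst hsf
      exact hs

end orbdata

end DFC

namespace DFC

variable {α : Type*} [Fintype α] (D : DFC α)

lemma sp_resolve {y x : α} (h : ∃ s, D.sp s y x) (hP : ¬ D.precP y x) : D.precN y x := by
  obtain ⟨s, hs⟩ := h
  cases s
  · exact hs
  · exact absurd hs hP

lemma mate_parity {x z y y' : α} (h : D.mate x z y y') {a b a' b' : Bool}
    (h1 : D.sp b z y) (h2 : D.sp a y x) (h3 : D.sp b' z y') (h4 : D.sp a' y' x) :
    ((a = b) ↔ ¬ (a' = b')) := by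
  obtain ⟨hne, a0, b0, a0', b0', k1, k2, k3, k4, k5⟩ := h
  have e1 : b0 = b := D.sp_sign k1 h1
  have e2 : a0 = a := D.sp_sign k2 h2
  have e3 : b0' = b' := D.sp_sign k3 h3
  have e4 : a0' = a' := D.sp_sign k4 h4
  subst e1; subst e2; subst e3; subst e4
  exact k5

section signs

variable {x f : α} {v₀ : α × α}

/-- The sign of `f` in the `j`-th label exists. -/
lemma lab_f (h : D.IsFlag x f v₀) (j : ℕ) :
    ∃ s, D.sp s f ((D.orb x f v₀ (j + 1)).2) := (D.isFlag_orb h (j + 1)).2.2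

lemma sign_AA (h : D.IsFlag x f v₀) {j : ℕ}
    (hN : D.precN ((D.orb x f v₀ j).1) x) (hN' : D.precN ((D.orb x f v₀ (j + 1)).1) x)
    (ha : D.Asc x f v₀ j) (ha' : D.Asc x f v₀ (j + 1)) {s s' : Bool}
    (hs : D.sp s f ((D.orb x f v₀ (j + 1)).2)) (hs' : D.sp s' f ((D.orb x f v₀ (j + 2)).2)) :
    s' = s := by
  have h2 : D.sp false ((D.orb x f v₀ (j + 1)).2) ((D.orb x f v₀ (j + 1)).1) :=
    D.asc_B h ha hN hN'
  have h4 : D.sp true ((D.orb x f v₀ (j + 2)).2) ((D.orb x f v₀ (j + 1)).1) := ha'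
  have := D.mate_parity (D.step_emate h j) hs h2 hs' h4
  cases s <;> cases s' <;> simp_all

lemma sign_DD (h : D.IsFlag x f v₀) {j : ℕ}
    (hN : D.precN ((D.orb x f v₀ j).1) x) (hN' : D.precN ((D.orb x f v₀ (j + 1)).1) x)
    (ha : ¬ D.Asc x f v₀ j) (ha' : ¬ D.Asc x f v₀ (j + 1)) {s s' : Bool}
    (hs : D.sp s f ((D.orb x f v₀ (j + 1)).2)) (hs' : D.sp s' f ((D.orb x f v₀ (j + 2)).2)) :
    s' = s := by
  have h2 : D.sp true ((D.orb x f v₀ (j + 1)).2) ((D.orb x f v₀ (j + 1)).1) :=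
    D.desc_B h ha hN hN'
  have h4 : D.sp false ((D.orb x f v₀ (j + 2)).2) ((D.orb x f v₀ (j + 1)).1) :=
    D.sp_resolve (D.step_lab_rel h (j + 1)) ha'
  have := D.mate_parity (D.step_emate h j) hs h2 hs' h4
  cases s <;> cases s' <;> simp_all

lemma sign_AD (h : D.IsFlag x f v₀) {j : ℕ}
    (hN : D.precN ((D.orb x f v₀ j).1) x) (hN' : D.precN ((D.orb x f v₀ (j + 1)).1) x)
    (ha : D.Asc x f v₀ j) (ha' : ¬ D.Asc x f v₀ (j + 1)) {s s' : Bool}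
    (hs : D.sp s f ((D.orb x f v₀ (j + 1)).2)) (hs' : D.sp s' f ((D.orb x f v₀ (j + 2)).2)) :
    s' = !s := by
  have h2 : D.sp false ((D.orb x f v₀ (j + 1)).2) ((D.orb x f v₀ (j + 1)).1) :=
    D.asc_B h ha hN hN'
  have h4 : D.sp false ((D.orb x f v₀ (j + 2)).2) ((D.orb x f v₀ (j + 1)).1) :=
    D.sp_resolve (D.step_lab_rel h (j + 1)) ha'
  have := D.mate_parity (D.step_emate h j) hs h2 hs' h4
  cases s <;> cases s' <;> simp_all

lemma sign_const_D (h : D.IsFlag x f v₀) :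
    ∀ j₁ j₂, j₁ ≤ j₂ →
    (∀ m, j₁ ≤ m → m ≤ j₂ → ¬ D.Asc x f v₀ m) →
    (∀ m, j₁ ≤ m → m ≤ j₂ + 1 → D.precN ((D.orb x f v₀ m).1) x) →
    ∀ {s₁ s₂ : Bool}, D.sp s₁ f ((D.orb x f v₀ (j₁ + 1)).2) →
      D.sp s₂ f ((D.orb x f v₀ (j₂ + 1)).2) → s₂ = s₁ := by
  intro j₁ j₂ hle
  induction j₂ with
  | zero =>
    intro _ _ s₁ s₂ hs₁ hs₂
    have : j₁ = 0 := by omega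
    subst this
    exact D.sp_sign hs₂ hs₁
  | succ n ih =>
    intro hdesc hδ s₁ s₂ hs₁ hs₂
    rcases Nat.lt_or_ge j₁ (n + 1) with hlt | hge
    · obtain ⟨t, ht⟩ := D.lab_f h n
      have e1 : s₂ = t :=
        D.sign_DD h (hδ n (by omega) (by omega)) (hδ (n + 1) (by omega) (by omega))
          (hdesc n (by omega) (by omega)) (hdesc (n + 1) (by omega) (by omega)) ht hs₂
      have e2 : t = s₁ := ih (by omega) (fun m h1 h2 => hdesc m h1 (by omega))
        (fun m h1 h2 => hδ m h1 (by omega)) hs₁ ht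
      exact e1.trans e2
    · have : j₁ = n + 1 := by omega
      subst this
      exact D.sp_sign hs₂ hs₁

lemma sign_const_A (h : D.IsFlag x f v₀) :
    ∀ j₁ j₂, j₁ ≤ j₂ →
    (∀ m, j₁ ≤ m → m ≤ j₂ → D.Asc x f v₀ m) →
    (∀ m, j₁ ≤ m → m ≤ j₂ + 1 → D.precN ((D.orb x f v₀ m).1) x) →
    ∀ {s₁ s₂ : Bool}, D.sp s₁ f ((D.orb x f v₀ (j₁ + 1)).2) →
      D.sp s₂ f ((D.orb x f v₀ (j₂ + 1)).2) → s₂ = s₁ := by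
  intro j₁ j₂ hle
  induction j₂ with
  | zero =>
    intro _ _ s₁ s₂ hs₁ hs₂
    have : j₁ = 0 := by omega
    subst this
    exact D.sp_sign hs₂ hs₁
  | succ n ih =>
    intro hasc hδ s₁ s₂ hs₁ hs₂
    rcases Nat.lt_or_ge j₁ (n + 1) with hlt | hge
    · obtain ⟨t, ht⟩ := D.lab_f h n
      have e1 : s₂ = t :=
        D.sign_AA h (hδ n (by omega) (by omega)) (hδ (n + 1) (by omega) (by omega))
          (hasc n (by omega) (by omega)) (hasc (n + 1) (by omega) (by omega)) ht hs₂
      have e2 : t = s₁ := ih (by omega) (fun m h1 h2 => hasc m h1 (by omega))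
        (fun m h1 h2 => hδ m h1 (by omega)) hs₁ ht
      exact e1.trans e2
    · have : j₁ = n + 1 := by omega
      subst this
      exact D.sp_sign hs₂ hs₁

end signs

end DFC

namespace DFC

variable {α : Type*} [Fintype α] (D : DFC α)

section duplabel

variable {x f : α} {v₀ : α × α} {T : ℕ}

/-- No two distinct steps of a (rebased) periodic orbit carry the same label. -/
lemma dup_label (h : D.OrbData x f v₀ T) (hab : ∀ C, (∃ s, D.sp s C x) → D.Ab C)
    (hγ : D.precP ((D.orb x f v₀ (T - 1)).1) x) {j₁ j₂ : ℕ} (hj : j₁ < j₂) (hj2 : j₂ < T)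
    (heq : (D.orb x f v₀ (j₁ + 1)).2 = (D.orb x f v₀ (j₂ + 1)).2) : False := by
  classical
  have hδ : ∀ m, m < T → m ≠ T - 1 → D.precN ((D.orb x f v₀ m).1) x := by
    intro m hm hne
    refine D.sp_resolve (D.isFlag_orb h.flag m).2.1 ?_
    intro hP
    have e1 := D.precP_unique hP
    have e2 := D.precP_unique hγ
    have e3 : (D.orb x f v₀ m).1 = (D.orb x f v₀ (T - 1)).1 := by rw [e1, e2]
    exact hne (D.pos_inj h hab hm (by omega) e3)
  by_cases hadj : j₂ = j₁ + 1
  · rw [hadj] at heq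
    exact D.mate_ne (D.step_emate h.flag j₁) heq.symm
  have hT3 : 3 ≤ T := by omega
  have hTe : T - 1 + 1 = T := by omega
  by_cases hc1 : j₂ = T - 1
  · subst hc1
    by_cases hz : j₁ = 0
    · subst hz
      have hm := D.step_emate h.flag (T - 1)
      rw [hTe] at hm heq
      rw [show T - 1 + 2 = 1 + T by omega, D.orb_add_T h 1] at hm
      exact D.mate_ne hm heq
    · have hbm := D.step_bmate h.flag (T - 1)
      rw [hTe] at hbm
      obtain ⟨sg, hsg⟩ := D.step_lab_rel h.flag (T - 1)
      rw [hTe] at hsg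
      obtain ⟨s0, hs0⟩ := (D.isFlag_orb h.flag T).1
      have hN0 : D.precN ((D.orb x f v₀ T).1) x := by
        have := hδ 0 h.posT (by omega)
        rw [show D.orb x f v₀ T = D.orb x f v₀ 0 from h.per]
        exact this
      have hkeep : sg = s0 := D.mate_keep (D.mate_symm hbm) hs0 hsg hN0 hγ
      rw [hTe] at heq
      rw [← heq] at hsg hs0
      rw [hkeep] at hsg
      obtain ⟨σ₁, hσ₁⟩ := D.step_lab_rel h.flag j₁
      obtain ⟨σ₂, hσ₂⟩ := (D.isFlag_orb h.flag (j₁ + 1)).1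
      have hflip : σ₂ = !σ₁ := D.mate_flip (D.step_bmate h.flag j₁) hσ₁ hσ₂
        (hδ j₁ (by omega) (by omega)) (hδ (j₁ + 1) (by omega) (by omega))
      by_cases hss : σ₁ = s0
      · rw [hss] at hσ₁
        have e := D.gamma_uniq hγ hsg hN0 hs0 (hδ j₁ (by omega) (by omega)) hσ₁
        have e2 : (D.orb x f v₀ 0).1 = (D.orb x f v₀ j₁).1 := by
          rw [← show D.orb x f v₀ T = D.orb x f v₀ 0 from h.per]
          exact e
        have := D.pos_inj h hab (show 0 < T by omega) (show j₁ < T by omega) e2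
        omega
      · have hσ₂s : σ₂ = s0 := by
          cases σ₁ <;> cases s0 <;> first | exact absurd rfl hss | simpa using hflip
        rw [hσ₂s] at hσ₂
        have e := D.gamma_uniq hγ hsg hN0 hs0 (hδ (j₁ + 1) (by omega) (by omega)) hσ₂
        have e2 : (D.orb x f v₀ 0).1 = (D.orb x f v₀ (j₁ + 1)).1 := by
          rw [← show D.orb x f v₀ T = D.orb x f v₀ 0 from h.per]
          exact e
        have := D.pos_inj h hab (show 0 < T by omega) (show j₁ + 1 < T by omega) e2
        omega
  by_cases hc2 : j₂ = T - 2
  · subst hc2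
    have hTe2 : T - 2 + 1 = T - 1 := by omega
    have hbm := D.step_bmate h.flag (T - 2)
    rw [hTe2] at hbm
    obtain ⟨sd, hsd⟩ := D.step_lab_rel h.flag (T - 2)
    rw [hTe2] at hsd
    obtain ⟨sg, hsg⟩ := (D.isFlag_orb h.flag (T - 1)).1
    have hkeep : sg = sd := D.mate_keep hbm hsd hsg (hδ (T - 2) (by omega) (by omega)) hγ
    rw [hTe2] at heq
    rw [← heq] at hsd hsg
    rw [hkeep] at hsg
    obtain ⟨σ₁, hσ₁⟩ := D.step_lab_rel h.flag j₁
    obtain ⟨σ₂, hσ₂⟩ := (D.isFlag_orb h.flag (j₁ + 1)).1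
    have hflip : σ₂ = !σ₁ := D.mate_flip (D.step_bmate h.flag j₁) hσ₁ hσ₂
      (hδ j₁ (by omega) (by omega)) (hδ (j₁ + 1) (by omega) (by omega))
    by_cases hss : σ₁ = sd
    · rw [hss] at hσ₁
      have e := D.gamma_uniq hγ hsg (hδ (T - 2) (by omega) (by omega)) hsd
        (hδ j₁ (by omega) (by omega)) hσ₁
      have := D.pos_inj h hab (show T - 2 < T by omega) (show j₁ < T by omega) e
      omega
    · have hσ₂s : σ₂ = sd := by
        cases σ₁ <;> cases sd <;> first | exact absurd rfl hss | simpa using hflip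
      rw [hσ₂s] at hσ₂
      have e := D.gamma_uniq hγ hsg (hδ (T - 2) (by omega) (by omega)) hsd
        (hδ (j₁ + 1) (by omega) (by omega)) hσ₂
      have := D.pos_inj h hab (show T - 2 < T by omega) (show j₁ + 1 < T by omega) e
      omega
  -- both steps internal : j₂ ≤ T - 3
  have hj₂3 : j₂ ≤ T - 3 := by omega
  have hδR : ∀ m, m ≤ T - 2 → D.precN ((D.orb x f v₀ m).1) x := fun m hm =>
    hδ m (by omega) (by omega)
  by_cases ha1 : D.Asc x f v₀ j₁
  · by_cases ha2 : D.Asc x f v₀ j₂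
    · -- all ascending : cycle against acyclicity
      have ascAll : ∀ k, k ≤ j₂ - j₁ → D.Asc x f v₀ (j₂ - k) := by
        intro k
        induction k with
        | zero => intro _; simpa using ha2
        | succ n ih =>
          intro hk
          by_contra hcon
          have hprop := D.desc_propagate h.flag hcon (hδR _ (by omega)) (hδR _ (by omega))
          rw [show j₂ - (n + 1) + 1 = j₂ - n by omega] at hprop
          exact hprop (ih (by omega))
      have hasc : ∀ m, j₁ ≤ m → m ≤ j₂ → D.Asc x f v₀ m := by
        intro m h1 h2
        have := ascAll (j₂ - m) (by omega)
        rwa [show j₂ - (j₂ - m) = m by omega] at this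
      refine D.no_cycle x (j₂ - j₁) (by omega)
        (fun i => if i ≤ j₂ - j₁ then (D.orb x f v₀ (j₂ + 1 - i)).1 else (D.orb x f v₀ j₂).1)
        ?_ ?_ ?_
      · intro i hi1 hip
        simp only [if_pos hip]
        exact hδR _ (by omega)
      · have h1 : ¬ (j₂ - j₁ + 1 ≤ j₂ - j₁) := by omega
        simp only [if_neg h1, if_pos (show 1 ≤ j₂ - j₁ by omega)]
        rw [show j₂ + 1 - 1 = j₂ by omega]
      · intro i hi1 hip
        by_cases hilt : i < j₂ - j₁
        · simp only [if_pos (show i + 1 ≤ j₂ - j₁ by omega), if_pos hip]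
          rw [show j₂ + 1 - (i + 1) = j₂ - i by omega]
          have hk : D.Asc x f v₀ (j₂ - i) := hasc _ (by omega) (by omega)
          rw [← D.precP_unique hk]
          rw [show j₂ + 1 - i = j₂ - i + 1 by omega]
          exact D.asc_B h.flag hk (hδR _ (by omega)) (hδR _ (by omega))
        · have hieq : i = j₂ - j₁ := by omega
          subst hieq
          have h2 : ¬ (j₂ - j₁ + 1 ≤ j₂ - j₁) := by omega
          simp only [if_neg h2, if_pos hip]
          rw [← D.precP_unique ha2]
          rw [← heq, show j₂ + 1 - (j₂ - j₁) = j₁ + 1 by omega]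
          exact D.asc_B h.flag ha1 (hδR _ (by omega)) (hδR _ (by omega))
    · -- ascending then descending : sign contradiction
      have hex : ∃ m, ¬ D.Asc x f v₀ (j₁ + m) :=
        ⟨j₂ - j₁, by rw [show j₁ + (j₂ - j₁) = j₂ by omega]; exact ha2⟩
      set K := Nat.find hex with hKdef
      have hKspec : ¬ D.Asc x f v₀ (j₁ + K) := Nat.find_spec hex
      have hKle : K ≤ j₂ - j₁ := Nat.find_le (by rw [show j₁ + (j₂ - j₁) = j₂ by omega]; exact ha2)
      have hKmin : ∀ m, m < K → D.Asc x f v₀ (j₁ + m) := fun m hm =>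
        not_not.mp (Nat.find_min hex hm)
      have hK1 : 1 ≤ K := by
        rcases Nat.eq_zero_or_pos K with h0 | h1
        · exfalso; rw [h0] at hKspec; exact hKspec (by simpa using ha1)
        · exact h1
      obtain ⟨sA, hsA⟩ := D.lab_f h.flag j₁
      obtain ⟨sP, hsP⟩ := D.lab_f h.flag (j₁ + K - 1)
      obtain ⟨sK, hsK⟩ := D.lab_f h.flag (j₁ + K)
      obtain ⟨s2, hs2⟩ := D.lab_f h.flag j₂
      have e1 : sP = sA := by
        refine D.sign_const_A h.flag j₁ (j₁ + K - 1) (by omega) ?_ ?_ hsA hsP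
        · intro m h1 h2
          have := hKmin (m - j₁) (by omega)
          rwa [show j₁ + (m - j₁) = m by omega] at this
        · intro m h1 h2
          exact hδR m (by omega)
      have e2 : sK = !sP := by
        have ha : D.Asc x f v₀ (j₁ + K - 1) := by
          have := hKmin (K - 1) (by omega)
          rwa [show j₁ + (K - 1) = j₁ + K - 1 by omega] at this
        have ha' : ¬ D.Asc x f v₀ (j₁ + K - 1 + 1) := by
          rw [show j₁ + K - 1 + 1 = j₁ + K by omega]
          exact hKspec
        have h3 : D.sp sK f ((D.orb x f v₀ (j₁ + K - 1 + 2)).2) := by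
          rw [show j₁ + K - 1 + 2 = j₁ + K + 1 by omega]
          exact hsK
        exact D.sign_AD h.flag (hδR _ (by omega)) (hδR _ (by omega)) ha ha' hsP h3
      have descK : ∀ k, j₁ + K + k ≤ j₂ → ¬ D.Asc x f v₀ (j₁ + K + k) := by
        intro k
        induction k with
        | zero => intro _; simpa using hKspec
        | succ n ih =>
          intro hk
          exact D.desc_propagate h.flag (ih (by omega)) (hδR (j₁ + K + n) (by omega))
            (hδR (j₁ + K + n + 1) (by omega))
      have e3 : s2 = sK := by
        refine D.sign_const_D h.flag (j₁ + K) j₂ (by omega) ?_ ?_ hsK hs2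
        · intro m h1 h2
          have := descK (m - (j₁ + K)) (by omega)
          rwa [show j₁ + K + (m - (j₁ + K)) = m by omega] at this
        · intro m h1 h2
          exact hδR m (by omega)
      have e4 : s2 = sA := by
        rw [heq] at hsA
        exact D.sp_sign hs2 hsA
      rw [e1] at e2
      rw [e2] at e3
      rw [e4] at e3
      cases sA <;> simp at e3
  · -- first step descending : all steps descend, cycle against acyclicity
    have descAll : ∀ k, j₁ + k ≤ j₂ → ¬ D.Asc x f v₀ (j₁ + k) := by
      intro k
      induction k with
      | zero => intro _; simpa using ha1
      | succ n ih =>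
        intro hk
        exact D.desc_propagate h.flag (ih (by omega)) (hδR (j₁ + n) (by omega))
          (hδR (j₁ + n + 1) (by omega))
    by_cases ha2 : D.Asc x f v₀ j₂
    · have := descAll (j₂ - j₁) (by omega)
      rw [show j₁ + (j₂ - j₁) = j₂ by omega] at this
      exact this ha2
    · have hdesc : ∀ m, j₁ ≤ m → m ≤ j₂ → ¬ D.Asc x f v₀ m := by
        intro m h1 h2
        have := descAll (m - j₁) (by omega)
        rwa [show j₁ + (m - j₁) = m by omega] at this
      refine D.no_cycle x (j₂ - j₁) (by omega)
        (fun i => if i ≤ j₂ - j₁ then (D.orb x f v₀ (j₁ + i)).1 else (D.orb x f v₀ (j₁ + 1)).1)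
        ?_ ?_ ?_
      · intro i hi1 hip
        simp only [if_pos hip]
        exact hδR _ (by omega)
      · have h1 : ¬ (j₂ - j₁ + 1 ≤ j₂ - j₁) := by omega
        simp only [if_neg h1, if_pos (show 1 ≤ j₂ - j₁ by omega)]
      · intro i hi1 hip
        by_cases hilt : i < j₂ - j₁
        · simp only [if_pos (show i + 1 ≤ j₂ - j₁ by omega), if_pos hip]
          show D.precN (D.tgt ((D.orb x f v₀ (j₁ + i + 1)).1)) ((D.orb x f v₀ (j₁ + i)).1)
          have hd : ¬ D.Asc x f v₀ (j₁ + i) := hdesc _ (by omega) (by omega)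
          have h1 := D.desc_B h.flag hd (hδR _ (by omega)) (hδR _ (by omega))
          rw [← D.precP_unique h1]
          exact D.sp_resolve (D.step_lab_rel h.flag (j₁ + i)) hd
        · have hieq : i = j₂ - j₁ := by omega
          subst hieq
          have h2 : ¬ (j₂ - j₁ + 1 ≤ j₂ - j₁) := by omega
          simp only [if_neg h2, if_pos hip]
          have h1 := D.desc_B h.flag ha1 (hδR _ (by omega)) (hδR _ (by omega))
          rw [← D.precP_unique h1]
          rw [heq, show j₁ + (j₂ - j₁) = j₂ by omega]
          exact D.sp_resolve (D.step_lab_rel h.flag j₂) ha2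
end duplabel

end DFC

namespace DFC

variable {α : Type*} [Fintype α] (D : DFC α)

section locate

variable {x f : α} {v₀ : α × α} {T : ℕ}

lemma mk_orbData (hv : D.IsFlag x f v₀) : ∃ T, D.OrbData x f v₀ T := by
  classical
  have hex := D.period_exists hv
  refine ⟨Nat.find hex, hv, (Nat.find_spec hex).1, (Nat.find_spec hex).2, ?_⟩
  intro m hm hm2
  exact Nat.find_le ⟨hm, hm2⟩

lemma orb_of_orb (a k : ℕ) :
    D.orb x f (D.orb x f v₀ a) k = D.orb x f v₀ (k + a) := by
  unfold orb
  rw [Function.iterate_add_apply]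

lemma orbData_rebase (h : D.OrbData x f v₀ T) (a : ℕ) :
    D.OrbData x f (D.orb x f v₀ a) T := by
  refine ⟨D.isFlag_orb h.flag a, h.posT, ?_, ?_⟩
  · rw [D.orb_of_orb, show T + a = a + T by omega, D.orb_add_T h]
  · intro m hm hme
    rw [D.orb_of_orb] at hme
    have := D.orb_cancel_many h.flag a (m + a) hme.symm (by omega)
    rw [show m + a - a = m by omega] at this
    exact h.min m hm this

lemma gIn_orb (h : D.IsFlag x f v₀) (k : ℕ) :
    D.gIn x f (D.orb x f v₀ (k + 1)) = D.orb x f v₀ k := by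
  rw [D.orb_succ, D.gIn_gSt (D.isFlag_orb h k)]

lemma gIn_iter_orb (h : D.OrbData x f v₀ T) (m : ℕ) :
    ∀ j, (D.gIn x f)^[j] (D.orb x f v₀ m) = D.orb x f v₀ (m + (T - 1) * j) := by
  intro j
  induction j generalizing m with
  | zero => simp
  | succ n ih =>
    rw [Function.iterate_succ_apply]
    have e1 : D.gIn x f (D.orb x f v₀ m) = D.orb x f v₀ (m + (T - 1)) := by
      have e2 : D.orb x f v₀ m = D.gSt x f (D.orb x f v₀ (m + (T - 1))) := by
        have hT := h.posT
        rw [← D.orb_succ, show m + (T - 1) + 1 = m + T by omega, D.orb_add_T h]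
      rw [e2, D.gIn_gSt (D.isFlag_orb h.flag _)]
    rw [e1, ih]
    congr 1
    ring

lemma gSt_eSt {w : α × α} (hw : D.IsFlag x f w) :
    D.gSt x f (D.eSt f w) = D.eSt f (D.gIn x f w) := by
  unfold gSt gIn
  rw [D.eSt_eSt hw, D.eSt_eSt (D.isFlag_bSt hw)]

lemma isFlag_gIn_iter {v : α × α} (hv : D.IsFlag x f v) (n : ℕ) :
    D.IsFlag x f ((D.gIn x f)^[n] v) := by
  induction n with
  | zero => exact hv
  | succ m ihm => rw [Function.iterate_succ_apply' (D.gIn x f)]; exact D.isFlag_gIn ihm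

lemma g_iter_eSt (j : ℕ) :
    ∀ v : α × α, D.IsFlag x f v → (D.gSt x f)^[j] (D.eSt f v) = D.eSt f ((D.gIn x f)^[j] v) := by
  induction j with
  | zero => intro v _; rfl
  | succ n ih =>
    intro v hv
    rw [Function.iterate_succ_apply' (D.gSt x f), ih v hv,
      Function.iterate_succ_apply' (D.gIn x f)]
    exact D.gSt_eSt (D.isFlag_gIn_iter hv n)

/-- Any flag lies on the orbit of `w₀` (possibly after an E-step). -/
lemma locate (h : D.OrbData x f v₀ T) (hab : ∀ C, (∃ s, D.sp s C x) → D.Ab C)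
    {u : α × α} (hu : D.IsFlag x f u) :
    ∃ j, j < T ∧ (u = D.orb x f v₀ j ∨ u = D.eSt f (D.orb x f v₀ j)) := by
  classical
  -- γ-flag on the orbit of v₀
  obtain ⟨kw, hkwT, hkw⟩ := D.exists_gamma h
  -- orbit of u
  obtain ⟨T', h'⟩ := D.mk_orbData (v₀ := u) hu
  obtain ⟨ku, hkuT, hku⟩ := D.exists_gamma h'
  -- the two γ-flags have the same position
  have hpos : (D.orb x f u ku).1 = (D.orb x f v₀ kw).1 := by
    rw [D.precP_unique hku, D.precP_unique hkw]
  -- identify the γ-flag of u's orbit among the two flags at this position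
  set gw := D.orb x f v₀ kw with hgw
  set gu := D.orb x f u ku with hgu
  have hfw : D.IsFlag x f gw := D.isFlag_orb h.flag kw
  have hfu : D.IsFlag x f gu := D.isFlag_orb h'.flag ku
  have hfe : D.IsFlag x f (D.eSt f gw) := D.isFlag_eSt hfw
  have htr := hab gw.1 hfw.2.1 f gw.2 (D.eSt f gw).2 gu.2
    ⟨hfw.2.2, hfw.1⟩ ⟨hfe.2.2, hfe.1⟩ ⟨hfu.2.2, hpos ▸ hfu.1⟩
  -- u = orb_u (ku + j₀) for a multiple completing a period of u's orbit
  have hret : D.orb x f u (ku + (T' * (ku + 1) - ku)) = u := by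
    rw [show ku + (T' * (ku + 1) - ku) = 0 + T' * (ku + 1) by
      have : ku + 1 ≤ T' * (ku + 1) := Nat.le_mul_of_pos_left _ h'.posT
      omega]
    exact D.orb_add_mul_T h' 0 (ku + 1)
  set j₀ := T' * (ku + 1) - ku with hj₀
  have e1 : D.orb x f u (ku + j₀) = (D.gSt x f)^[j₀] gu := by
    rw [hgu]
    show (D.gSt x f)^[ku + j₀] u = (D.gSt x f)^[j₀] ((D.gSt x f)^[ku] u)
    rw [← Function.iterate_add_apply]
    congr 1
    omega
  rcases htr with h1 | h1 | h1
  · exact absurd h1.symm (D.eSt_ne hfw)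
  · -- gu = gw
    have hgug : gu = gw := Prod.ext hpos h1.symm
    have e2 : (D.gSt x f)^[j₀] gw = D.orb x f v₀ (kw + j₀) := by
      rw [hgw]
      show (D.gSt x f)^[j₀] ((D.gSt x f)^[kw] v₀) = (D.gSt x f)^[kw + j₀] v₀
      rw [← Function.iterate_add_apply]
      congr 1
      omega
    have e3 : u = D.orb x f v₀ (kw + j₀) := by
      rw [← hret, e1, hgug, e2]
    refine ⟨(kw + j₀) % T, Nat.mod_lt _ h.posT, Or.inl ?_⟩
    rw [e3, D.orb_mod h]
  · -- gu = eSt gw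
    have hgug : gu = D.eSt f gw := by
      refine Prod.ext ?_ h1.symm
      rw [hpos]; rfl
    have hu2 : u = (D.gSt x f)^[j₀] (D.eSt f gw) := by
      rw [← hret, e1, hgug]
    rw [D.g_iter_eSt j₀ gw hfw, hgw, D.gIn_iter_orb h] at hu2
    refine ⟨(kw + (T - 1) * j₀) % T, Nat.mod_lt _ h.posT, Or.inr ?_⟩
    rw [hu2]
    congr 1
    exact (D.orb_mod h _)

end locate

end DFC

namespace DFC

variable {α : Type*} [Fintype α] (D : DFC α)

open Classical in
/-- The unique source of a 1-dimensional face. -/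
noncomputable def srcF (w : α) : α := if h : ∃ y, D.precN y w then h.choose else w

lemma srcF_spec {w : α} (h : 1 ≤ D.dim w) : D.precN (D.srcF w) w := by
  have hex : ∃ y, D.precN y w := D.src_exists w h
  rw [srcF, dif_pos hex]
  exact hex.choose_spec

lemma src_uniq {w y : α} (hdim : D.dim w = 1) (hy : D.precN y w) : y = D.srcF w := by
  obtain ⟨u, hu, huniq⟩ := D.src_singleton w hdim
  rw [huniq y hy, huniq (D.srcF w) (D.srcF_spec (by omega))]

/-- The upstream walk map for 1-dimensional faces of a 2-dimensional cell. -/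
noncomputable def upF (x : α) : α → α := fun w => D.mateF x (D.srcF w) w

noncomputable def upW (x d : α) (k : ℕ) : α := (D.upF x)^[k] d

/-- The downstream walk map. -/
noncomputable def dnF (x : α) : α → α := fun w => D.mateF x (D.tgt w) w

noncomputable def dnW (x d : α) (k : ℕ) : α := (D.dnF x)^[k] d

lemma upW_succ (x d : α) (k : ℕ) : D.upW x d (k + 1) = D.upF x (D.upW x d k) :=
  Function.iterate_succ_apply' _ _ _

lemma dnW_succ (x d : α) (k : ℕ) : D.dnW x d (k + 1) = D.dnF x (D.dnW x d k) :=
  Function.iterate_succ_apply' _ _ _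

lemma up_step {x : α} (hx2 : D.dim x = 2) {w : α} (hw : D.precN w x) :
    D.mate x (D.srcF w) w (D.upF x w) ∧
    ((D.precN (D.upF x w) x ∧ D.precP (D.srcF w) (D.upF x w)) ∨
      (D.precP (D.upF x w) x ∧ D.precN (D.srcF w) (D.upF x w))) := by
  have hdw : D.dim w = 1 := by have := D.dim_precN hw; omega
  have hs := D.srcF_spec (w := w) (by omega)
  have hm : D.mate x (D.srcF w) w (D.upF x w) :=
    D.mateF_spec (D.mate_exists (b := false) (a := false) hs hw)
  refine ⟨hm, ?_⟩
  obtain ⟨hne, a, b, a', b', k1, k2, k3, k4, k5⟩ := hm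
  have ea : a = false := D.sp_sign k2 (show D.sp false w x from hw)
  have eb : b = false := D.sp_sign k1 (show D.sp false _ w from hs)
  subst ea; subst eb
  cases a' <;> cases b'
  · simp at k5
  · exact Or.inl ⟨k4, k3⟩
  · exact Or.inr ⟨k4, k3⟩
  · simp at k5

lemma dn_step {x : α} (hx2 : D.dim x = 2) {w : α} (hw : D.precN w x) :
    D.mate x (D.tgt w) w (D.dnF x w) ∧
    ((D.precN (D.dnF x w) x ∧ D.precN (D.tgt w) (D.dnF x w)) ∨
      (D.precP (D.dnF x w) x ∧ D.precP (D.tgt w) (D.dnF x w))) := by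
  have hdw : D.dim w = 1 := by have := D.dim_precN hw; omega
  have hs := D.tgt_precP w (by omega)
  have hm : D.mate x (D.tgt w) w (D.dnF x w) :=
    D.mateF_spec (D.mate_exists (b := true) (a := false) hs hw)
  refine ⟨hm, ?_⟩
  obtain ⟨hne, a, b, a', b', k1, k2, k3, k4, k5⟩ := hm
  have ea : a = false := D.sp_sign k2 (show D.sp false w x from hw)
  have eb : b = true := D.sp_sign k1 (show D.sp true _ w from hs)
  subst ea; subst eb
  cases a' <;> cases b'
  · exact Or.inl ⟨k4, k3⟩
  · simp at k5
  · simp at k5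
  · exact Or.inr ⟨k4, k3⟩

/-- On a valid prefix the upstream step is of the internal kind. -/
lemma up_left {x : α} (hx2 : D.dim x = 2) {w : α} (hw : D.precN w x)
    (hw' : D.precN (D.upF x w) x) :
    D.precP (D.srcF w) (D.upF x w) := by
  rcases (D.up_step hx2 hw).2 with ⟨h1, h2⟩ | ⟨h1, h2⟩
  · exact h2
  · exact absurd ⟨hw', h1⟩ (D.not_both _ _)

lemma dn_left {x : α} (hx2 : D.dim x = 2) {w : α} (hw : D.precN w x)
    (hw' : D.precN (D.dnF x w) x) :
    D.precN (D.tgt w) (D.dnF x w) := by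
  rcases (D.dn_step hx2 hw).2 with ⟨h1, h2⟩ | ⟨h1, h2⟩
  · exact h2
  · exact absurd ⟨hw', h1⟩ (D.not_both _ _)

lemma up_no_repeat {x d : α} (hx2 : D.dim x = 2) {j k : ℕ} (hjk : j < k)
    (hval : ∀ i, i ≤ k → D.precN (D.upW x d i) x) (heq : D.upW x d j = D.upW x d k) :
    False := by
  have hstep : ∀ i, i < k → D.tgt (D.upW x d (i + 1)) = D.srcF (D.upW x d i) := by
    intro i hi
    rw [D.upW_succ]
    exact (D.precP_unique (D.up_left hx2 (hval i (by omega))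
      (by rw [← D.upW_succ]; exact hval (i + 1) (by omega)))).symm
  refine D.no_cycle x (k - j) (by omega)
    (fun i => if i ≤ k - j then D.upW x d (j + i - 1) else D.upW x d j) ?_ ?_ ?_
  · intro i hi1 hip
    simp only [if_pos hip]
    exact hval _ (by omega)
  · have h1 : ¬ (k - j + 1 ≤ k - j) := by omega
    simp only [if_neg h1, if_pos (show 1 ≤ k - j by omega)]
    rw [show j + 1 - 1 = j by omega]
  · intro i hi1 hip
    by_cases hilt : i < k - j
    · simp only [if_pos (show i + 1 ≤ k - j by omega), if_pos hip]
      rw [show j + (i + 1) - 1 = (j + i - 1) + 1 by omega, hstep _ (by omega)]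
      exact D.srcF_spec (by have := D.dim_precN (hval (j + i - 1) (by omega)); omega)
    · have hieq : i = k - j := by omega
      subst hieq
      have h2 : ¬ (k - j + 1 ≤ k - j) := by omega
      simp only [if_neg h2, if_pos hip]
      have h3 := hstep (k - 1) (by omega)
      rw [show k - 1 + 1 = k by omega] at h3
      rw [heq, h3, show j + (k - j) - 1 = k - 1 by omega]
      exact D.srcF_spec (by have := D.dim_precN (hval (k - 1) (by omega)); omega)

lemma dn_no_repeat {x d : α} (hx2 : D.dim x = 2) {j k : ℕ} (hjk : j < k)
    (hval : ∀ i, i ≤ k → D.precN (D.dnW x d i) x) (heq : D.dnW x d j = D.dnW x d k) :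
    False := by
  have hstep : ∀ i, i < k → D.precN (D.tgt (D.dnW x d i)) (D.dnW x d (i + 1)) := by
    intro i hi
    rw [D.dnW_succ]
    exact D.dn_left hx2 (hval i (by omega)) (by rw [← D.dnW_succ]; exact hval (i + 1) (by omega))
  refine D.no_cycle x (k - j) (by omega)
    (fun i => if i ≤ k - j then D.dnW x d (k - i) else D.dnW x d (k - 1)) ?_ ?_ ?_
  · intro i hi1 hip
    simp only [if_pos hip]
    exact hval _ (by omega)
  · have h1 : ¬ (k - j + 1 ≤ k - j) := by omega
    simp only [if_neg h1, if_pos (show 1 ≤ k - j by omega)]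
  · intro i hi1 hip
    by_cases hilt : i < k - j
    · simp only [if_pos (show i + 1 ≤ k - j by omega), if_pos hip]
      have := hstep (k - i - 1) (by omega)
      rw [show k - i - 1 + 1 = k - i by omega] at this
      rw [show k - (i + 1) = k - i - 1 by omega]
      exact this
    · have hieq : i = k - j := by omega
      subst hieq
      have h2 : ¬ (k - j + 1 ≤ k - j) := by omega
      simp only [if_neg h2, if_pos hip]
      have := hstep (k - 1) (by omega)
      rw [show k - 1 + 1 = k by omega, ← heq] at this
      rw [show k - (k - j) = j by omega]
      exact this

lemma up_stop {x d : α} (hx2 : D.dim x = 2) (hd : D.precN d x) :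
    ∃ a, 1 ≤ a ∧ (∀ i, i < a → D.precN (D.upW x d i) x) ∧ D.precP (D.upW x d a) x := by
  classical
  have hex : ∃ k, ¬ D.precN (D.upW x d k) x := by
    by_contra hcon
    push_neg at hcon
    set N := Fintype.card α with hN
    have hinj : Function.Injective (fun i : Fin (N + 1) => D.upW x d i) := by
      intro i j hij
      by_contra hne
      rcases Nat.lt_or_ge (i : ℕ) (j : ℕ) with h | h
      · exact D.up_no_repeat hx2 h (fun i _ => hcon i) hij
      · have h' : (j : ℕ) < (i : ℕ) := by
          rcases Nat.lt_or_ge (j : ℕ) (i : ℕ) with h2 | h2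
          · exact h2
          · exact absurd (Fin.ext (by omega)) hne
        exact D.up_no_repeat hx2 h' (fun i _ => hcon i) hij.symm
    have := Fintype.card_le_of_injective _ hinj
    simp [hN] at this
  set a := Nat.find hex with ha
  have hspec : ¬ D.precN (D.upW x d a) x := Nat.find_spec hex
  have hval : ∀ i, i < a → D.precN (D.upW x d i) x := fun i hi =>
    not_not.mp (Nat.find_min hex hi)
  have ha1 : 1 ≤ a := by
    rcases Nat.eq_zero_or_pos a with h0 | h1
    · exfalso; rw [h0] at hspec; exact hspec hd
    · exact h1
  refine ⟨a, ha1, hval, ?_⟩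
  rcases (D.up_step hx2 (hval (a - 1) (by omega))).2 with ⟨h1, h2⟩ | ⟨h1, h2⟩
  · exfalso
    rw [← D.upW_succ, show a - 1 + 1 = a by omega] at h1
    exact hspec h1
  · rw [← D.upW_succ, show a - 1 + 1 = a by omega] at h1
    exact h1

lemma dn_stop {x d : α} (hx2 : D.dim x = 2) (hd : D.precN d x) :
    ∃ a, 1 ≤ a ∧ (∀ i, i < a → D.precN (D.dnW x d i) x) ∧ D.precP (D.dnW x d a) x := by
  classical
  have hex : ∃ k, ¬ D.precN (D.dnW x d k) x := by
    by_contra hcon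
    push_neg at hcon
    set N := Fintype.card α with hN
    have hinj : Function.Injective (fun i : Fin (N + 1) => D.dnW x d i) := by
      intro i j hij
      by_contra hne
      rcases Nat.lt_or_ge (i : ℕ) (j : ℕ) with h | h
      · exact D.dn_no_repeat hx2 h (fun i _ => hcon i) hij
      · have h' : (j : ℕ) < (i : ℕ) := by
          rcases Nat.lt_or_ge (j : ℕ) (i : ℕ) with h2 | h2
          · exact h2
          · exact absurd (Fin.ext (by omega)) hne
        exact D.dn_no_repeat hx2 h' (fun i _ => hcon i) hij.symm
    have := Fintype.card_le_of_injective _ hinj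
    simp [hN] at this
  set a := Nat.find hex with ha
  have hspec : ¬ D.precN (D.dnW x d a) x := Nat.find_spec hex
  have hval : ∀ i, i < a → D.precN (D.dnW x d i) x := fun i hi =>
    not_not.mp (Nat.find_min hex hi)
  have ha1 : 1 ≤ a := by
    rcases Nat.eq_zero_or_pos a with h0 | h1
    · exfalso; rw [h0] at hspec; exact hspec hd
    · exact h1
  refine ⟨a, ha1, hval, ?_⟩
  rcases (D.dn_step hx2 (hval (a - 1) (by omega))).2 with ⟨h1, h2⟩ | ⟨h1, h2⟩
  · exfalso
    rw [← D.dnW_succ, show a - 1 + 1 = a by omega] at h1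
    exact hspec h1
  · rw [← D.dnW_succ, show a - 1 + 1 = a by omega] at h1
    exact h1

end DFC

namespace DFC

variable {α : Type*} [Fintype α] (D : DFC α)

lemma up_back {x : α} (hx2 : D.dim x = 2) {u u' : α} (hu : D.precN u x) (hu' : D.precN u' x)
    (heq : D.upF x u = D.upF x u') (hv : D.precN (D.upF x u) x) : u = u' := by
  have h1 := D.up_left hx2 hu hv
  have h2 := D.up_left hx2 hu' (heq ▸ hv)
  have e1 : D.srcF u = D.tgt (D.upF x u) := D.precP_unique h1
  have e2 : D.srcF u' = D.tgt (D.upF x u') := D.precP_unique h2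
  have es : D.srcF u = D.srcF u' := by rw [e1, e2, heq]
  have m1 := D.mate_symm (D.up_step hx2 hu).1
  have m2 := D.mate_symm (D.up_step hx2 hu').1
  rw [es, heq] at m1
  exact D.mate_unique m1 m2

lemma dn_back {x : α} (hx2 : D.dim x = 2) {u u' : α} (hu : D.precN u x) (hu' : D.precN u' x)
    (heq : D.dnF x u = D.dnF x u') (hv : D.precN (D.dnF x u) x) : u = u' := by
  have h1 := D.dn_left hx2 hu hv
  have h2 := D.dn_left hx2 hu' (heq ▸ hv)
  have hd1 : D.dim (D.dnF x u) = 1 := by have := D.dim_precN hv; omega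
  have e1 : D.tgt u = D.srcF (D.dnF x u) := D.src_uniq hd1 h1
  have e2 : D.tgt u' = D.srcF (D.dnF x u') := D.src_uniq (heq ▸ hd1) h2
  have es : D.tgt u = D.tgt u' := by rw [e1, e2, heq]
  have m1 := D.mate_symm (D.dn_step hx2 hu).1
  have m2 := D.mate_symm (D.dn_step hx2 hu').1
  rw [es, heq] at m1
  exact D.mate_unique m1 m2

lemma up_cycle_end {x e d : α} (hx2 : D.dim x = 2) (hd : D.precN d x) (he : D.precN e d)
    {m : ℕ} (hm : 1 ≤ m) (hval : ∀ i, i ≤ m → D.precN (D.upW x d i) x)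
    (hem : D.precN e (D.upW x d m)) : False := by
  have hstep : ∀ i, i < m → D.tgt (D.upW x d (i + 1)) = D.srcF (D.upW x d i) := by
    intro i hi
    rw [D.upW_succ]
    exact (D.precP_unique (D.up_left hx2 (hval i (by omega))
      (by rw [← D.upW_succ]; exact hval (i + 1) (by omega)))).symm
  refine D.no_cycle x m hm (fun i => if i ≤ m then D.upW x d i else D.upW x d 1) ?_ ?_ ?_
  · intro i hi1 hip; simp only [if_pos hip]; exact hval _ (by omega)
  · have h1 : ¬ (m + 1 ≤ m) := by omega
    simp only [if_neg h1, if_pos hm]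
  · intro i hi1 hip
    by_cases hilt : i < m
    · simp only [if_pos (show i + 1 ≤ m by omega), if_pos hip]
      rw [hstep i (by omega)]
      exact D.srcF_spec (by have := D.dim_precN (hval i (by omega)); omega)
    · have hieq : i = m := by omega
      rw [hieq]
      have h2 : ¬ (m + 1 ≤ m) := by omega
      simp only [if_neg h2, if_pos (le_refl m)]
      have h3 := hstep 0 (by omega)
      simp only [Nat.zero_add] at h3
      rw [h3]
      have e2 : e = D.srcF d := D.src_uniq (by have := D.dim_precN hd; omega) he
      rw [show D.upW x d 0 = d from rfl, ← e2]
      exact hem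

lemma dn_cycle_end {x e d : α} (hx2 : D.dim x = 2) (hd : D.precN d x) (he : D.precP e d)
    {m : ℕ} (hm : 1 ≤ m) (hval : ∀ i, i ≤ m → D.precN (D.dnW x d i) x)
    (hem : D.precP e (D.dnW x d m)) : False := by
  have hstep : ∀ i, i < m → D.precN (D.tgt (D.dnW x d i)) (D.dnW x d (i + 1)) := by
    intro i hi
    rw [D.dnW_succ]
    exact D.dn_left hx2 (hval i (by omega)) (by rw [← D.dnW_succ]; exact hval (i + 1) (by omega))
  refine D.no_cycle x m hm (fun i => if i ≤ m then D.dnW x d (m + 1 - i) else D.dnW x d m) ?_ ?_ ?_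
  · intro i hi1 hip; simp only [if_pos hip]; exact hval _ (by omega)
  · have h1 : ¬ (m + 1 ≤ m) := by omega
    simp only [if_neg h1, if_pos hm]
    rw [show m + 1 - 1 = m by omega]
  · intro i hi1 hip
    by_cases hilt : i < m
    · simp only [if_pos (show i + 1 ≤ m by omega), if_pos hip]
      rw [show m + 1 - (i + 1) = m - i by omega]
      have h3 := hstep (m - i) (by omega)
      rw [show m - i + 1 = m + 1 - i by omega] at h3
      exact h3
    · have hieq : i = m := by omega
      rw [hieq]
      have h2 : ¬ (m + 1 ≤ m) := by omega
      simp only [if_neg h2, if_pos (le_refl m)]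
      rw [show m + 1 - m = 1 by omega]
      have e1 : e = D.tgt (D.dnW x d m) := D.precP_unique hem
      have h3 := hstep 0 (by omega)
      simp only [Nat.zero_add] at h3
      have e2 : e = D.tgt d := D.precP_unique he
      rw [← e1, e2]
      exact h3

lemma up_merge {x e d d' : α} (hx2 : D.dim x = 2) (hd : D.precN d x) (hd' : D.precN d' x)
    (hne : d ≠ d') (he : D.precN e d) (he' : D.precN e d')
    {a b : ℕ} (ha1 : 1 ≤ a) (hb1 : 1 ≤ b)
    (hav : ∀ i, i < a → D.precN (D.upW x d i) x) (hbv : ∀ i, i < b → D.precN (D.upW x d' i) x)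
    (haγ : D.precP (D.upW x d a) x) (hbγ : D.precP (D.upW x d' b) x)
    (hab : a ≤ b) : False := by
  have hWa : D.upW x d a = D.tgt x := D.precP_unique haγ
  have hWb : D.upW x d' b = D.tgt x := D.precP_unique hbγ
  have hdimt : D.dim (D.tgt x) = 1 := by
    have := D.dim_precP (D.tgt_precP x (by omega))
    omega
  have hma := (D.up_step hx2 (hav (a - 1) (by omega))).1
  have hmb := (D.up_step hx2 (hbv (b - 1) (by omega))).1
  rcases (D.up_step hx2 (hav (a - 1) (by omega))).2 with ⟨h1, _⟩ | ⟨_, h2a⟩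
  · exfalso
    rw [← D.upW_succ, show a - 1 + 1 = a by omega] at h1
    exact D.not_both _ _ ⟨h1, haγ⟩
  rcases (D.up_step hx2 (hbv (b - 1) (by omega))).2 with ⟨h1, _⟩ | ⟨_, h2b⟩
  · exfalso
    rw [← D.upW_succ, show b - 1 + 1 = b by omega] at h1
    exact D.not_both _ _ ⟨h1, hbγ⟩
  rw [show D.upF x (D.upW x d (a - 1)) = D.upW x d a by
    rw [← D.upW_succ, show a - 1 + 1 = a by omega], hWa] at h2a hma
  rw [show D.upF x (D.upW x d' (b - 1)) = D.upW x d' b by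
    rw [← D.upW_succ, show b - 1 + 1 = b by omega], hWb] at h2b hmb
  have hsa : D.srcF (D.upW x d (a - 1)) = D.srcF (D.tgt x) := D.src_uniq hdimt h2a
  have hsb : D.srcF (D.upW x d' (b - 1)) = D.srcF (D.tgt x) := D.src_uniq hdimt h2b
  have hmerge : D.upW x d (a - 1) = D.upW x d' (b - 1) := by
    have m1 := D.mate_symm hma
    have m2 := D.mate_symm hmb
    rw [hsa] at m1
    rw [hsb] at m2
    exact D.mate_unique m1 m2
  have hback : ∀ i, i ≤ a - 1 → D.upW x d (a - 1 - i) = D.upW x d' (b - 1 - i) := by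
    intro i
    induction i with
    | zero => intro _; simpa using hmerge
    | succ n ih =>
      intro hn
      have hprev := ih (by omega)
      have e1 : D.upF x (D.upW x d (a - 1 - n - 1)) = D.upW x d (a - 1 - n) := by
        rw [← D.upW_succ, show a - 1 - n - 1 + 1 = a - 1 - n by omega]
      have e2 : D.upF x (D.upW x d' (b - 1 - n - 1)) = D.upW x d' (b - 1 - n) := by
        rw [← D.upW_succ, show b - 1 - n - 1 + 1 = b - 1 - n by omega]
      have hres := D.up_back hx2 (hav (a - 1 - n - 1) (by omega)) (hbv (b - 1 - n - 1) (by omega))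
        (by rw [e1, e2, hprev]) (by rw [e1]; exact hav (a - 1 - n) (by omega))
      rw [show a - 1 - (n + 1) = a - 1 - n - 1 by omega,
        show b - 1 - (n + 1) = b - 1 - n - 1 by omega]
      exact hres
  have hfin := hback (a - 1) (by omega)
  rw [show a - 1 - (a - 1) = 0 by omega] at hfin
  have hda : d = D.upW x d' (b - 1 - (a - 1)) := hfin
  by_cases hba : a = b
  · subst hba
    rw [show a - 1 - (a - 1) = 0 by omega] at hda
    exact hne hda
  · refine D.up_cycle_end hx2 hd' he' (m := b - a) (by omega) (fun i hi => hbv i (by omega)) ?_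
    rw [show b - a = b - 1 - (a - 1) by omega, ← hda]
    exact he

lemma dn_merge {x e d d' : α} (hx2 : D.dim x = 2) (hd : D.precN d x) (hd' : D.precN d' x)
    (hne : d ≠ d') (he : D.precP e d) (he' : D.precP e d')
    {a b : ℕ} (ha1 : 1 ≤ a) (hb1 : 1 ≤ b)
    (hav : ∀ i, i < a → D.precN (D.dnW x d i) x) (hbv : ∀ i, i < b → D.precN (D.dnW x d' i) x)
    (haγ : D.precP (D.dnW x d a) x) (hbγ : D.precP (D.dnW x d' b) x)
    (hab : a ≤ b) : False := by
  have hWa : D.dnW x d a = D.tgt x := D.precP_unique haγ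
  have hWb : D.dnW x d' b = D.tgt x := D.precP_unique hbγ
  have hma := (D.dn_step hx2 (hav (a - 1) (by omega))).1
  have hmb := (D.dn_step hx2 (hbv (b - 1) (by omega))).1
  rcases (D.dn_step hx2 (hav (a - 1) (by omega))).2 with ⟨h1, _⟩ | ⟨_, h2a⟩
  · exfalso
    rw [← D.dnW_succ, show a - 1 + 1 = a by omega] at h1
    exact D.not_both _ _ ⟨h1, haγ⟩
  rcases (D.dn_step hx2 (hbv (b - 1) (by omega))).2 with ⟨h1, _⟩ | ⟨_, h2b⟩
  · exfalso
    rw [← D.dnW_succ, show b - 1 + 1 = b by omega] at h1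
    exact D.not_both _ _ ⟨h1, hbγ⟩
  rw [show D.dnF x (D.dnW x d (a - 1)) = D.dnW x d a by
    rw [← D.dnW_succ, show a - 1 + 1 = a by omega], hWa] at h2a hma
  rw [show D.dnF x (D.dnW x d' (b - 1)) = D.dnW x d' b by
    rw [← D.dnW_succ, show b - 1 + 1 = b by omega], hWb] at h2b hmb
  have hsa : D.tgt (D.dnW x d (a - 1)) = D.tgt (D.tgt x) := D.precP_unique h2a
  have hsb : D.tgt (D.dnW x d' (b - 1)) = D.tgt (D.tgt x) := D.precP_unique h2b
  have hmerge : D.dnW x d (a - 1) = D.dnW x d' (b - 1) := by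
    have m1 := D.mate_symm hma
    have m2 := D.mate_symm hmb
    rw [hsa] at m1
    rw [hsb] at m2
    exact D.mate_unique m1 m2
  have hback : ∀ i, i ≤ a - 1 → D.dnW x d (a - 1 - i) = D.dnW x d' (b - 1 - i) := by
    intro i
    induction i with
    | zero => intro _; simpa using hmerge
    | succ n ih =>
      intro hn
      have hprev := ih (by omega)
      have e1 : D.dnF x (D.dnW x d (a - 1 - n - 1)) = D.dnW x d (a - 1 - n) := by
        rw [← D.dnW_succ, show a - 1 - n - 1 + 1 = a - 1 - n by omega]
      have e2 : D.dnF x (D.dnW x d' (b - 1 - n - 1)) = D.dnW x d' (b - 1 - n) := by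
        rw [← D.dnW_succ, show b - 1 - n - 1 + 1 = b - 1 - n by omega]
      have hres := D.dn_back hx2 (hav (a - 1 - n - 1) (by omega)) (hbv (b - 1 - n - 1) (by omega))
        (by rw [e1, e2, hprev]) (by rw [e1]; exact hav (a - 1 - n) (by omega))
      rw [show a - 1 - (n + 1) = a - 1 - n - 1 by omega,
        show b - 1 - (n + 1) = b - 1 - n - 1 by omega]
      exact hres
  have hfin := hback (a - 1) (by omega)
  rw [show a - 1 - (a - 1) = 0 by omega] at hfin
  have hda : d = D.dnW x d' (b - 1 - (a - 1)) := hfin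
  by_cases hba : a = b
  · subst hba
    rw [show a - 1 - (a - 1) = 0 by omega] at hda
    exact hne hda
  · refine D.dn_cycle_end hx2 hd' he' (m := b - a) (by omega) (fun i hi => hbv i (by omega)) ?_
    rw [show b - a = b - 1 - (a - 1) by omega, ← hda]
    exact he

lemma no_two_src {x e d d' : α} (hx2 : D.dim x = 2) (hd : D.precN d x) (hd' : D.precN d' x)
    (hne : d ≠ d') (he : D.precN e d) (he' : D.precN e d') : False := by
  obtain ⟨a, ha1, hav, haγ⟩ := D.up_stop hx2 hd
  obtain ⟨b, hb1, hbv, hbγ⟩ := D.up_stop hx2 hd'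
  rcases le_total a b with hab | hab
  · exact D.up_merge hx2 hd hd' hne he he' ha1 hb1 hav hbv haγ hbγ hab
  · exact D.up_merge hx2 hd' hd hne.symm he' he hb1 ha1 hbv hav hbγ haγ hab

lemma no_two_tgt {x e d d' : α} (hx2 : D.dim x = 2) (hd : D.precN d x) (hd' : D.precN d' x)
    (hne : d ≠ d') (he : D.precP e d) (he' : D.precP e d') : False := by
  obtain ⟨a, ha1, hav, haγ⟩ := D.dn_stop hx2 hd
  obtain ⟨b, hb1, hbv, hbγ⟩ := D.dn_stop hx2 hd'
  rcases le_total a b with hab | hab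
  · exact D.dn_merge hx2 hd hd' hne he he' ha1 hb1 hav hbv haγ hbγ hab
  · exact D.dn_merge hx2 hd' hd hne.symm he' he hb1 ha1 hbv hav hbγ haγ hab

lemma mixed_T {x e dd g : α} (hx2 : D.dim x = 2) (hdd : D.precN dd x) (hg : D.precP g x)
    (he1 : D.precN e dd) (he2 : D.precP e g) : False := by
  have hmg : D.mate x e g (D.mateF x e g) :=
    D.mateF_spec (D.mate_exists (b := true) (a := true)
      (show D.sp true e g from he2) (show D.sp true g x from hg))
  have hmd : D.mate x e dd (D.mateF x e dd) :=
    D.mateF_spec (D.mate_exists (b := false) (a := false)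
      (show D.sp false e dd from he1) (show D.sp false dd x from hdd))
  have hu : D.precN (D.mateF x e g) x ∧ D.precP e (D.mateF x e g) := by
    obtain ⟨hneg, a, b, a', b', k1, k2, k3, k4, k5⟩ := hmg
    have ea : a = true := D.sp_sign k2 (show D.sp true g x from hg)
    have eb : b = true := D.sp_sign k1 (show D.sp true e g from he2)
    subst ea; subst eb
    cases a' <;> cases b'
    · simp at k5
    · exact ⟨k4, k3⟩
    · exact absurd ((D.precP_unique k4).trans (D.precP_unique hg).symm) hneg
    · simp at k5
  have hq : D.precN (D.mateF x e dd) x ∧ D.precP e (D.mateF x e dd) := by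
    obtain ⟨hneg, a, b, a', b', k1, k2, k3, k4, k5⟩ := hmd
    have ea : a = false := D.sp_sign k2 (show D.sp false dd x from hdd)
    have eb : b = false := D.sp_sign k1 (show D.sp false e dd from he1)
    subst ea; subst eb
    cases a' <;> cases b'
    · simp at k5
    · exact ⟨k4, k3⟩
    · exfalso
      have : D.mateF x e dd = g := (D.precP_unique k4).trans (D.precP_unique hg).symm
      rw [this] at k3
      exact D.not_both _ _ ⟨k3, he2⟩
    · simp at k5
  by_cases hqu : D.mateF x e dd = D.mateF x e g
  · have m1 := D.mate_symm hmd
    have m2 := D.mate_symm hmg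
    rw [hqu] at m1
    have : dd = g := D.mate_unique m1 m2
    rw [this] at hdd
    exact D.not_both _ _ ⟨hdd, hg⟩
  · exact D.no_two_tgt hx2 hq.1 hu.1 hqu hq.2 hu.2

lemma mixed_F {x e q g : α} (hx2 : D.dim x = 2) (hq : D.precN q x) (hg : D.precP g x)
    (he1 : D.precP e q) (he2 : D.precN e g) : False := by
  have hmg : D.mate x e g (D.mateF x e g) :=
    D.mateF_spec (D.mate_exists (b := false) (a := true)
      (show D.sp false e g from he2) (show D.sp true g x from hg))
  have hmq : D.mate x e q (D.mateF x e q) :=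
    D.mateF_spec (D.mate_exists (b := true) (a := false)
      (show D.sp true e q from he1) (show D.sp false q x from hq))
  have hu : D.precN (D.mateF x e g) x ∧ D.precN e (D.mateF x e g) := by
    obtain ⟨hneg, a, b, a', b', k1, k2, k3, k4, k5⟩ := hmg
    have ea : a = true := D.sp_sign k2 (show D.sp true g x from hg)
    have eb : b = false := D.sp_sign k1 (show D.sp false e g from he2)
    subst ea; subst eb
    cases a' <;> cases b'
    · exact ⟨k4, k3⟩
    · simp at k5
    · simp at k5
    · exact absurd ((D.precP_unique k4).trans (D.precP_unique hg).symm) hneg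
  have hw : D.precN (D.mateF x e q) x ∧ D.precN e (D.mateF x e q) := by
    obtain ⟨hneg, a, b, a', b', k1, k2, k3, k4, k5⟩ := hmq
    have ea : a = false := D.sp_sign k2 (show D.sp false q x from hq)
    have eb : b = true := D.sp_sign k1 (show D.sp true e q from he1)
    subst ea; subst eb
    cases a' <;> cases b'
    · exact ⟨k4, k3⟩
    · simp at k5
    · simp at k5
    · exfalso
      have : D.mateF x e q = g := (D.precP_unique k4).trans (D.precP_unique hg).symm
      rw [this] at k3
      exact D.not_both _ _ ⟨he2, k3⟩
  by_cases hqu : D.mateF x e q = D.mateF x e g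
  · have m1 := D.mate_symm hmq
    have m2 := D.mate_symm hmg
    rw [hqu] at m1
    have : q = g := D.mate_unique m1 m2
    rw [this] at hq
    exact D.not_both _ _ ⟨hq, hg⟩
  · exact D.no_two_src hx2 hw.1 hu.1 hqu hw.2 hu.2

lemma pair_classT {x e l l' : α} (hx2 : D.dim x = 2) (hne : l ≠ l')
    (hl : (D.precN e l ∧ D.precN l x) ∨ (D.precP e l ∧ D.precP l x))
    (hl' : (D.precN e l' ∧ D.precN l' x) ∨ (D.precP e l' ∧ D.precP l' x)) : False := by
  rcases hl with ⟨h1, h2⟩ | ⟨h1, h2⟩ <;> rcases hl' with ⟨h1', h2'⟩ | ⟨h1', h2'⟩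
  · exact D.no_two_src hx2 h2 h2' hne h1 h1'
  · exact D.mixed_T hx2 h2 h2' h1 h1'
  · exact D.mixed_T hx2 h2' h2 h1' h1
  · exact hne ((D.precP_unique h2).trans (D.precP_unique h2').symm)

lemma pair_classF {x e l l' : α} (hx2 : D.dim x = 2) (hne : l ≠ l')
    (hl : (D.precP e l ∧ D.precN l x) ∨ (D.precN e l ∧ D.precP l x))
    (hl' : (D.precP e l' ∧ D.precN l' x) ∨ (D.precN e l' ∧ D.precP l' x)) : False := by
  rcases hl with ⟨h1, h2⟩ | ⟨h1, h2⟩ <;> rcases hl' with ⟨h1', h2'⟩ | ⟨h1', h2'⟩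
  · exact D.no_two_tgt hx2 h2 h2' hne h1 h1'
  · exact D.mixed_F hx2 h2 h2' h1 h1'
  · exact D.mixed_F hx2 h2' h2 h1' h1
  · exact hne ((D.precP_unique h2).trans (D.precP_unique h2').symm)

lemma Ab_base {x : α} (hx2 : D.dim x = 2) : D.Ab x := by
  intro e l₁ l₂ l₃ h1 h2 h3
  by_contra hcon
  push_neg at hcon
  obtain ⟨n12, n13, n23⟩ := hcon
  have hcl : ∀ l : α, ((∃ s, D.sp s e l) ∧ ∃ s, D.sp s l x) →
      ((D.precN e l ∧ D.precN l x) ∨ (D.precP e l ∧ D.precP l x)) ∨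
      ((D.precP e l ∧ D.precN l x) ∨ (D.precN e l ∧ D.precP l x)) := by
    rintro l ⟨⟨s1, hs1⟩, s2, hs2⟩
    cases s1 <;> cases s2
    · exact Or.inl (Or.inl ⟨hs1, hs2⟩)
    · exact Or.inr (Or.inr ⟨hs1, hs2⟩)
    · exact Or.inr (Or.inl ⟨hs1, hs2⟩)
    · exact Or.inl (Or.inr ⟨hs1, hs2⟩)
  rcases hcl l₁ h1 with c1 | c1 <;> rcases hcl l₂ h2 with c2 | c2 <;>
    rcases hcl l₃ h3 with c3 | c3
  · exact D.pair_classT hx2 n12 c1 c2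
  · exact D.pair_classT hx2 n12 c1 c2
  · exact D.pair_classT hx2 n13 c1 c3
  · exact D.pair_classF hx2 n23 c2 c3
  · exact D.pair_classT hx2 n23 c2 c3
  · exact D.pair_classF hx2 n13 c1 c3
  · exact D.pair_classF hx2 n12 c1 c2
  · exact D.pair_classF hx2 n12 c1 c2

end DFC

namespace DFC

variable {α : Type*} [Fintype α] (D : DFC α)

lemma Ab_step {x : α} (hdim : 3 ≤ D.dim x)
    (IH : ∀ y, (∃ s, D.sp s y x) → D.Ab y) : D.Ab x := by
  intro e l₁ l₂ l₃ h1 h2 h3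
  by_contra hcon
  push_neg at hcon
  obtain ⟨n12, n13, n23⟩ := hcon
  obtain ⟨⟨se1, hse1⟩, sl1, hsl1⟩ := h1
  obtain ⟨⟨se2, hse2⟩, sl2, hsl2⟩ := h2
  obtain ⟨⟨se3, hse3⟩, sl3, hsl3⟩ := h3
  have hde : 1 ≤ D.dim e := by
    have d1 := D.sp_dim hse1
    have d2 := D.sp_dim hsl1
    omega
  set f := D.tgt e with hf
  have hfe : D.sp true f e := D.tgt_precP e hde
  have hfl1 : D.IsFlag x f (l₁, e) := ⟨⟨se1, hse1⟩, ⟨sl1, hsl1⟩, ⟨true, hfe⟩⟩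
  have hfl2 : D.IsFlag x f (l₂, e) := ⟨⟨se2, hse2⟩, ⟨sl2, hsl2⟩, ⟨true, hfe⟩⟩
  have hfl3 : D.IsFlag x f (l₃, e) := ⟨⟨se3, hse3⟩, ⟨sl3, hsl3⟩, ⟨true, hfe⟩⟩
  obtain ⟨T0, h0⟩ := D.mk_orbData hfl1
  obtain ⟨k₀, hk₀T, hk₀⟩ := D.exists_gamma h0
  set v₀ := D.orb x f (l₁, e) (k₀ + 1) with hv₀
  have hOD : D.OrbData x f v₀ T0 := D.orbData_rebase h0 (k₀ + 1)
  have hab : ∀ C, (∃ s, D.sp s C x) → D.Ab C := fun C hC => IH C hC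
  have hT1 := h0.posT
  have hγ : D.precP ((D.orb x f v₀ (T0 - 1)).1) x := by
    rw [hv₀, D.orb_of_orb, show T0 - 1 + (k₀ + 1) = k₀ + T0 by omega, D.orb_add_T h0]
    exact hk₀
  -- for each of the three flags, find a step of the orbit labelled `e`
  have hfind : ∀ l : α, D.IsFlag x f (l, e) → ∃ s, s < T0 ∧
      (D.orb x f v₀ (s + 1)).2 = e ∧
      (l = (D.orb x f v₀ (s + 1)).1 ∨ l = (D.orb x f v₀ s).1) := by
    intro l hl
    obtain ⟨j, hj, hcase⟩ := D.locate hOD hab hl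
    rcases hcase with hc | hc
    · by_cases hj0 : j = 0
      · subst hj0
        have hc' : (l, e) = v₀ := hc
        refine ⟨T0 - 1, by omega, ?_, Or.inl ?_⟩
        · rw [show T0 - 1 + 1 = T0 by omega, hOD.per, ← hc']
        · rw [show T0 - 1 + 1 = T0 by omega, hOD.per, ← hc']
      · refine ⟨j - 1, by omega, ?_, Or.inl ?_⟩
        · rw [show j - 1 + 1 = j by omega, ← hc]
        · rw [show j - 1 + 1 = j by omega, ← hc]
    · refine ⟨j, hj, ?_, Or.inr ?_⟩
      · rw [D.orb_snd_succ, ← hc]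
      · rw [show (D.orb x f v₀ j).1 = (D.eSt f (D.orb x f v₀ j)).1 from rfl, ← hc]
  obtain ⟨s1, hs1T, hs1e, hs1l⟩ := hfind l₁ hfl1
  obtain ⟨s2, hs2T, hs2e, hs2l⟩ := hfind l₂ hfl2
  obtain ⟨s3, hs3T, hs3e, hs3l⟩ := hfind l₃ hfl3
  have key : ∀ i j : ℕ, i < T0 → j < T0 → (D.orb x f v₀ (i + 1)).2 = e →
      (D.orb x f v₀ (j + 1)).2 = e → i = j := by
    intro i j hi hj hie hje
    by_contra hne
    rcases Nat.lt_or_ge i j with hlt | hge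
    · exact D.dup_label hOD hab hγ hlt hj (by rw [hie, hje])
    · exact D.dup_label hOD hab hγ (show j < i by omega) hi (by rw [hie, hje])
  have e12 : s1 = s2 := key _ _ hs1T hs2T hs1e hs2e
  have e13 : s1 = s3 := key _ _ hs1T hs3T hs1e hs3e
  rw [← e12] at hs2l
  rw [← e13] at hs3l
  rcases hs1l with c1 | c1 <;> rcases hs2l with c2 | c2 <;> rcases hs3l with c3 | c3
  · exact n12 (c1.trans c2.symm)
  · exact n12 (c1.trans c2.symm)
  · exact n13 (c1.trans c3.symm)
  · exact n23 (c2.trans c3.symm)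
  · exact n23 (c2.trans c3.symm)
  · exact n13 (c1.trans c3.symm)
  · exact n12 (c1.trans c2.symm)
  · exact n12 (c1.trans c2.symm)

lemma Ab_all (x : α) : D.Ab x := by
  suffices h : ∀ n (y : α), D.dim y = n → D.Ab y from h (D.dim x) x rfl
  intro n
  induction n using Nat.strong_induction_on with
  | _ n IH =>
    intro y hy
    by_cases hc2 : D.dim y = 2
    · exact D.Ab_base hc2
    by_cases hc3 : 3 ≤ D.dim y
    · refine D.Ab_step hc3 (fun z hz => ?_)
      obtain ⟨s, hs⟩ := hz
      have hd := D.sp_dim hs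
      exact IH (D.dim z) (by omega) z rfl
    · intro e m₁ m₂ m₃ hm1 _ _
      obtain ⟨⟨t1, ht1⟩, t2, ht2⟩ := hm1
      have d1 := D.sp_dim ht1
      have d2 := D.sp_dim ht2
      exact absurd rfl (show ¬ (0 : ℕ) = 0 by omega)

end DFC

namespace DFC

variable {α : Type*} [Fintype α] (D : DFC α)

lemma emate_at {x f : α} {v₀ : α × α} (h : D.IsFlag x f v₀) (m : ℕ) :
    D.mate ((D.orb x f v₀ m).1) f ((D.orb x f v₀ m).2) ((D.orb x f v₀ (m + 1)).2) := by
  rw [D.orb_snd_succ]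
  exact D.eSt_mate (D.isFlag_orb h m)

lemma endgame {b e : α} {w₀ : α × α} {T : ℕ}
    (hOD : D.OrbData b e w₀ T) (hab : ∀ C, (∃ s, D.sp s C b) → D.Ab C)
    (hγ : D.precP ((D.orb b e w₀ (T - 1)).1) b)
    {a bb : ℕ} (haltb : a < bb) (hbbT : bb ≤ T - 2)
    {cL dL cR dR : α} {sL sR : Bool}
    (hcL : cL = (D.orb b e w₀ a).1) (hcR : cR = (D.orb b e w₀ bb).1)
    (hdL : dL = (D.orb b e w₀ (a + 1)).2 ∨ dL = (D.orb b e w₀ a).2)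
    (hdR : dR = (D.orb b e w₀ bb).2 ∨ dR = (D.orb b e w₀ (bb + 1)).2)
    (hsL : D.sp sL e dL) (hsR : D.sp sR e dR) :
    D.zigzag sL b e cL cR ∨ D.zigzag sR b e cR cL := by
  classical
  have hT := hOD.posT
  have hT2 : 2 ≤ T := by omega
  have hδ : ∀ m, m ≤ T - 2 → D.precN ((D.orb b e w₀ m).1) b := by
    intro m hm
    refine D.sp_resolve (D.isFlag_orb hOD.flag m).2.1 ?_
    intro hP
    have e3 : (D.orb b e w₀ m).1 = (D.orb b e w₀ (T - 1)).1 := by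
      rw [D.precP_unique hP, D.precP_unique hγ]
    have := D.pos_inj hOD hab (by omega) (by omega) e3
    omega
  set p := bb - a with hp
  have hp1 : 1 ≤ p := by omega
  have hexK : ∃ k, p ≤ k ∨ ¬ D.Asc b e w₀ (a + k) := ⟨p, Or.inl le_rfl⟩
  obtain ⟨K, hKdef⟩ : ∃ K0, K0 = Nat.find hexK := ⟨_, rfl⟩
  have hKle : K ≤ p := by rw [hKdef]; exact Nat.find_le (Or.inl le_rfl)
  have hKasc : ∀ k, k < K → D.Asc b e w₀ (a + k) ∧ k < p := by
    intro k hk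
    rw [hKdef] at hk
    have := Nat.find_min hexK hk
    push_neg at this
    exact ⟨this.2, by omega⟩
  have hKdesc0 : K < p → ¬ D.Asc b e w₀ (a + K) := by
    intro hKp
    rcases Nat.find_spec hexK with h | h
    · rw [hKdef] at hKp; omega
    · rw [hKdef]; exact h
  have hdesc' : ∀ j, K + j < p → ¬ D.Asc b e w₀ (a + (K + j)) := by
    intro j
    induction j with
    | zero => intro h0; exact hKdesc0 (by omega)
    | succ n ih =>
      intro hn
      have hprev := ih (by omega)
      have := D.desc_propagate hOD.flag hprev (hδ (a + (K + n)) (by omega))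
        (hδ (a + (K + n) + 1) (by omega))
      rwa [show a + (K + n) + 1 = a + (K + (n + 1)) by omega] at this
  have hdescAll : ∀ k, K ≤ k → k < p → ¬ D.Asc b e w₀ (a + k) := by
    intro k h1 h2
    have := hdesc' (k - K) (by omega)
    rwa [show K + (k - K) = k by omega] at this
  obtain ⟨sA, hsA⟩ := D.lab_f hOD.flag a
  obtain ⟨β, hβ⟩ : ∃ β0 : Bool, β0 = (if K = 0 then !sA else sA) := ⟨_, rfl⟩
  have hsign : ∀ k, k < p →
      D.sp (if k < K then β else !β) e ((D.orb b e w₀ (a + k + 1)).2) := by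
    intro k hk
    obtain ⟨s, hs⟩ := D.lab_f hOD.flag (a + k)
    by_cases hkK : k < K
    · have hKne : K ≠ 0 := by omega
      have hes : s = sA := by
        refine D.sign_const_A hOD.flag a (a + k) (by omega) ?_ ?_ hsA hs
        · intro m h1 h2
          have := (hKasc (m - a) (by omega)).1
          rwa [show a + (m - a) = m by omega] at this
        · intro m h1 h2
          exact hδ m (by omega)
      rw [if_pos hkK, hβ, if_neg hKne, ← hes]
      exact hs
    · push_neg at hkK
      have hs' : s = !β := by
        by_cases hK0 : K = 0
        · have hes : s = sA := by
            refine D.sign_const_D hOD.flag a (a + k) (by omega) ?_ ?_ hsA hs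
            · intro m h1 h2
              have := hdescAll (m - a) (by omega) (by omega)
              rwa [show a + (m - a) = m by omega] at this
            · intro m h1 h2
              exact hδ m (by omega)
          rw [hes, hβ, if_pos hK0, Bool.not_not]
        · obtain ⟨sP, hsP⟩ := D.lab_f hOD.flag (a + K - 1)
          obtain ⟨sK, hsK⟩ := D.lab_f hOD.flag (a + K)
          have e1 : sP = sA := by
            refine D.sign_const_A hOD.flag a (a + K - 1) (by omega) ?_ ?_ hsA hsP
            · intro m h1 h2
              have := (hKasc (m - a) (by omega)).1
              rwa [show a + (m - a) = m by omega] at this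
            · intro m h1 h2
              exact hδ m (by omega)
          have e2 : sK = !sP := by
            have ha1 : D.Asc b e w₀ (a + K - 1) := by
              have := (hKasc (K - 1) (by omega)).1
              rwa [show a + (K - 1) = a + K - 1 by omega] at this
            have ha2 : ¬ D.Asc b e w₀ (a + K - 1 + 1) := by
              rw [show a + K - 1 + 1 = a + K by omega]
              exact hKdesc0 (by omega)
            have h3 : D.sp sK e ((D.orb b e w₀ (a + K - 1 + 2)).2) := by
              rw [show a + K - 1 + 2 = a + K + 1 by omega]
              exact hsK
            exact D.sign_AD hOD.flag (hδ _ (by omega)) (hδ _ (by omega)) ha1 ha2 hsP h3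
          have e3 : s = sK := by
            refine D.sign_const_D hOD.flag (a + K) (a + k) (by omega) ?_ ?_ hsK hs
            · intro m h1 h2
              have := hdescAll (m - a) (by omega) (by omega)
              rwa [show a + (m - a) = m by omega] at this
            · intro m h1 h2
              exact hδ m (by omega)
          rw [e3, e2, e1, hβ, if_neg hK0]
      rw [if_neg (by omega), ← hs']
      exact hs
  have hdist : ∀ i j, i < p → j < p → i ≠ j →
      (D.orb b e w₀ (a + i + 1)).2 ≠ (D.orb b e w₀ (a + j + 1)).2 := by
    intro i j hi hj hij heq
    rcases Nat.lt_or_ge i j with hlt | hge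
    · exact D.dup_label hOD hab hγ (show a + i < a + j by omega) (by omega) heq
    · exact D.dup_label hOD hab hγ (show a + j < a + i by omega) (by omega) heq.symm
  -- step shape facts
  have hascStep : ∀ i, i < K →
      D.precP ((D.orb b e w₀ (a + i + 1)).2) ((D.orb b e w₀ (a + i)).1) ∧
      D.precN ((D.orb b e w₀ (a + i + 1)).2) ((D.orb b e w₀ (a + i + 1)).1) := by
    intro i hi
    obtain ⟨hasc, hip⟩ := hKasc i hi
    exact ⟨hasc, D.asc_B hOD.flag hasc (hδ _ (by omega)) (hδ _ (by omega))⟩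
  have hdescStep : ∀ i, K ≤ i → i < p →
      D.precN ((D.orb b e w₀ (a + i + 1)).2) ((D.orb b e w₀ (a + i)).1) ∧
      D.precP ((D.orb b e w₀ (a + i + 1)).2) ((D.orb b e w₀ (a + i + 1)).1) := by
    intro i h1 h2
    have hd := hdescAll i h1 h2
    exact ⟨D.sp_resolve (D.step_lab_rel hOD.flag (a + i)) hd,
      D.desc_B hOD.flag hd (hδ _ (by omega)) (hδ _ (by omega))⟩
  by_cases hgoodL : sL = β
  · -- forward zigzag from cL to cR
    left
    refine ⟨p, K, hp1, hKle, fun i => (D.orb b e w₀ (a + i)).1,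
      fun i => (D.orb b e w₀ (a + i + 1)).2, ?_, ?_, ?_, ?_, ?_, ?_⟩
    · show (D.orb b e w₀ (a + 0)).1 = cL
      rw [Nat.add_zero, hcL]
    · show (D.orb b e w₀ (a + p)).1 = cR
      rw [show a + p = bb by omega, hcR]
    · intro i hi
      exact hδ (a + i) (by omega)
    · exact hdist
    · intro i hi
      obtain ⟨h1, h2⟩ := hascStep i hi
      refine ⟨h1, h2, ?_⟩
      have := hsign i (hKasc i hi).2
      rw [if_pos hi] at this
      rw [hgoodL]
      exact this
    · intro i h1 h2
      obtain ⟨h3, h4⟩ := hdescStep i h1 h2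
      refine ⟨h3, h4, ?_⟩
      have := hsign i h2
      rw [if_neg (by omega)] at this
      rw [hgoodL]
      exact this
  by_cases hgoodR : sR = !β
  · -- backward zigzag from cR to cL
    right
    refine ⟨p, p - K, hp1, by omega, fun i => (D.orb b e w₀ (bb - i)).1,
      fun i => (D.orb b e w₀ (bb - i)).2, ?_, ?_, ?_, ?_, ?_, ?_⟩
    · show (D.orb b e w₀ (bb - 0)).1 = cR
      rw [Nat.sub_zero, hcR]
    · show (D.orb b e w₀ (bb - p)).1 = cL
      rw [show bb - p = a by omega, hcL]
    · intro i hi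
      exact hδ (bb - i) (by omega)
    · intro i j hi hj hij heq
      have e1 : bb - i = a + (p - 1 - i) + 1 := by omega
      have e2 : bb - j = a + (p - 1 - j) + 1 := by omega
      have heq' : (D.orb b e w₀ (bb - i)).2 = (D.orb b e w₀ (bb - j)).2 := heq
      rw [e1, e2] at heq'
      exact hdist _ _ (by omega) (by omega) (by omega) heq'
    · -- ascending part of the reversed zigzag = descending steps
      intro i hi
      have e1 : bb - i = a + (p - 1 - i) + 1 := by omega
      have e2 : bb - (i + 1) = a + (p - 1 - i) := by omega
      obtain ⟨h3, h4⟩ := hdescStep (p - 1 - i) (by omega) (by omega)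
      refine ⟨?_, ?_, ?_⟩
      · show D.precP ((D.orb b e w₀ (bb - i)).2) ((D.orb b e w₀ (bb - i)).1)
        rw [e1]; exact h4
      · show D.precN ((D.orb b e w₀ (bb - i)).2) ((D.orb b e w₀ (bb - (i + 1))).1)
        rw [e1, e2]; exact h3
      · show D.sp sR e ((D.orb b e w₀ (bb - i)).2)
        have := hsign (p - 1 - i) (by omega)
        rw [if_neg (by omega)] at this
        rw [hgoodR, e1]
        exact this
    · -- descending part of the reversed zigzag = ascending steps
      intro i h1 h2
      have e1 : bb - i = a + (p - 1 - i) + 1 := by omega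
      have e2 : bb - (i + 1) = a + (p - 1 - i) := by omega
      obtain ⟨h3, h4⟩ := hascStep (p - 1 - i) (by omega)
      refine ⟨?_, ?_, ?_⟩
      · show D.precN ((D.orb b e w₀ (bb - i)).2) ((D.orb b e w₀ (bb - i)).1)
        rw [e1]; exact h4
      · show D.precP ((D.orb b e w₀ (bb - i)).2) ((D.orb b e w₀ (bb - (i + 1))).1)
        rw [e1, e2]; exact h3
      · show D.sp (!sR) e ((D.orb b e w₀ (bb - i)).2)
        have := hsign (p - 1 - i) (by omega)
        rw [if_pos (by omega)] at this
        rw [hgoodR, Bool.not_not, e1]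
        exact this
  · -- the impossible case
    exfalso
    have hsLv : sL = !β := by
      cases sL <;> cases β <;> first | rfl | exact absurd rfl hgoodL
    have hK0 : K = 0 := by
      by_contra hK0
      have hasc0 : D.Asc b e w₀ a := by
        have := (hKasc 0 (by omega)).1
        rwa [Nat.add_zero] at this
      have hs0 : D.sp β e ((D.orb b e w₀ (a + 1)).2) := by
        have := hsign 0 (by omega)
        rw [if_pos (show 0 < K by omega), Nat.add_zero] at this
        exact this
      rcases hdL with hdl | hdl
      · rw [hdl] at hsL
        exact hgoodL (D.sp_sign hsL hs0)
      · obtain ⟨τ, hτ⟩ := (D.isFlag_orb hOD.flag a).1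
        have hm := D.emate_at hOD.flag a
        have hτf : τ = false := by
          cases τ
          · rfl
          · exfalso
            have e1 := D.precP_unique hτ
            have e2 := D.precP_unique
              (show D.precP ((D.orb b e w₀ (a + 1)).2) ((D.orb b e w₀ a).1) from hasc0)
            exact D.mate_ne hm (by rw [e2, ← e1])
        rw [hτf] at hτ
        rw [hdl] at hsL
        have hpar := D.mate_parity hm hsL hτ hs0
          (show D.sp true ((D.orb b e w₀ (a + 1)).2) ((D.orb b e w₀ a).1) from hasc0)
        rw [hsLv] at hpar
        cases β <;> simp at hpar
    -- all steps descend ; right-end contradiction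
    have hsAll : ∀ k, k < p → D.sp (!β) e ((D.orb b e w₀ (a + k + 1)).2) := by
      intro k hk
      have := hsign k hk
      rwa [if_neg (by omega)] at this
    have hsRv : sR = β := by
      cases sR <;> cases β <;> first | rfl | exact absurd rfl hgoodR
    have hlast := hdescStep (p - 1) (by omega) (by omega)
    have elast : a + (p - 1) + 1 = bb := by omega
    rw [elast] at hlast
    have hslast : D.sp (!β) e ((D.orb b e w₀ bb).2) := by
      have := hsAll (p - 1) (by omega)
      rwa [elast] at this
    rcases hdR with hdr | hdr
    · rw [hdr] at hsR
      have : sR = !β := D.sp_sign hsR hslast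
      rw [hsRv] at this
      cases β <;> simp at this
    · obtain ⟨σ₂, hσ₂⟩ := D.step_lab_rel hOD.flag bb
      have hm := D.emate_at hOD.flag bb
      have hσf : σ₂ = false := by
        cases σ₂
        · rfl
        · exfalso
          have e1 := D.precP_unique hσ₂
          have e2 := D.precP_unique hlast.2
          exact D.mate_ne hm (by rw [e2, ← e1])
      rw [hσf] at hσ₂
      rw [hdr] at hsR
      have hpar := D.mate_parity hm hslast
        (show D.sp true ((D.orb b e w₀ bb).2) ((D.orb b e w₀ bb).1) from hlast.2) hsR hσ₂
      rw [hsRv] at hpar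
      cases β <;> simp at hpar

end DFC


/-- hexagon property: given a hexagon `c ≺⁻ b ≻⁻ c'`, `d ≺^α c`,
`d' ≺^{α'} c'`, `e ≺^β d`, `e ≺^{β'} d'`, either `c = c'` or — up to exchanging
the quadruples `(c, d, α, β)` and `(c', d', α', β')` — there is a non-trivial
simple `δ(b)`-zig-zag from `c` to `c'`. -/
theorem dfc_hexagon {α : Type*} [Fintype α] (D : DFC α) (sa sa' sb sb' : Bool)
    (b c c' d d' e : α) (hc : D.precN c b) (hc' : D.precN c' b)
    (hd : sprec D.precN D.precP sa d c) (hd' : sprec D.precN D.precP sa' d' c')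
    (he : sprec D.precN D.precP sb e d) (he' : sprec D.precN D.precP sb' e d') :
    c = c' ∨ D.zigzag sb b e c c' ∨ D.zigzag sb' b e c' c := by
  classical
  by_cases hcc : c = c'
  · exact Or.inl hcc
  right
  have hfl' : D.IsFlag b e (c', d') := ⟨⟨sa', hd'⟩, ⟨false, hc'⟩, ⟨sb', he'⟩⟩
  have hfl : D.IsFlag b e (c, d) := ⟨⟨sa, hd⟩, ⟨false, hc⟩, ⟨sb, he⟩⟩
  have hab : ∀ C, (∃ s, D.sp s C b) → D.Ab C := fun C _ => D.Ab_all C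
  obtain ⟨T0, h0⟩ := D.mk_orbData hfl'
  obtain ⟨k₀, hk₀T, hk₀⟩ := D.exists_gamma h0
  set w₀ := D.orb b e (c', d') (k₀ + 1) with hw₀
  have hOD : D.OrbData b e w₀ T0 := D.orbData_rebase h0 (k₀ + 1)
  have hT1 := h0.posT
  have hγ : D.precP ((D.orb b e w₀ (T0 - 1)).1) b := by
    rw [hw₀, D.orb_of_orb, show T0 - 1 + (k₀ + 1) = k₀ + T0 by omega, D.orb_add_T h0]
    exact hk₀
  obtain ⟨i, hiT, hci⟩ := D.locate hOD hab hfl'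
  obtain ⟨j, hjT, hcj⟩ := D.locate hOD hab hfl
  have hposi : c' = (D.orb b e w₀ i).1 := by
    rcases hci with h | h
    · exact congrArg Prod.fst h
    · exact congrArg Prod.fst h
  have hposj : c = (D.orb b e w₀ j).1 := by
    rcases hcj with h | h
    · exact congrArg Prod.fst h
    · exact congrArg Prod.fst h
  have hine : i ≠ T0 - 1 := by
    intro hEq
    rw [hEq] at hposi
    rw [hposi] at hc'
    exact D.not_both _ _ ⟨hc', hγ⟩
  have hjne : j ≠ T0 - 1 := by
    intro hEq
    rw [hEq] at hposj
    rw [hposj] at hc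
    exact D.not_both _ _ ⟨hc, hγ⟩
  have hij : i ≠ j := by
    intro hEq
    exact hcc (by rw [hposj, ← hEq, ← hposi])
  have hdl' : d' = (D.orb b e w₀ (i + 1)).2 ∨ d' = (D.orb b e w₀ i).2 := by
    rcases hci with h | h
    · exact Or.inr (congrArg Prod.snd h)
    · refine Or.inl ?_
      rw [D.orb_snd_succ]
      exact congrArg Prod.snd h
  have hdl : d = (D.orb b e w₀ (j + 1)).2 ∨ d = (D.orb b e w₀ j).2 := by
    rcases hcj with h | h
    · exact Or.inr (congrArg Prod.snd h)
    · refine Or.inl ?_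
      rw [D.orb_snd_succ]
      exact congrArg Prod.snd h
  have hdr' : d' = (D.orb b e w₀ i).2 ∨ d' = (D.orb b e w₀ (i + 1)).2 := hdl'.symm
  have hdr : d = (D.orb b e w₀ j).2 ∨ d = (D.orb b e w₀ (j + 1)).2 := hdl.symm
  rcases Nat.lt_or_ge i j with hlt | hge
  · have hres := D.endgame hOD hab hγ hlt (show j ≤ T0 - 2 by omega)
      hposi hposj hdl' hdr he' he
    exact hres.symm
  · have hlt2 : j < i := by omega
    have hres := D.endgame hOD hab hγ hlt2 (show i ≤ T0 - 2 by omega)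
      hposj hposi hdl hdr' he he'
    exact hres
end

section
/- Pencil linearity: let C be a dendritic face complex, let e ∈ C and β ∈ {+,−}. Then the set {d ∈ C : e ≺^β d} is linearly ordered by <⁺: any two distinct faces d, d' with e ≺^β d and e ≺^β d' satisfy d <⁺ d' or d' <⁺ d. -/
namespace DFC

variable {α : Type*} [Fintype α]

/-! ### Basic notions -/

/-- The covering relation `≺` (either sign). -/
def prc (D : DFC α) (x y : α) : Prop := D.precN x y ∨ D.precP x y

/-- The face order `≤` generated by `≺`. -/
def fle (D : DFC α) : α → α → Prop := Relation.ReflTransGen D.prc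

/-- Membership of a pencil: `e ≺^β d`. -/
def pe (D : DFC α) (β : Bool) (e d : α) : Prop := sprec D.precN D.precP β e d

/-- `tri` restricted to a pencil. -/
def triA (D : DFC α) (β : Bool) (e : α) (x y : α) : Prop :=
  D.pe β e x ∧ D.pe β e y ∧ D.tri x y

def ltA (D : DFC α) (β : Bool) (e : α) : α → α → Prop := Relation.TransGen (D.triA β e)

def leA (D : DFC α) (β : Bool) (e : α) : α → α → Prop := Relation.ReflTransGen (D.triA β e)

theorem sign_unique (D : DFC α) {a b : Bool} {y x : α}
    (h1 : sprec D.precN D.precP a y x) (h2 : sprec D.precN D.precP b y x) : a = b := by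
  cases a <;> cases b <;> simp [sprec] at h1 h2 ⊢ <;>
    exact (D.not_both y x ⟨‹_›, ‹_›⟩)

theorem dim_sprec (D : DFC α) {a : Bool} {y x : α}
    (h : sprec D.precN D.precP a y x) : D.dim x = D.dim y + 1 := by
  cases a
  · exact D.dim_precN h
  · exact D.dim_precP h

theorem dim_prc (D : DFC α) {y x : α} (h : D.prc y x) : D.dim x = D.dim y + 1 := by
  rcases h with h | h
  · exact D.dim_precN h
  · exact D.dim_precP h

theorem prc_sprec (D : DFC α) {y x : α} (h : D.prc y x) :
    ∃ s, sprec D.precN D.precP s y x := by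
  rcases h with h | h
  · exact ⟨false, h⟩
  · exact ⟨true, h⟩

theorem sprec_prc (D : DFC α) {s : Bool} {y x : α} (h : sprec D.precN D.precP s y x) :
    D.prc y x := by
  cases s
  · exact Or.inl h
  · exact Or.inr h

theorem fle_dim (D : DFC α) {x y : α} (h : D.fle x y) : D.dim x ≤ D.dim y := by
  induction h with
  | refl => exact le_refl _
  | tail _ h ih => exact le_trans ih (by rw [D.dim_prc h]; omega)

theorem fle_eq (D : DFC α) {x y : α} (h : D.fle x y) (hd : D.dim y ≤ D.dim x) : x = y := by
  induction h with
  | refl => rfl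
  | tail hxz h ih =>
      have h1 := D.fle_dim hxz
      have h2 := D.dim_prc h
      omega

/-- staircase: a strict face relation factors through a covering step. -/
theorem fle_succ (D : DFC α) {x y : α} (h : D.fle x y) (hd : D.dim x < D.dim y) :
    ∃ z, D.prc x z ∧ D.fle z y := by
  induction h using Relation.ReflTransGen.head_induction_on with
  | refl => omega
  | head hxz hzy _ => exact ⟨_, hxz, hzy⟩

theorem fle_cover (D : DFC α) {x y : α} (h : D.fle x y) (hd : D.dim y = D.dim x + 1) :
    D.prc x y := by
  obtain ⟨z, hxz, hzy⟩ := D.fle_succ h (by omega)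
  have := D.dim_prc hxz
  have : z = y := D.fle_eq hzy (by omega)
  exact this ▸ hxz

theorem fle_two (D : DFC α) {x y : α} (h : D.fle x y) (hd : D.dim y = D.dim x + 2) :
    ∃ z, D.prc x z ∧ D.prc z y := by
  obtain ⟨z, hxz, hzy⟩ := D.fle_succ h (by omega)
  have := D.dim_prc hxz
  exact ⟨z, hxz, D.fle_cover hzy (by omega)⟩

theorem fle_of_prc (D : DFC α) {x y : α} (h : D.prc x y) : D.fle x y :=
  Relation.ReflTransGen.single h

theorem fle_of_sprec (D : DFC α) {s : Bool} {x y : α} (h : sprec D.precN D.precP s x y) :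
    D.fle x y := D.fle_of_prc (D.sprec_prc h)

/-! ### Thinness: uniqueness and existence consequences -/

theorem interval_unique (D : DFC α) {a₁ b₁ a₂ b₂ : Bool} {x y y' z : α}
    (hzy : sprec D.precN D.precP b₁ z y) (hyx : sprec D.precN D.precP a₁ y x)
    (hzy' : sprec D.precN D.precP b₂ z y') (hy'x : sprec D.precN D.precP a₂ y' x)
    (hprod : (a₁ = b₁) ↔ (a₂ = b₂)) : y = y' := by
  by_contra hne
  obtain ⟨w, ⟨hwy, a', b', hzw, hwx, hsig⟩, -⟩ := D.thin a₁ b₁ x y z hzy hyx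
  have hy'w : y' ≠ w := by
    rintro rfl
    have ha : a₂ = a' := D.sign_unique hy'x hwx
    have hb : b₂ = b' := D.sign_unique hzy' hzw
    subst ha; subst hb
    tauto
  obtain ⟨v, -, hvuniq⟩ := D.thin a' b' x w z hzw hwx
  have h1 : y = v := hvuniq y ⟨fun h => hwy h.symm, a₁, b₁, hzy, hyx, by tauto⟩
  have h2 : y' = v := hvuniq y' ⟨hy'w, a₂, b₂, hzy', hy'x, by tauto⟩
  exact hne (h1.trans h2.symm)

/-- Existence half of thinness, with explicit signs. -/
theorem partner (D : DFC α) {a b : Bool} {x y z : α}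
    (hzy : sprec D.precN D.precP b z y) (hyx : sprec D.precN D.precP a y x) :
    ∃ w, w ≠ y ∧ ∃ a' b', sprec D.precN D.precP b' z w ∧ sprec D.precN D.precP a' w x ∧
      ((a = b) ↔ ¬ (a' = b')) := by
  obtain ⟨w, hw, -⟩ := D.thin a b x y z hzy hyx
  exact ⟨w, hw⟩

/-- Members of the same pencil among the sources of a fixed face coincide. -/
theorem pencil_src_unique (D : DFC α) {β : Bool} {e d d' x : α}
    (hd : D.pe β e d) (hd' : D.pe β e d') (hdx : D.precN d x) (hd'x : D.precN d' x) :
    d = d' :=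
  D.interval_unique (b₁ := β) (a₁ := false) (b₂ := β) (a₂ := false) hd hdx hd' hd'x Iff.rfl

/-- Two distinct members of a pencil covered by a common element are `tri`-comparable. -/
theorem pencil_step (D : DFC α) {β s s' : Bool} {e d d' x : α}
    (hd : D.pe β e d) (hd' : D.pe β e d') (hne : d ≠ d')
    (hdx : sprec D.precN D.precP s d x) (hd'x : sprec D.precN D.precP s' d' x) :
    D.tri d d' ∨ D.tri d' d := by
  have hss' : s ≠ s' := by
    intro h
    exact hne (D.interval_unique (b₁ := β) (a₁ := s) (b₂ := β) (a₂ := s')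
      hd hdx hd' hd'x (by rw [h]))
  cases s
  · cases s'
    · exact absurd rfl hss'
    · exact Or.inl ⟨x, hdx, hd'x⟩
  · cases s'
    · exact Or.inr ⟨x, hd'x, hdx⟩
    · exact absurd rfl hss'

/-- If `e ≺^β d` and `d` is the target of `x`, then `x` has a (unique) source in the
pencil of `e`; it is one `tri`-step below `d`. -/
theorem pencil_move_target (D : DFC α) {β : Bool} {e d x : α}
    (hd : D.pe β e d) (hdx : D.precP d x) :
    ∃ w, D.precN w x ∧ D.pe β e w := by
  obtain ⟨w, hwd, a', b', hew, hwx, hsig⟩ := D.partner (a := true) (b := β) hd hdx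
  cases a' with
  | true =>
      exact absurd ((D.precP_unique hwx).trans (D.precP_unique hdx).symm) hwd
  | false =>
      refine ⟨w, hwx, ?_⟩
      have : b' = β := by cases β <;> cases b' <;> simp_all
      exact this ▸ hew

/-- If `e ≺^β d` and `d` is a source of `x`, then either the target of `x` is in the
pencil of `e` (and `d ◁ tgt x`), or `x` has a source in the opposite pencil. -/
theorem pencil_move_source (D : DFC α) {β : Bool} {e d x : α}
    (hd : D.pe β e d) (hdx : D.precN d x) :
    D.pe β e (D.tgt x) ∨ (∃ w, w ≠ d ∧ D.precN w x ∧ D.pe (!β) e w) := by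
  obtain ⟨w, hwd, a', b', hew, hwx, hsig⟩ := D.partner (a := false) (b := β) hd hdx
  cases a' with
  | true =>
      left
      have hwt : w = D.tgt x := D.precP_unique hwx
      have : b' = β := by cases β <;> cases b' <;> simp_all
      subst this; exact hwt ▸ hew
  | false =>
      right
      refine ⟨w, hwd, hwx, ?_⟩
      have : b' = !β := by cases β <;> cases b' <;> simp_all
      exact this ▸ hew

end DFC

namespace DFC

variable {α : Type*} [Fintype α]

/-! ### Chains and acyclicity core -/

theorem transGen_chain {r : α → α → Prop} {a b : α} (h : Relation.TransGen r a b) :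
    ∃ p, 1 ≤ p ∧ ∃ σ : ℕ → α, σ 0 = a ∧ σ p = b ∧ ∀ i < p, r (σ i) (σ (i + 1)) := by
  induction h with
  | @single c hab =>
      exact ⟨1, le_refl _, fun i => if i = 0 then a else c, by simp, by simp, by
        intro i hi
        interval_cases i
        simpa using hab⟩
  | @tail b c hab hbc ih =>
      obtain ⟨p, hp, σ, h0, hpb, hstep⟩ := ih
      refine ⟨p + 1, by omega, fun i => if i ≤ p then σ i else c, by simpa using h0, by simp, ?_⟩
      intro i hi
      rcases lt_or_eq_of_le (Nat.lt_succ_iff.mp hi) with hlt | heq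
      · simpa [Nat.le_of_lt hlt, Nat.succ_le_of_lt hlt] using hstep i hlt
      · subst heq
        simpa [hpb] using hbc

/-- Core acyclicity: there is no cyclic sequence `τ` of sources of `x` with
`tgt (τ i) ≺⁻ τ (i+1)` (the "flow" orientation). -/
theorem no_flow_cycle (D : DFC α) (x : α) (p : ℕ) (hp : 1 ≤ p) (τ : ℕ → α)
    (hmem : ∀ i < p, D.precN (τ i) x) (hwrap : τ p = τ 0)
    (hstep : ∀ i < p, D.precN (D.tgt (τ i)) (τ (i + 1))) : False := by
  refine D.no_cycle x p hp (fun i => τ (p + 1 - i)) ?_ ?_ ?_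
  · intro i h1 h2
    rcases Nat.lt_or_ge (p + 1 - i) p with h | h
    · exact hmem _ h
    · rw [show p + 1 - i = p from by omega, hwrap]
      exact hmem 0 (by omega)
  · simp only [Nat.sub_self, show p + 1 - 1 = p from by omega, hwrap]
  · intro i h1 h2
    rw [show p + 1 - (i + 1) = p - i from by omega, show p + 1 - i = (p - i) + 1 from by omega]
    exact hstep (p - i) (by omega)

/-- The "flow" relation on the sources of a fixed face `x` is acyclic. -/
theorem flow_acyclic (D : DFC α) (x c : α) :
    ¬ Relation.TransGen (fun u v => D.precN u x ∧ D.precN v x ∧ D.precN (D.tgt u) v) c c := by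
  intro h
  obtain ⟨p, hp, σ, h0, hpc, hstep⟩ := transGen_chain h
  refine D.no_flow_cycle x p hp σ (fun i hi => (hstep i hi).1) (by rw [h0, hpc]) ?_
  intro i hi
  exact (hstep i hi).2.2

/-- Acyclicity transported one dimension down: the relation "`v` is the target of
some source `t` of `x` having `u` among its sources" is acyclic. -/
theorem step_acyclic (D : DFC α) (x a : α) :
    ¬ Relation.TransGen
      (fun u v => ∃ t, D.precN t x ∧ D.tgt t = v ∧ D.precN u t) a a := by
  intro h
  obtain ⟨p, hp, σ, h0, hpc, hstep⟩ := transGen_chain h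
  choose τ hτx hτt hτs using hstep
  -- τ is indexed by `i < p`; build a total function
  let T : ℕ → α := fun i => if h : i % p < p then τ (i % p) h else a
  have hTdef : ∀ (i : ℕ) (hi : i < p), T i = τ i hi := by
    intro i hi
    simp only [T, Nat.mod_eq_of_lt hi, dif_pos hi]
  have hTp : T p = τ 0 hp := by
    simp only [T, Nat.mod_self]
    exact dif_pos (by omega)
  have hT0 : T 0 = τ 0 hp := hTdef 0 hp
  refine D.no_flow_cycle x p hp T (fun i hi => by rw [hTdef i hi]; exact hτx i hi)
    (by rw [hTp, hT0]) ?_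
  intro i hi
  rw [hTdef i hi]
  rcases Nat.lt_or_ge (i + 1) p with h2 | h2
  · rw [hTdef (i + 1) h2, hτt i hi]
    exact hτs (i + 1) h2
  · have hip : i + 1 = p := by omega
    have hT1 : T (i + 1) = τ 0 hp := by rw [hip, hTp]
    have hσ : σ (i + 1) = σ 0 := by rw [hip, hpc, h0]
    rw [hT1, hτt i hi, hσ]
    exact hτs 0 hp

end DFC

namespace DFC

variable {α : Type*} [Fintype α]

/-! ### Restriction to the closure of a face -/

theorem fle_tgt (D : DFC α) {x : α} (h : 1 ≤ D.dim x) : D.fle (D.tgt x) x :=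
  D.fle_of_prc (Or.inr (D.tgt_precP x h))

noncomputable instance instFintypeCls (D : DFC α) (c : α) : Fintype {x // D.fle x c} :=
  Fintype.ofFinite _

/-- The closure of `c` as a sub-DFC. -/
noncomputable def restrict (D : DFC α) (c : α) : DFC {x // D.fle x c} :=
  { dim := fun x => D.dim x.1
    precN := fun a b => D.precN a.1 b.1
    precP := fun a b => D.precP a.1 b.1
    tgt := fun x => if h : 1 ≤ D.dim x.1 then
        ⟨D.tgt x.1, Relation.ReflTransGen.trans (D.fle_tgt h) x.2⟩ else x
    dim_precN := fun h => D.dim_precN h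
    dim_precP := fun h => D.dim_precP h
    not_both := fun y x h => D.not_both y.1 x.1 h
    tgt_precP := by
      intro x hx
      simp only [dif_pos hx]
      exact D.tgt_precP x.1 hx
    precP_unique := by
      intro y x h
      have hd : 1 ≤ D.dim x.1 := by have := D.dim_precP h; omega
      simp only [dif_pos hd]
      exact Subtype.ext (D.precP_unique h)
    src_exists := by
      intro x hx
      obtain ⟨y, hy⟩ := D.src_exists x.1 hx
      exact ⟨⟨y, Relation.ReflTransGen.trans (D.fle_of_prc (Or.inl hy)) x.2⟩, hy⟩
    top := ⟨c, Relation.ReflTransGen.refl⟩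
    le_top := by
      rintro ⟨x, hx⟩
      induction hx using Relation.ReflTransGen.head_induction_on with
      | refl => exact Relation.ReflTransGen.refl
      | @head u v huv hvc ih =>
          exact Relation.ReflTransGen.head (r := fun a b : {x // D.fle x c} =>
            D.precN a.1 b.1 ∨ D.precP a.1 b.1) (b := ⟨v, hvc⟩) huv ih
    thin := by
      rintro a b x y z hzy hyx
      have hzy' : sprec D.precN D.precP b z.1 y.1 := by cases b <;> exact hzy
      have hyx' : sprec D.precN D.precP a y.1 x.1 := by cases a <;> exact hyx
      obtain ⟨w, ⟨hwy, a', b', h1, h2, h3⟩, huniq⟩ := D.thin a b x.1 y.1 z.1 hzy' hyx'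
      have hwc : D.fle w c :=
        Relation.ReflTransGen.trans (D.fle_of_sprec h2) x.2
      refine ⟨⟨w, hwc⟩, ⟨fun he => hwy (congrArg Subtype.val he), a', b',
        (by cases b' <;> exact h1), (by cases a' <;> exact h2), h3⟩, ?_⟩
      rintro ⟨w', hw'c⟩ ⟨hne, a'', b'', g1, g2, g3⟩
      have : w' = w := huniq w' ⟨fun he => hne (Subtype.ext he), a'', b'',
        (by cases b'' <;> exact g1), (by cases a'' <;> exact g2), g3⟩
      exact Subtype.ext this
    src_singleton := by
      intro x hx
      obtain ⟨y, hy, huniq⟩ := D.src_singleton x.1 hx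
      refine ⟨⟨y, Relation.ReflTransGen.trans (D.fle_of_prc (Or.inl hy)) x.2⟩, hy, ?_⟩
      rintro ⟨y', hy'c⟩ h
      exact Subtype.ext (huniq y' h)
    no_cycle := by
      intro x p hp y hmem hwrap hall
      rcases Nat.lt_or_ge (D.dim x.1) 2 with hx | hx
      · -- dimension 1: sources have dimension 0, contradiction with hall
        have h1 := hall 1 (le_refl _) hp
        have hm1 := hmem 1 (le_refl _) hp
        have hd1 : D.dim x.1 = D.dim (y 1).1 + 1 := D.dim_precN hm1
        have := D.dim_precN h1
        -- precN _ (y 1).1 forces dim (y 1).1 ≥ 1, but dim (y 1).1 ≤ 0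
        omega
      · have hsrc : ∀ i, 1 ≤ i → i ≤ p + 1 → 1 ≤ D.dim (y i).1 := by
          intro i h1 h2
          rcases Nat.lt_or_ge p i with h | h
          · have : i = p + 1 := by omega
            rw [this, hwrap]
            have := D.dim_precN (hmem 1 (le_refl _) hp)
            omega
          · have := D.dim_precN (hmem i h1 h)
            omega
        refine D.no_cycle x.1 p hp (fun i => (y i).1)
          (fun i h1 h2 => hmem i h1 h2) (congrArg Subtype.val hwrap) ?_
        intro i h1 h2
        have := hall i h1 h2
        simpa only [dif_pos (hsrc (i + 1) (by omega) (by omega))] using this }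

namespace Restrict

variable (D : DFC α) (c : α)

theorem precN_iff {a b : {x // D.fle x c}} : (D.restrict c).precN a b ↔ D.precN a.1 b.1 :=
  Iff.rfl

theorem sprec_iff {s : Bool} {a b : {x // D.fle x c}} :
    sprec (D.restrict c).precN (D.restrict c).precP s a b ↔ sprec D.precN D.precP s a.1 b.1 := by
  cases s <;> exact Iff.rfl

theorem pe_iff {β : Bool} {e d : {x // D.fle x c}} :
    (D.restrict c).pe β e d ↔ D.pe β e.1 d.1 := sprec_iff D c

theorem dim_eq (x : {x // D.fle x c}) : (D.restrict c).dim x = D.dim x.1 := rfl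

theorem top_val : (D.restrict c).top.1 = c := rfl

theorem tri_val {a b : {x // D.fle x c}} (h : (D.restrict c).tri a b) : D.tri a.1 b.1 := by
  obtain ⟨t, h1, h2⟩ := h
  exact ⟨t.1, h1, h2⟩

theorem triA_val {β : Bool} {e a b : {x // D.fle x c}} (h : (D.restrict c).triA β e a b) :
    D.triA β e.1 a.1 b.1 := by
  obtain ⟨h1, h2, h3⟩ := h
  exact ⟨(pe_iff D c).mp h1, (pe_iff D c).mp h2, tri_val D c h3⟩

theorem ltA_val {β : Bool} {e a b : {x // D.fle x c}} (h : (D.restrict c).ltA β e a b) :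
    D.ltA β e.1 a.1 b.1 := by
  induction h with
  | single h => exact Relation.TransGen.single (triA_val D c h)
  | tail _ h ih => exact Relation.TransGen.tail ih (triA_val D c h)

theorem leA_val {β : Bool} {e a b : {x // D.fle x c}} (h : (D.restrict c).leA β e a b) :
    D.leA β e.1 a.1 b.1 := by
  induction h with
  | refl => exact Relation.ReflTransGen.refl
  | tail _ h ih => exact Relation.ReflTransGen.tail ih (triA_val D c h)

theorem fle_val {a b : {x // D.fle x c}} (h : (D.restrict c).fle a b) : D.fle a.1 b.1 := by
  induction h with
  | refl => exact Relation.ReflTransGen.refl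
  | tail _ h ih =>
      refine Relation.ReflTransGen.tail ih ?_
      rcases h with h | h
      · exact Or.inl h
      · exact Or.inr h

theorem tgt_val {x : {x // D.fle x c}} (h : 1 ≤ D.dim x.1) :
    ((D.restrict c).tgt x).1 = D.tgt x.1 := by
  show (dite _ _ _ : {x // D.fle x c}).1 = _
  rw [dif_pos h]

theorem tgt_top_val (h : 1 ≤ D.dim c) : ((D.restrict c).tgt (D.restrict c).top).1 = D.tgt c :=
  tgt_val D c h

end Restrict

end DFC

namespace DFC

/-! ### The codimension-3 structure package -/

section Codim3

variable {α : Type*} [Fintype α] (D : DFC α) (β : Bool) (e : α)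

/-- canonical pred-step relation at codimension 3 (witnesses are facets). -/
def predR (u v : α) : Prop :=
  D.pe β e u ∧ D.pe β e v ∧ ∃ t, D.precN t D.top ∧ D.tgt t = v ∧ D.precN u t

/-- canonical succ-step relation at codimension 3. -/
def succR (u v : α) : Prop :=
  D.pe β e u ∧ D.pe β e v ∧ ∃ t, D.precN t D.top ∧ D.precN u t ∧ D.tgt t = v

variable {D β e}

theorem predR_dim {u v : α} (h : D.predR β e u v) : 1 ≤ D.dim D.top := by
  obtain ⟨-, -, t, ht, -, hut⟩ := h
  have := D.dim_precN ht
  omega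

theorem predR_triA {u v : α} (h : D.predR β e u v) : D.triA β e u v := by
  obtain ⟨h1, h2, t, ht, htv, hut⟩ := h
  have hdt : 1 ≤ D.dim t := by have := D.dim_precN hut; omega
  exact ⟨h1, h2, t, hut, htv ▸ D.tgt_precP t hdt⟩

theorem succR_triA {u v : α} (h : D.succR β e u v) : D.triA β e u v := by
  obtain ⟨h1, h2, t, ht, hut, htv⟩ := h
  have hdt : 1 ≤ D.dim t := by have := D.dim_precN hut; omega
  exact ⟨h1, h2, t, hut, htv ▸ D.tgt_precP t hdt⟩

theorem predR_acyclic (d : α) : ¬ Relation.TransGen (D.predR β e) d d := by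
  intro h
  exact D.step_acyclic D.top d (Relation.TransGen.mono (r := D.predR β e)
    (p := fun u v => ∃ t, D.precN t D.top ∧ D.tgt t = v ∧ D.precN u t) (fun u v hr => hr.2.2) _ _ h)

theorem succR_acyclic (d : α) : ¬ Relation.TransGen (D.succR β e) d d := by
  intro h
  refine D.step_acyclic D.top d (Relation.TransGen.mono (r := D.succR β e)
    (p := fun u v => ∃ t, D.precN t D.top ∧ D.tgt t = v ∧ D.precN u t) (fun u v hr => ?_) _ _ h)
  obtain ⟨-, -, t, h1, h2, h3⟩ := hr
  exact ⟨t, h1, h3, h2⟩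

theorem predR_wf : WellFounded (D.predR β e) := by
  haveI : IsTrans α (Relation.TransGen (D.predR β e)) := ⟨fun _ _ _ => .trans⟩
  haveI : IsIrrefl α (Relation.TransGen (D.predR β e)) := ⟨predR_acyclic⟩
  exact Subrelation.wf (fun h => Relation.TransGen.single h)
    (Finite.wellFounded_of_trans_of_irrefl _)

theorem succR_wf_flip : WellFounded (Function.swap (D.succR β e)) := by
  haveI : IsTrans α (Relation.TransGen (Function.swap (D.succR β e))) :=
    ⟨fun _ _ _ => .trans⟩
  haveI : IsIrrefl α (Relation.TransGen (Function.swap (D.succR β e))) := by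
    refine ⟨fun a h => succR_acyclic a (Relation.transGen_swap.mp h)⟩
  exact Subrelation.wf (fun h => Relation.TransGen.single h)
    (Finite.wellFounded_of_trans_of_irrefl _)

variable (hdim : D.dim D.top = D.dim e + 3)

/-- The classification of 2-step intervals `[d, ω]` at codimension 3 (`dim d = n-2`):
`d` has exactly one "positive-product" incidence and one "negative-product" one. -/
theorem up2 {d : α} (hfle : D.fle d D.top) (hd : D.dim D.top = D.dim d + 2) :
    ((∃ t, D.precN t D.top ∧ D.precN d t) ∨ D.precP d (D.tgt D.top)) ∧
    ((∃ t, D.precN t D.top ∧ D.precP d t) ∨ D.precN d (D.tgt D.top)) := by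
  obtain ⟨z, h1, h2⟩ := D.fle_two hfle hd
  obtain ⟨b, hb⟩ := D.prc_sprec h1
  obtain ⟨a, ha⟩ := D.prc_sprec h2
  obtain ⟨w, hwz, a', b', hw1, hw2, hsig⟩ := D.partner hb ha
  -- the original chain contributes one class, the partner the other
  have main : ∀ (a₀ b₀ : Bool) (z₀ : α), sprec D.precN D.precP b₀ d z₀ →
      sprec D.precN D.precP a₀ z₀ D.top →
      ((a₀ = b₀) → ((∃ t, D.precN t D.top ∧ D.precN d t) ∨ D.precP d (D.tgt D.top))) ∧
      (¬(a₀ = b₀) → ((∃ t, D.precN t D.top ∧ D.precP d t) ∨ D.precN d (D.tgt D.top))) := by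
    intro a₀ b₀ z₀ hbz haz
    constructor
    · intro hab
      cases a₀ with
      | false => exact Or.inl ⟨z₀, haz, by rwa [← hab] at hbz⟩
      | true =>
          right
          have : z₀ = D.tgt D.top := D.precP_unique haz
          rw [← this]
          rwa [← hab] at hbz
    · intro hab
      cases a₀ with
      | false =>
          left
          refine ⟨z₀, haz, ?_⟩
          cases b₀ with
          | true => exact hbz
          | false => simp at hab
      | true =>
          right
          have : z₀ = D.tgt D.top := D.precP_unique haz
          rw [← this]
          cases b₀ with
          | false => exact hbz
          | true => simp at hab
  by_cases hab : a = b
  · exact ⟨(main a b z hb ha).1 hab, (main a' b' w hw1 hw2).2 (by tauto)⟩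
  · exact ⟨(main a' b' w hw1 hw2).1 (by tauto), (main a b z hb ha).2 hab⟩

/-- no two facets share a codim-2 face as a source (F1). -/
theorem facet_src_unique {d t t' : α} (ht : D.precN t D.top) (ht' : D.precN t' D.top)
    (hdt : D.precN d t) (hdt' : D.precN d t') : t = t' :=
  D.interval_unique (b₁ := false) (a₁ := false) (b₂ := false) (a₂ := false)
    hdt ht hdt' ht' Iff.rfl

/-- no two facets share a codim-2 face as target (F1). -/
theorem facet_tgt_unique {d t t' : α} (ht : D.precN t D.top) (ht' : D.precN t' D.top)
    (hdt : D.precP d t) (hdt' : D.precP d t') : t = t' :=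
  D.interval_unique (b₁ := true) (a₁ := false) (b₂ := true) (a₂ := false)
    hdt ht hdt' ht' Iff.rfl

/-- exclusion between the two positive-product incidences. -/
theorem notP1P2 {d t : α} (htop : 1 ≤ D.dim D.top) (ht : D.precN t D.top)
    (hdt : D.precN d t) (h2 : D.precP d (D.tgt D.top)) : False := by
  have hgt : D.precP (D.tgt D.top) D.top := D.tgt_precP _ htop
  have : t = D.tgt D.top :=
    D.interval_unique (b₁ := false) (a₁ := false) (b₂ := true) (a₂ := true)
      hdt ht h2 hgt (by simp)
  exact D.not_both t D.top ⟨ht, this ▸ hgt⟩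

/-- exclusion between the two negative-product incidences. -/
theorem notM1M2 {d t : α} (htop : 1 ≤ D.dim D.top) (ht : D.precN t D.top)
    (hdt : D.precP d t) (h2 : D.precN d (D.tgt D.top)) : False := by
  have hgt : D.precP (D.tgt D.top) D.top := D.tgt_precP _ htop
  have : t = D.tgt D.top :=
    D.interval_unique (b₁ := true) (a₁ := false) (b₂ := false) (a₂ := true)
      hdt ht h2 hgt (by simp)
  exact D.not_both t D.top ⟨ht, this ▸ hgt⟩

end Codim3

end DFC

namespace DFC

section Codim3b

variable {α : Type*} [Fintype α] {D : DFC α} {β : Bool} {e : α}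

theorem chain_transGen {r : α → α → Prop} (σ : ℕ → α) :
    ∀ p, 1 ≤ p → (∀ i < p, r (σ i) (σ (i + 1))) → Relation.TransGen r (σ 0) (σ p) := by
  intro p
  induction p with
  | zero => omega
  | succ p ih =>
      intro _ hstep
      rcases Nat.eq_zero_or_pos p with rfl | hp
      · exact Relation.TransGen.single (hstep 0 (by omega))
      · exact Relation.TransGen.tail (ih hp (fun i hi => hstep i (by omega)))
          (hstep p (by omega))

theorem pe_dim {d : α} (hd : D.pe β e d) : D.dim d = D.dim e + 1 := by
  cases β
  · exact D.dim_precN hd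
  · exact D.dim_precP hd

theorem predR_func {u u' v : α} (h : D.predR β e u v) (h' : D.predR β e u' v) : u = u' := by
  obtain ⟨hu, hv, t, ht, htv, hut⟩ := h
  obtain ⟨hu', -, t', ht', htv', hut'⟩ := h'
  have hdt : 1 ≤ D.dim t := by have := D.dim_precN hut; omega
  have hdt' : 1 ≤ D.dim t' := by have := D.dim_precN hut'; omega
  have htt : t = t' :=
    facet_tgt_unique ht ht' (htv ▸ D.tgt_precP t hdt) (htv' ▸ D.tgt_precP t' hdt')
  subst htt
  exact D.pencil_src_unique hu hu' hut hut'

theorem predR_inj {u v v' : α} (h : D.predR β e u v) (h' : D.predR β e u v') : v = v' := by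
  obtain ⟨hu, hv, t, ht, htv, hut⟩ := h
  obtain ⟨-, hv', t', ht', htv', hut'⟩ := h'
  have : t = t' := facet_src_unique ht ht' hut hut'
  subst this
  exact htv.symm.trans htv'

theorem rt_predR_leA {g d : α} (h : Relation.ReflTransGen (D.predR β e) g d) :
    D.leA β e g d :=
  Relation.ReflTransGen.mono (r := D.predR β e) (p := D.triA β e) (fun _ _ hr => predR_triA hr) _ _ h

theorem rt_compare {b d d' : α} (h1 : Relation.ReflTransGen (D.predR β e) b d)
    (h2 : Relation.ReflTransGen (D.predR β e) b d') : D.leA β e d d' ∨ D.leA β e d' d := by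
  induction h1 using Relation.ReflTransGen.head_induction_on generalizing d' with
  | refl => exact Or.inl (rt_predR_leA h2)
  | @head u c huc hcd ih =>
      rcases Relation.ReflTransGen.cases_head h2 with rfl | ⟨c', huc', hc'd'⟩
      · exact Or.inr (rt_predR_leA (Relation.ReflTransGen.head huc hcd))
      · exact ih ((predR_inj huc huc') ▸ hc'd')

variable (hdim : D.dim D.top = D.dim e + 3)
include hdim

theorem pe_dim2 {d : α} (hd : D.pe β e d) :
    D.fle d D.top ∧ D.dim D.top = D.dim d + 2 := by
  refine ⟨D.le_top d, ?_⟩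
  have := pe_dim hd
  omega

/-- Every pencil member has a canonical predecessor or lies in `δ(γω)`. -/
theorem pred_total {v : α} (hv : D.pe β e v) :
    (∃ u, D.predR β e u v) ∨ D.precN v (D.tgt D.top) := by
  obtain ⟨hfle, hd2⟩ := pe_dim2 hdim hv
  rcases (up2 hfle hd2).2 with ⟨t, ht, hvt⟩ | h
  · left
    obtain ⟨u, hut, hu⟩ := D.pencil_move_target hv hvt
    exact ⟨u, hu, hv, t, ht, (D.precP_unique hvt).symm, hut⟩
  · exact Or.inr h

/-- Existence of the minimum: every pencil member is `predR`-reachable from an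
element of `δ(γω)`. -/
theorem min_exists {d : α} (hd : D.pe β e d) :
    ∃ g, D.pe β e g ∧ D.precN g (D.tgt D.top) ∧ Relation.ReflTransGen (D.predR β e) g d := by
  induction d using (predR_wf (D := D) (β := β) (e := e)).induction with
  | _ d ih =>
    rcases pred_total hdim hd with ⟨u, hu⟩ | h
    · obtain ⟨g, h1, h2, h3⟩ := ih u hu hu.1
      exact ⟨g, h1, h2, h3.tail hu⟩
    · exact ⟨d, hd, h, Relation.ReflTransGen.refl⟩

/-- Comparability at codimension 3. -/
theorem comparable3 {d d' : α} (hd : D.pe β e d) (hd' : D.pe β e d') :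
    D.leA β e d d' ∨ D.leA β e d' d := by
  obtain ⟨g, hg, hgδ, hgd⟩ := min_exists hdim hd
  obtain ⟨g', hg', hg'δ, hg'd'⟩ := min_exists hdim hd'
  have : g' = g := D.pencil_src_unique hg' hg hg'δ hgδ
  subst this
  exact rt_compare hgd hg'd'

/-- There is no `triA`-step out of `γγω` at codimension 3. -/
theorem no_out_ggt : ∀ w, ¬ D.triA β e (D.tgt (D.tgt D.top)) w := by
  rintro w ⟨h1, h2, t, hN, hP⟩
  have htop1 : 1 ≤ D.dim D.top := by omega
  have hgt : D.precP (D.tgt D.top) D.top := D.tgt_precP _ htop1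
  have hdgt : D.dim (D.tgt D.top) = D.dim e + 2 := by
    have := D.dim_precP hgt; omega
  have hggt : D.precP (D.tgt (D.tgt D.top)) (D.tgt D.top) :=
    D.tgt_precP _ (by omega)
  have hdt : D.dim t = D.dim D.top - 1 := by
    have h3 := D.dim_precN hN
    have := D.dim_precP hggt
    omega
  have hft : D.fle t D.top := D.le_top t
  have : D.prc t D.top := D.fle_cover hft (by omega)
  rcases this with ht | ht
  · exact notP1P2 (by omega) ht hN hggt
  · have : t = D.tgt D.top := D.precP_unique ht
    subst this
    exact D.not_both _ _ ⟨hN, hggt⟩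

/-- Irreflexivity (no cycles) at codimension 3. -/
theorem irrefl3 : ∀ d, ¬ D.ltA β e d d := by
  intro d h
  obtain ⟨p, hp, σ, h0, hpd, hstep⟩ := transGen_chain h
  by_cases hggt : ∃ i < p, σ (i + 1) = D.tgt (D.tgt D.top)
  · obtain ⟨i, hi, hσ⟩ := hggt
    rcases Nat.lt_or_ge (i + 1) p with h2 | h2
    · exact no_out_ggt hdim _ (hσ ▸ hstep (i + 1) h2)
    · have hip : i + 1 = p := by omega
      have : σ 0 = D.tgt (D.tgt D.top) := by rw [h0, ← hpd, ← hip, hσ]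
      exact no_out_ggt hdim _ (this ▸ hstep 0 (by omega))
  · push_neg at hggt
    have hpred : ∀ i < p, D.predR β e (σ i) (σ (i + 1)) := by
      intro i hi
      obtain ⟨h1, h2, t, hN, hP⟩ := hstep i hi
      have hdt : D.dim t = D.dim D.top - 1 := by
        have := pe_dim h1
        have := D.dim_precN hN
        omega
      have : D.prc t D.top := D.fle_cover (D.le_top t) (by omega)
      rcases this with ht | ht
      · exact ⟨h1, h2, t, ht, (D.precP_unique hP).symm, hN⟩
      · exfalso
        have h3 : t = D.tgt D.top := D.precP_unique ht
        have h4 : σ (i + 1) = D.tgt (D.tgt D.top) := by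
          rw [D.precP_unique hP, h3]
        exact hggt i hi h4
    have := chain_transGen σ p hp hpred
    rw [h0, hpd] at this
    exact predR_acyclic d this

/-- (Π4-i): if `γγω` belongs to the `β`-pencil, the other pencil is empty. -/
theorem pi4i (hg : D.pe β e (D.tgt (D.tgt D.top))) : ∀ b, ¬ D.pe (!β) e b := by
  intro b hb
  have hdim' : D.dim D.top = D.dim e + 3 := hdim
  obtain ⟨b₀, hb₀, hb₀δ, -⟩ := min_exists (β := !β) hdim' hb
  have htop1 : 1 ≤ D.dim D.top := by omega
  have hgt : D.precP (D.tgt D.top) D.top := D.tgt_precP _ htop1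
  have hggt : D.precP (D.tgt (D.tgt D.top)) (D.tgt D.top) := by
    refine D.tgt_precP _ ?_
    have := D.dim_precP hgt; omega
  have : b₀ = D.tgt (D.tgt D.top) :=
    D.interval_unique (b₁ := !β) (a₁ := false) (b₂ := β) (a₂ := true)
      hb₀ hb₀δ hg hggt (by cases β <;> simp)
  exact D.not_both b₀ (D.tgt D.top) ⟨hb₀δ, this ▸ hggt⟩

/-- (Π4-ii): a nonempty pencil whose opposite pencil is empty culminates at `γγω`. -/
theorem pi4ii (hA : ∃ d, D.pe β e d) (hB : ∀ b, ¬ D.pe (!β) e b) :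
    D.pe β e (D.tgt (D.tgt D.top)) ∧
      ∀ d, D.pe β e d → D.leA β e d (D.tgt (D.tgt D.top)) := by
  have htop1 : 1 ≤ D.dim D.top := by omega
  have hgt : D.precP (D.tgt D.top) D.top := D.tgt_precP _ htop1
  have hdgt : 1 ≤ D.dim (D.tgt D.top) := by have := D.dim_precP hgt; omega
  have hggt : D.precP (D.tgt (D.tgt D.top)) (D.tgt D.top) := D.tgt_precP _ hdgt
  have part1 : D.pe β e (D.tgt (D.tgt D.top)) := by
    obtain ⟨d, hd⟩ := hA
    obtain ⟨d₀, hd₀, hd₀δ, -⟩ := min_exists hdim hd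
    obtain ⟨w, hwd, a', b', hew, hwx, hsig⟩ := D.partner (a := false) (b := β) hd₀ hd₀δ
    cases a' with
    | true =>
        have hw : w = D.tgt (D.tgt D.top) := D.precP_unique hwx
        have : b' = β := by cases β <;> cases b' <;> simp_all
        subst this
        exact hw ▸ hew
    | false =>
        exfalso
        have : b' = !β := by cases β <;> cases b' <;> simp_all
        exact hB w (this ▸ hew)
  refine ⟨part1, ?_⟩
  intro d
  induction d using (succR_wf_flip (D := D) (β := β) (e := e)).induction with
  | _ d ih =>
    intro hd
    obtain ⟨hfle, hd2⟩ := pe_dim2 hdim hd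
    rcases (up2 hfle hd2).1 with ⟨t, ht, hdt⟩ | h
    · rcases D.pencil_move_source hd hdt with hnext | ⟨w, -, -, hw⟩
      · have hsucc : D.succR β e d (D.tgt t) := ⟨hd, hnext, t, ht, hdt, rfl⟩
        exact Relation.ReflTransGen.head (succR_triA hsucc) (ih _ hsucc hnext)
      · exact absurd hw (hB w)
    · have : d = D.tgt (D.tgt D.top) := D.precP_unique h
      subst this
      exact Relation.ReflTransGen.refl

end Codim3b

end DFC

namespace DFC

section Local3

variable {α : Type*} [Fintype α] {D : DFC α} {β : Bool} {e : α}

/-- Local (restricted) codim-3 minimum: inside `cl W` with `dim W = dim e + 3`,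
below any pencil element `x ≤ W` there is a pencil element in `δ(γW)`. -/
theorem local_min {W x : α} (hW : D.dim W = D.dim e + 3) (heW : D.fle e W)
    (hx : D.pe β e x) (hxW : D.fle x W) :
    ∃ g, D.pe β e g ∧ D.precN g (D.tgt W) ∧ D.leA β e g x ∧ D.fle g W := by
  set D' := D.restrict W with hD'
  have hdim' : D'.dim D'.top = D'.dim ⟨e, heW⟩ + 3 := hW
  have hx' : D'.pe β ⟨e, heW⟩ ⟨x, hxW⟩ := (Restrict.pe_iff D W).mpr hx
  obtain ⟨g, hg, hgδ, hgx⟩ := min_exists hdim' hx'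
  have h1W : 1 ≤ D.dim W := by omega
  refine ⟨g.1, (Restrict.pe_iff D W).mp hg, ?_, ?_, g.2⟩
  · have := Restrict.tgt_top_val D W h1W
    rwa [← this]
  · exact Restrict.leA_val D W (rt_predR_leA hgx)

/-- Local (restricted) climb: inside `cl W`, if the opposite pencil does not meet
`cl W`, every pencil element `x ≤ W` satisfies `x ≤⁺ γγW ∈ A`. -/
theorem local_climb {W x : α} (hW : D.dim W = D.dim e + 3) (heW : D.fle e W)
    (hx : D.pe β e x) (hxW : D.fle x W)
    (hB : ∀ b, D.pe (!β) e b → ¬ D.fle b W) :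
    D.pe β e (D.tgt (D.tgt W)) ∧ D.leA β e x (D.tgt (D.tgt W)) := by
  set D' := D.restrict W with hD'
  have hdim' : D'.dim D'.top = D'.dim ⟨e, heW⟩ + 3 := hW
  have hx' : D'.pe β ⟨e, heW⟩ ⟨x, hxW⟩ := (Restrict.pe_iff D W).mpr hx
  have hB' : ∀ b, ¬ D'.pe (!β) ⟨e, heW⟩ b := by
    rintro ⟨b, hbW⟩ hb
    exact hB b ((Restrict.pe_iff D W).mp hb) hbW
  obtain ⟨h1, h2⟩ := pi4ii hdim' ⟨_, hx'⟩ hB'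
  have h1W : 1 ≤ D.dim W := by omega
  have hval : (D'.tgt (D'.tgt D'.top)).1 = D.tgt (D.tgt W) := by
    have e1 : (D'.tgt D'.top).1 = D.tgt W := Restrict.tgt_top_val D W h1W
    have e2 : 1 ≤ D.dim (D'.tgt D'.top).1 := by
      rw [e1]
      have := D.dim_precP (D.tgt_precP W h1W)
      omega
    rw [Restrict.tgt_val D W e2, e1]
  constructor
  · have := (Restrict.pe_iff D W).mp h1
    rwa [hval] at this
  · have := Restrict.leA_val D W (h2 _ hx')
    rwa [hval] at this

/-- Local (restricted) (Π4-i): if `γγW` is in the pencil, the opposite pencil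
does not meet `cl W`. -/
theorem local_pi4i {W : α} (hW : D.dim W = D.dim e + 3) (heW : D.fle e W)
    (hg : D.pe β e (D.tgt (D.tgt W))) :
    ∀ b, D.pe (!β) e b → ¬ D.fle b W := by
  intro b hb hbW
  set D' := D.restrict W with hD'
  have hdim' : D'.dim D'.top = D'.dim ⟨e, heW⟩ + 3 := hW
  have h1W : 1 ≤ D.dim W := by omega
  have hval : (D'.tgt (D'.tgt D'.top)).1 = D.tgt (D.tgt W) := by
    have e1 : (D'.tgt D'.top).1 = D.tgt W := Restrict.tgt_top_val D W h1W
    have e2 : 1 ≤ D.dim (D'.tgt D'.top).1 := by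
      rw [e1]
      have := D.dim_precP (D.tgt_precP W h1W)
      omega
    rw [Restrict.tgt_val D W e2, e1]
  have hg' : D'.pe β ⟨e, heW⟩ (D'.tgt (D'.tgt D'.top)) := by
    refine (Restrict.pe_iff D W).mpr ?_
    rwa [hval]
  exact pi4i hdim' hg' ⟨b, hbW⟩ ((Restrict.pe_iff D W).mpr hb)

end Local3

end DFC

namespace DFC

section PeakValley

variable {α : Type*} [Fintype α] {D : DFC α} {β : Bool} {e : α}

theorem tri_dim_eq {a b : α} (h : D.tri a b) : D.dim a = D.dim b := by
  obtain ⟨u, h1, h2⟩ := h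
  have := D.dim_precN h1
  have := D.dim_precP h2
  omega

theorem chain_dim_const {σ : ℕ → α} {p : ℕ}
    (hstep : ∀ i < p, D.tri (σ i) (σ (i + 1))) : ∀ i ≤ p, D.dim (σ i) = D.dim (σ 0) := by
  intro i
  induction i with
  | zero => intro _; rfl
  | succ i ih =>
      intro hi
      rw [← tri_dim_eq (hstep i (by omega)), ih (by omega)]

/-- The peak lemma: two pencil elements that are sources of two `≺⁺`-cofaces of a
common pencil element `w`, where the cofaces are `<⁺`-related, are `leA`-comparable
(in the direction opposite to that of the cofaces). -/
theorem peak {w t t' x x' : α} (hw : D.pe β e w)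
    (hx : D.pe β e x) (hx' : D.pe β e x')
    (hxt : D.precN x t) (hwt : D.precP w t)
    (hxt' : D.precN x' t') (hwt' : D.precP w t')
    (htt' : Relation.TransGen D.tri t t') :
    D.leA β e x' x := by
  obtain ⟨p, hp, σ, h0, hpt, hstep⟩ := transGen_chain htt'
  have hdimt : D.dim t = D.dim e + 2 := by
    have := pe_dim hw
    have := D.dim_precP hwt
    omega
  have hdimσ : ∀ i ≤ p, D.dim (σ i) = D.dim e + 2 := by
    intro i hi
    rw [chain_dim_const hstep i hi, h0, hdimt]
  have inv : ∀ i < p, ∃ g, D.pe β e g ∧ D.precN g (σ (i + 1)) ∧ D.leA β e g x := by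
    intro i
    induction i with
    | zero =>
        intro h0p
        obtain ⟨W, hσW, hσ'W⟩ := hstep 0 h0p
        have hdW : D.dim W = D.dim e + 3 := by
          have := D.dim_precN hσW
          have := hdimσ 0 (by omega)
          omega
        have hxW : D.fle x W := by
          refine Relation.ReflTransGen.trans (D.fle_of_prc (Or.inl ?_))
            (D.fle_of_prc (Or.inl hσW))
          rwa [h0]
        have heW : D.fle e W := Relation.ReflTransGen.trans (D.fle_of_sprec hx) hxW
        obtain ⟨g, hg, hgδ, hgx, -⟩ := local_min hdW heW hx hxW
        refine ⟨g, hg, ?_, hgx⟩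
        rw [D.precP_unique hσ'W]
        exact hgδ
    | succ i ih =>
        intro hip
        obtain ⟨g, hg, hgδ, hgx⟩ := ih (by omega)
        obtain ⟨W, hσW, hσ'W⟩ := hstep (i + 1) hip
        have hdW : D.dim W = D.dim e + 3 := by
          have := D.dim_precN hσW
          have := hdimσ (i + 1) (by omega)
          omega
        have hgW : D.fle g W :=
          Relation.ReflTransGen.trans (D.fle_of_prc (Or.inl hgδ))
            (D.fle_of_prc (Or.inl hσW))
        have heW : D.fle e W := Relation.ReflTransGen.trans (D.fle_of_sprec hg) hgW
        obtain ⟨g', hg', hg'δ, hg'g, -⟩ := local_min hdW heW hg hgW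
        refine ⟨g', hg', ?_, hg'g.trans hgx⟩
        rw [D.precP_unique hσ'W]
        exact hg'δ
  obtain ⟨g, hg, hgδ, hgx⟩ := inv (p - 1) (by omega)
  have : σ (p - 1 + 1) = t' := by rw [show p - 1 + 1 = p from by omega, hpt]
  rw [this] at hgδ
  have : g = x' := D.pencil_src_unique hg hx' hgδ hxt'
  exact this ▸ hgx

/-- The valley lemma: two pencil elements that are targets of two `≺⁻`-cofaces of a
common pencil element `y`, where the cofaces are `<⁺`-related, are `leA`-comparable
(in the same direction as the cofaces). -/
theorem valley {y t t' u v : α} (hy : D.pe β e y)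
    (hu : D.pe β e u) (hv : D.pe β e v)
    (hyt : D.precN y t) (hut : D.precP u t)
    (hyt' : D.precN y t') (hvt' : D.precP v t')
    (htt' : Relation.TransGen D.tri t t') :
    D.leA β e u v := by
  obtain ⟨p, hp, σ, h0, hpt, hstep⟩ := transGen_chain htt'
  have hdimt : D.dim t = D.dim e + 2 := by
    have := pe_dim hy
    have := D.dim_precN hyt
    omega
  have hdimσ : ∀ i ≤ p, D.dim (σ i) = D.dim e + 2 := by
    intro i hi
    rw [chain_dim_const hstep i hi, h0, hdimt]
  choose Wit hW1 hW2 using hstep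
  -- no opposite-pencil element lies under any witness
  have noB : ∀ i (hi : i < p), ¬ ∃ b, D.pe (!β) e b ∧ D.fle b (Wit i hi) := by
    -- forward propagation to the last witness, then contradiction
    have prop : ∀ i (hi : i < p), (∃ b, D.pe (!β) e b ∧ D.fle b (Wit i hi)) →
        ∀ j (hj : j < p), i ≤ j → ∃ b, D.pe (!β) e b ∧ D.fle b (Wit j hj) := by
      intro i hi hQ j
      induction j with
      | zero =>
          intro hj hij
          have : i = 0 := by omega
          subst this
          exact hQ
      | succ j ih =>
          intro hj hij
          rcases Nat.lt_or_ge i (j + 1) with hlt | hge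
          · have hQj := ih (by omega) (by omega)
            obtain ⟨b, hb, hbW⟩ := hQj
            have hdW : D.dim (Wit j (by omega)) = D.dim e + 3 := by
              have := D.dim_precN (hW1 j (by omega))
              have := hdimσ j (by omega)
              omega
            have heW : D.fle e (Wit j (by omega)) :=
              Relation.ReflTransGen.trans (D.fle_of_sprec hb) hbW
            obtain ⟨g, hg, hgδ, -, -⟩ :=
              local_min (β := !β) hdW heW hb hbW
            refine ⟨g, hg, ?_⟩
            have h1 : σ (j + 1) = D.tgt (Wit j (by omega)) := D.precP_unique (hW2 j (by omega))
            have h2 : D.precN g (σ (j + 1)) := by rwa [h1]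
            exact Relation.ReflTransGen.trans (D.fle_of_prc (Or.inl h2))
              (D.fle_of_prc (Or.inl (hW1 (j + 1) hj)))
          · have : i = j + 1 := by omega
            subst this
            exact hQ
    rintro i hi hQ
    obtain ⟨b, hb, hbW⟩ := prop i hi hQ (p - 1) (by omega) (by omega)
    -- contradiction via local_pi4i at the last witness
    have hplast : p - 1 < p := by omega
    have h1 : σ (p - 1 + 1) = t' := by rw [show p - 1 + 1 = p from by omega, hpt]
    have htgtW : D.tgt (Wit (p - 1) hplast) = t' := by
      rw [← h1]; exact (D.precP_unique (hW2 (p - 1) hplast)).symm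
    have hdW : D.dim (Wit (p - 1) hplast) = D.dim e + 3 := by
      have := D.dim_precN (hW1 (p - 1) hplast)
      have := hdimσ (p - 1) (by omega)
      omega
    have hvW : D.pe β e (D.tgt (D.tgt (Wit (p - 1) hplast))) := by
      rw [htgtW, ← D.precP_unique hvt']
      exact hv
    have heW : D.fle e (Wit (p - 1) hplast) :=
      Relation.ReflTransGen.trans (D.fle_of_sprec hb) hbW
    exact local_pi4i hdW heW hvW b hb hbW
  -- the climb
  have climb : ∀ i ≤ p, D.pe β e (D.tgt (σ i)) ∧ D.leA β e u (D.tgt (σ i)) := by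
    intro i
    induction i with
    | zero =>
        intro _
        rw [h0, ← D.precP_unique hut]
        exact ⟨hu, Relation.ReflTransGen.refl⟩
    | succ i ih =>
        intro hi
        obtain ⟨hcur, hle⟩ := ih (by omega)
        have hip : i < p := by omega
        have hdσ : D.dim (σ i) = D.dim e + 2 := hdimσ i (by omega)
        have hdW : D.dim (Wit i hip) = D.dim e + 3 := by
          have := D.dim_precN (hW1 i hip)
          omega
        have hcurW : D.fle (D.tgt (σ i)) (Wit i hip) := by
          refine Relation.ReflTransGen.trans
            (D.fle_of_prc (Or.inr (D.tgt_precP (σ i) (by omega))))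
            (D.fle_of_prc (Or.inl (hW1 i hip)))
        have heW : D.fle e (Wit i hip) :=
          Relation.ReflTransGen.trans (D.fle_of_sprec hcur) hcurW
        have hBW : ∀ b, D.pe (!β) e b → ¬ D.fle b (Wit i hip) := by
          intro b hb hbW
          exact noB i hip ⟨b, hb, hbW⟩
        obtain ⟨h1, h2⟩ := local_climb hdW heW hcur hcurW hBW
        have htW : D.tgt (Wit i hip) = σ (i + 1) := (D.precP_unique (hW2 i hip)).symm
        rw [htW] at h1 h2
        exact ⟨h1, hle.trans h2⟩
  obtain ⟨-, hfin⟩ := climb p (le_refl _)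
  rw [hpt, ← D.precP_unique hvt'] at hfin
  exact hfin

end PeakValley

end DFC

namespace DFC

section Master

variable {α : Type*} [Fintype α]

/-- The full pencil package: comparability, acyclicity, and (in codimension `≥ 3`)
existence, below any pencil element, of a pencil element inside `cl(γω)`. -/
def Pack (D : DFC α) (e : α) (β : Bool) : Prop :=
  (∀ d d', D.pe β e d → D.pe β e d' → D.leA β e d d' ∨ D.leA β e d' d) ∧
  (∀ d, ¬ D.ltA β e d d) ∧
  (D.dim e + 3 ≤ D.dim D.top → ∀ d, D.pe β e d →
     ∃ g, D.pe β e g ∧ D.fle g (D.tgt D.top) ∧ D.leA β e g d)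

theorem leA_cases {D : DFC α} {β : Bool} {e a b : α} (h : D.leA β e a b) :
    a = b ∨ D.ltA β e a b := by
  rcases Relation.reflTransGen_iff_eq_or_transGen.mp h with h | h
  · exact Or.inl h.symm
  · exact Or.inr h

/-- From the package (codim `≥ 3`), the pencil has a uniform minimum in `cl(γω)`. -/
theorem pack_min {D : DFC α} {e : α} {β : Bool} (hP : D.Pack e β)
    (hk3 : D.dim e + 3 ≤ D.dim D.top) {d₀ : α} (hd₀ : D.pe β e d₀) :
    ∃ m, D.pe β e m ∧ D.fle m (D.tgt D.top) ∧ ∀ t, D.pe β e t → D.leA β e m t := by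
  obtain ⟨hcmp, hirr, hmin⟩ := hP
  have hwf : WellFounded (D.ltA β e) := by
    haveI : IsTrans α (D.ltA β e) := ⟨fun _ _ _ => Relation.TransGen.trans⟩
    haveI : IsIrrefl α (D.ltA β e) := ⟨hirr⟩
    exact Finite.wellFounded_of_trans_of_irrefl _
  obtain ⟨m, hm, hmmin⟩ := hwf.has_min {t | D.pe β e t} ⟨d₀, hd₀⟩
  have hall : ∀ t, D.pe β e t → D.leA β e m t := by
    intro t ht
    rcases hcmp m t hm ht with h | h
    · exact h
    · rcases leA_cases h with rfl | h
      · exact Relation.ReflTransGen.refl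
      · exact absurd h (hmmin t ht)
  obtain ⟨g, hg, hgfle, hgm⟩ := hmin hk3 m hm
  rcases leA_cases (hall g hg) with rfl | h
  · exact ⟨m, hm, hgfle, hall⟩
  · exact absurd (Relation.TransGen.trans_right hgm h) (hirr g)

/-- the package in codimension `≤ 2`. -/
theorem pack_small (D : DFC α) (e : α) (β : Bool) (h : D.dim D.top ≤ D.dim e + 2) :
    D.Pack e β := by
  refine ⟨?_, ?_, by omega⟩
  · intro d d' hd hd'
    by_cases hdd : d = d'
    · exact Or.inl (hdd ▸ Relation.ReflTransGen.refl)
    · have h1 : D.dim d = D.dim e + 1 := pe_dim hd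
      have h2 : D.dim d' = D.dim e + 1 := pe_dim hd'
      have hfd : D.fle d D.top := D.le_top d
      have hfd' : D.fle d' D.top := D.le_top d'
      have hd1 := D.fle_dim hfd
      rcases Nat.lt_or_ge (D.dim D.top) (D.dim e + 2) with htop | htop
      · exfalso
        have e1 : d = D.top := D.fle_eq hfd (by omega)
        have e2 : d' = D.top := D.fle_eq hfd' (by omega)
        exact hdd (e1.trans e2.symm)
      · have htop2 : D.dim D.top = D.dim e + 2 := by omega
        obtain ⟨s, hs⟩ := D.prc_sprec (D.fle_cover hfd (by omega))
        obtain ⟨s', hs'⟩ := D.prc_sprec (D.fle_cover hfd' (by omega))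
        rcases D.pencil_step hd hd' hdd hs hs' with h | h
        · exact Or.inl (Relation.ReflTransGen.single ⟨hd, hd', h⟩)
        · exact Or.inr (Relation.ReflTransGen.single ⟨hd', hd, h⟩)
  · intro d hltA
    obtain ⟨p, hp, σ, h0, hpd, hstep⟩ := transGen_chain hltA
    have key : ∀ i < p, D.precN (σ i) D.top ∧ D.precP (σ (i + 1)) D.top := by
      intro i hi
      obtain ⟨h1, h2, t, hN, hP⟩ := hstep i hi
      have hdσ : D.dim (σ i) = D.dim e + 1 := pe_dim h1
      have hdt : D.dim t = D.dim e + 2 := by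
        have := D.dim_precN hN
        omega
      have hft : D.fle t D.top := D.le_top t
      have : t = D.top := D.fle_eq hft (by have := D.fle_dim hft; omega)
      subst this
      exact ⟨hN, hP⟩
    have ha := (key 0 (by omega)).1
    have hb := (key (p - 1) (by omega)).2
    rw [show p - 1 + 1 = p from by omega, hpd, ← h0] at hb
    exact D.not_both _ _ ⟨ha, hb⟩

/-- the package in codimension exactly 3. -/
theorem pack3 (D : DFC α) (e : α) (β : Bool) (hdim : D.dim D.top = D.dim e + 3) :
    D.Pack e β := by
  refine ⟨fun d d' hd hd' => comparable3 hdim hd hd', irrefl3 hdim, ?_⟩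
  intro _ d hd
  obtain ⟨g, h1, h2, h3⟩ := min_exists hdim hd
  exact ⟨g, h1, D.fle_of_prc (Or.inl h2), rt_predR_leA h3⟩

end Master

end DFC

namespace DFC

universe u

section Big

variable {α : Type u} [Fintype α]

theorem pack_big (D : DFC α) (e : α) (β : Bool)
    (hk : D.dim e + 4 ≤ D.dim D.top)
    (inner : ∀ e' β', D.dim e < D.dim e' → D.Pack e' β')
    (outer : ∀ {γ : Type u} [Fintype γ] (D' : DFC γ),
      D'.dim D'.top < D.dim D.top → ∀ (e' : γ) (β' : Bool), D'.Pack e' β') :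
    D.Pack e β := by
  have htop1 : 1 ≤ D.dim D.top := by omega
  have hgt : D.precP (D.tgt D.top) D.top := D.tgt_precP _ htop1
  have hdgtop : D.dim D.top = D.dim (D.tgt D.top) + 1 := D.dim_precP hgt
  -- ## Part 1 : acyclicity
  have stepP : ∀ z, D.pe β e z → D.ltA β e z z →
      ∃ z' m, D.pe β e z' ∧ D.ltA β e z' z' ∧ D.precN z' m ∧ D.precP z m ∧
        D.fle m (D.tgt D.top) := by
    intro z hz hzz
    obtain ⟨w, hzw, hwz⟩ := Relation.TransGen.tail'_iff.mp hzz
    obtain ⟨hpw, -, t₀, hwt₀, hzt₀⟩ := hwz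
    have hzpack : D.Pack z true := inner z true (by have := pe_dim hz; omega)
    have hk3z : D.dim z + 3 ≤ D.dim D.top := by have := pe_dim hz; omega
    have ht₀ : D.pe true z t₀ := hzt₀
    obtain ⟨m, hm, hmfle, hmmin⟩ := pack_min hzpack hk3z ht₀
    have hzm : D.precP z m := hm
    obtain ⟨z', hz'm, hz'⟩ := D.pencil_move_target hz hzm
    have hwz' : D.leA β e w z' := by
      rcases leA_cases (hmmin t₀ ht₀) with heq | hlt
      · exact (D.pencil_src_unique hpw hz' hwt₀ (heq ▸ hz'm)) ▸ Relation.ReflTransGen.refl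
      · refine peak hz hz' hpw hz'm hzm hwt₀ hzt₀ ?_
        exact Relation.TransGen.mono (r := D.triA true z) (p := D.tri) (fun _ _ h => h.2.2) _ _ hlt
    have htriz' : D.triA β e z' z := ⟨hz', hz, m, hz'm, hzm⟩
    have hz'z' : D.ltA β e z' z' :=
      Relation.TransGen.head' htriz' (hzw.trans hwz')
    exact ⟨z', m, hz', hz'z', hz'm, hzm, hmfle⟩
  have hirr : ∀ d, ¬ D.ltA β e d d := by
    intro d hdd
    have hd : D.pe β e d := by
      obtain ⟨p, hp, σ, h0, hpd, hstep⟩ := transGen_chain hdd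
      have := (hstep 0 hp).1
      rwa [h0] at this
    let I : α → Prop := fun z => D.pe β e z ∧ D.ltA β e z z
    have step : ∀ z : {z // I z}, ∃ z' : {z // I z}, ∃ m,
        D.precN z'.1 m ∧ D.precP z.1 m ∧ D.fle m (D.tgt D.top) := by
      rintro ⟨z, hz1, hz2⟩
      obtain ⟨z', m, h1, h2, h3, h4, h5⟩ := stepP z hz1 hz2
      exact ⟨⟨z', h1, h2⟩, m, h3, h4, h5⟩
    let nxt : {z // I z} → {z // I z} := fun z => (step z).choose
    let f : ℕ → {z // I z} := fun i => nxt^[i] ⟨d, hd, hdd⟩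
    have hfs : ∀ i, ∃ m, D.precN (f (i + 1)).1 m ∧ D.precP (f i).1 m ∧
        D.fle m (D.tgt D.top) := by
      intro i
      have hit : f (i + 1) = nxt (f i) := Function.iterate_succ_apply' nxt i _
      rw [hit]
      exact (step (f i)).choose_spec
    have hmem : ∀ i, 1 ≤ i → D.fle (f i).1 (D.tgt D.top) := by
      intro i hi
      obtain ⟨m, h1, h2, h3⟩ := hfs (i - 1)
      rw [show i - 1 + 1 = i from by omega] at h1
      exact Relation.ReflTransGen.trans (D.fle_of_prc (Or.inl h1)) h3
    have main : ∀ a b : ℕ, 1 ≤ a → a < b → (f a).1 = (f b).1 → False := by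
      intro a b ha hab hfab
      have heT : D.fle e (D.tgt D.top) :=
        Relation.ReflTransGen.trans (D.fle_of_sprec (f a).2.1) (hmem a ha)
      set D' := D.restrict (D.tgt D.top) with hD'
      have hmem' : ∀ r, D.fle (f (b - min r (b - a))).1 (D.tgt D.top) := by
        intro r
        exact hmem _ (by omega)
      let τ : ℕ → {x // D.fle x (D.tgt D.top)} :=
        fun r => ⟨(f (b - min r (b - a))).1, hmem' r⟩
      have hτsteps : ∀ r < b - a, D'.triA β ⟨e, heT⟩ (τ r) (τ (r + 1)) := by
        intro r hr
        have hidx : b - min r (b - a) = (b - min (r + 1) (b - a)) + 1 := by omega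
        obtain ⟨m, h1, h2, h3⟩ := hfs (b - min (r + 1) (b - a))
        refine ⟨(Restrict.pe_iff D _).mpr ?_, (Restrict.pe_iff D _).mpr (f _).2.1,
          ⟨⟨m, h3⟩, ?_, ?_⟩⟩
        · exact (f _).2.1
        · show D.precN (τ r).1 m
          simp only [τ]
          rw [hidx]
          exact h1
        · exact h2
      have hchain := chain_transGen τ (b - a) (by omega) hτsteps
      have hτeq : τ 0 = τ (b - a) := by
        apply Subtype.ext
        show (f (b - min 0 (b - a))).1 = (f (b - min (b - a) (b - a))).1
        simp only [Nat.min_self, Nat.sub_self]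
        rw [show b - min 0 (b - a) = b from by omega, show b - (b - a) = a from by omega]
        exact hfab.symm
      rw [← hτeq] at hchain
      have hP' := outer D' (by 
        show D.dim (D.tgt D.top) < D.dim D.top
        omega) ⟨e, heT⟩ β
      exact hP'.2.1 (τ 0) hchain
    obtain ⟨i, j, hij, hfij⟩ := Fintype.exists_ne_map_eq_of_card_lt
      (fun i : Fin (Fintype.card α + 1) => (f (i.1 + 1)).1) (by simp)
    have hij' : i.1 ≠ j.1 := fun h => hij (Fin.ext h)
    rcases Nat.lt_or_ge i.1 j.1 with h | h
    · exact main (i.1 + 1) (j.1 + 1) (by omega) (by omega) hfij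
    · exact main (j.1 + 1) (i.1 + 1) (by omega) (by omega) hfij.symm
  -- ## Part 2 : minimum inside `cl (γω)`
  have hPi3 : ∀ d, D.pe β e d →
      ∃ g, D.pe β e g ∧ D.fle g (D.tgt D.top) ∧ D.leA β e g d := by
    have hwfF : WellFounded (Function.swap
        (fun c c' => D.precN c D.top ∧ D.precN c' D.top ∧ D.precN (D.tgt c) c')) := by
      haveI : IsTrans α (Relation.TransGen (Function.swap
          (fun c c' => D.precN c D.top ∧ D.precN c' D.top ∧ D.precN (D.tgt c) c'))) :=
        ⟨fun _ _ _ => Relation.TransGen.trans⟩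
      haveI : IsIrrefl α (Relation.TransGen (Function.swap
          (fun c c' => D.precN c D.top ∧ D.precN c' D.top ∧ D.precN (D.tgt c) c'))) :=
        ⟨fun c hc => D.flow_acyclic D.top c (Relation.transGen_swap.mp hc)⟩
      exact Subrelation.wf (fun h => Relation.TransGen.single h)
        (Finite.wellFounded_of_trans_of_irrefl _)
    have descend : ∀ c, D.precN c D.top → ∀ x, D.pe β e x → D.fle x c →
        ∃ h, D.pe β e h ∧ D.fle h (D.tgt D.top) ∧ D.leA β e h x := by
      intro c
      induction c using hwfF.induction with
      | _ c ih =>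
        intro hc x hx hxc
        have hdc : D.dim D.top = D.dim c + 1 := D.dim_precN hc
        have heC : D.fle e c := Relation.ReflTransGen.trans (D.fle_of_sprec hx) hxc
        set D'' := D.restrict c with hD''
        have hP'' := outer D'' (by show D.dim c < D.dim D.top; omega) ⟨e, heC⟩ β
        obtain ⟨g'', hg'', hg''fle, hg''le⟩ := hP''.2.2
          (by show D.dim e + 3 ≤ D.dim c; omega) ⟨x, hxc⟩ ((Restrict.pe_iff D c).mpr hx)
        have hg : D.pe β e g''.1 := (Restrict.pe_iff D c).mp hg''
        have h1c : 1 ≤ D.dim c := by omega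
        have hgfle : D.fle g''.1 (D.tgt c) := by
          have := Restrict.fle_val D c hg''fle
          rwa [Restrict.tgt_top_val D c h1c] at this
        have hgle : D.leA β e g''.1 x := Restrict.leA_val D c hg''le
        -- the flow pairing at `c`
        obtain ⟨w, hwc, a', b', h1, h2, hsig⟩ :=
          D.partner (a := false) (b := true) (D.tgt_precP c h1c) hc
        have hab : a' = b' := by tauto
        cases a' with
        | false =>
            subst hab
            obtain ⟨h, hh, hhfle, hhg⟩ := ih w ⟨hc, h2, h1⟩ h2 g''.1 hg
              (Relation.ReflTransGen.trans hgfle (D.fle_of_prc (Or.inl h1)))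
            exact ⟨h, hh, hhfle, hhg.trans hgle⟩
        | true =>
            subst hab
            have hw : w = D.tgt D.top := D.precP_unique h2
            refine ⟨g''.1, hg, ?_, hgle⟩
            refine Relation.ReflTransGen.trans hgfle (D.fle_of_prc (Or.inr ?_))
            rwa [← hw]
    intro d hd
    have hdd : D.dim d = D.dim e + 1 := pe_dim hd
    rcases Relation.ReflTransGen.cases_tail (D.le_top d) with h | ⟨c, hdc, hcw⟩
    · exfalso
      have : D.dim D.top = D.dim d := by rw [h]
      omega
    · rcases hcw with hN | hP
      · exact descend c hN d hd hdc
      · have : c = D.tgt D.top := D.precP_unique hP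
        exact ⟨d, hd, this ▸ hdc, Relation.ReflTransGen.refl⟩
  -- ## Part 3 : comparability
  have hwfUp : WellFounded (fun a b => D.ltA β e b a) := by
    haveI : IsTrans α (fun a b => D.ltA β e b a) :=
      ⟨fun _ _ _ h1 h2 => Relation.TransGen.trans h2 h1⟩
    haveI : IsIrrefl α (fun a b => D.ltA β e b a) := ⟨hirr⟩
    exact Finite.wellFounded_of_trans_of_irrefl _
  have straighten : ∀ y d d', D.leA β e y d → D.leA β e y d' →
      (D.leA β e d d' ∨ D.leA β e d' d) := by
    intro y
    induction y using hwfUp.induction with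
    | _ y ih =>
      intro d d' hyd hyd'
      rcases Relation.ReflTransGen.cases_head hyd with rfl | ⟨u, hyu, hud⟩
      · exact Or.inl hyd'
      rcases Relation.ReflTransGen.cases_head hyd' with rfl | ⟨v, hyv, hvd'⟩
      · exact Or.inr hyd
      by_cases huv : u = v
      · exact ih u (Relation.TransGen.single hyu) d d' hud (huv ▸ hvd')
      obtain ⟨hpy, hpu, t, hyt, hut⟩ := hyu
      obtain ⟨-, hpv, t', hyt', hvt'⟩ := hyv
      have htt : t ≠ t' := fun h => huv (by
        rw [D.precP_unique hut, D.precP_unique hvt', h])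
      have hypack : D.Pack y false := inner y false (by have := pe_dim hpy; omega)
      rcases hypack.1 t t' hyt hyt' with h | h
      · rcases leA_cases h with heq | hlt
        · exact absurd heq htt
        · have huvle : D.leA β e u v := valley hpy hpu hpv hyt hut hyt' hvt'
            (Relation.TransGen.mono (r := D.triA false y) (p := D.tri) (fun _ _ hh => hh.2.2) _ _ hlt)
          exact ih u (Relation.TransGen.single ⟨hpy, hpu, t, hyt, hut⟩) d d'
            hud (huvle.trans hvd')
      · rcases leA_cases h with heq | hlt
        · exact absurd heq.symm htt
        · have hvule : D.leA β e v u := valley hpy hpv hpu hyt' hvt' hyt hut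
            (Relation.TransGen.mono (r := D.triA false y) (p := D.tri) (fun _ _ hh => hh.2.2) _ _ hlt)
          exact ih v (Relation.TransGen.single ⟨hpy, hpv, t', hyt', hvt'⟩) d d'
            (hvule.trans hud) hvd'
  refine ⟨?_, hirr, fun _ => hPi3⟩
  intro d d' hd hd'
  obtain ⟨h, hh, hhfle, hhd⟩ := hPi3 d hd
  obtain ⟨h', hh', hh'fle, hh'd'⟩ := hPi3 d' hd'
  have heT : D.fle e (D.tgt D.top) :=
    Relation.ReflTransGen.trans (D.fle_of_sprec hh) hhfle
  set D' := D.restrict (D.tgt D.top) with hD'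
  have hP' := outer D' (by show D.dim (D.tgt D.top) < D.dim D.top; omega) ⟨e, heT⟩ β
  rcases hP'.1 ⟨h, hhfle⟩ ⟨h', hh'fle⟩ ((Restrict.pe_iff D _).mpr hh)
      ((Restrict.pe_iff D _).mpr hh') with hc | hc
  · have hhh' : D.leA β e h h' := Restrict.leA_val D _ hc
    exact straighten h d d' hhd (hhh'.trans hh'd')
  · have hh'h : D.leA β e h' h := Restrict.leA_val D _ hc
    exact straighten h' d d' (hh'h.trans hhd) hh'd'

end Big

end DFC

namespace DFC

universe v

theorem master : ∀ (n : ℕ) {α : Type v} [Fintype α] (D : DFC α),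
    D.dim D.top ≤ n → ∀ (e : α) (β : Bool), D.Pack e β := by
  intro n
  induction n with
  | zero =>
      intro α _ D hn e β
      exact pack_small D e β (by omega)
  | succ n ihn =>
      intro α _ D hn e β
      have inner : ∀ K (e' : α) (β' : Bool), D.dim D.top ≤ D.dim e' + K →
          D.Pack e' β' := by
        intro K
        induction K with
        | zero =>
            intro e' β' h
            exact pack_small D e' β' (by omega)
        | succ K ihK =>
            intro e' β' h
            rcases Nat.lt_or_ge (D.dim D.top) (D.dim e' + 3) with h3 | h3
            · exact pack_small D e' β' (by omega)
            rcases Nat.lt_or_ge (D.dim D.top) (D.dim e' + 4) with h4 | h4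
            · exact pack3 D e' β' (by omega)
            · refine pack_big D e' β' h4 ?_ ?_
              · intro e'' β'' he''
                exact ihK e'' β'' (by omega)
              · intro γ _ D' hD' e'' β''
                exact ihn D' (by omega) e'' β''
      exact inner (D.dim D.top) e β (by omega)

end DFC


/-- pencil linearity: for every face `e` and sign `β`, the set
`{d : e ≺^β d}` is linearly ordered by `<⁺`. -/
theorem dfc_pencil_linearity {α : Type*} [Fintype α] (D : DFC α) (β : Bool) (e : α) :
    ∀ d d', sprec D.precN D.precP β e d → sprec D.precN D.precP β e d' → d ≠ d' →
      D.ltP d d' ∨ D.ltP d' d := by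
  intro d d' hd hd' hne
  have hP := DFC.master (D.dim D.top) D (le_refl _) e β
  have conv : ∀ {a b : α}, D.leA β e a b → a ≠ b → D.ltP a b := by
    intro a b h hab
    rcases DFC.leA_cases h with rfl | h
    · exact absurd rfl hab
    · exact Relation.TransGen.mono (r := D.triA β e) (p := D.tri) (fun _ _ hh => hh.2.2) _ _ h
  rcases hP.1 d d' hd hd' with h | h
  · exact Or.inl (conv h hne)
  · exact Or.inr (conv h (Ne.symm hne))
end

section
/- Backward cell path: let C be a dendritic face complex and suppose e ≺⁻ d ≺⁻ c in C. Then there exist m ≥ 0, a face e' with e' ≺⁻ γ(c), and faces t₁, …, t_m ∈ δ(c) such that either m = 0 and e' = e, or m ≥ 1 and e' ≺⁻ t₁, γ(t_i) ≺⁻ t_{i+1} for all 1 ≤ i < m, and γ(t_m) = e (an upper path from a source e' of γ(c) to e all of whose witnessing faces lie in δ(c)). -/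
section
variable {α : Type*} [Fintype α]

theorem dfc_chain_inj (D : DFC α) (c : α) (k : ℕ) (f : ℕ → α)
    (hf : ∀ j ≤ k, D.precN (f j) c)
    (hchain : ∀ j < k, D.precN (D.tgt (f (j+1))) (f j)) :
    ∀ i ≤ k, ∀ j ≤ k, f i = f j → i = j := by
  have key : ∀ i j, i < j → j ≤ k → f i ≠ f j := by
    intro i j hij hjk hEq
    set p := j - i with hp
    apply D.no_cycle c p (by omega) (fun l => f (i + l - 1))
    · intro l hl1 hlp
      exact hf (i + l - 1) (by omega)
    · show f (i + (p + 1) - 1) = f (i + 1 - 1)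
      have h1 : i + (p + 1) - 1 = j := by omega
      have h2 : i + 1 - 1 = i := by omega
      rw [h1, h2]; exact hEq.symm
    · intro l hl1 hlp
      have h1 : i + (l + 1) - 1 = (i + l - 1) + 1 := by omega
      rw [h1]
      exact hchain (i + l - 1) (by omega)
  intro i hi j hj hEq
  rcases lt_trichotomy i j with h | h | h
  · exact absurd hEq (key i j h hj)
  · exact h
  · exact absurd hEq.symm (key j i h hi)

theorem dfc_main (D : DFC α) (c : α) :
    ∀ N k (f : ℕ → α) (e : α), Fintype.card α ≤ k + N →
      (∀ j ≤ k, D.precN (f j) c) →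
      (∀ j < k, D.precN (D.tgt (f (j+1))) (f j)) →
      D.precN e (f k) →
      ∃ (m : ℕ) (e' : α) (ts : ℕ → α),
        D.precN e' (D.tgt c) ∧
        (∀ i, 1 ≤ i → i ≤ m → D.precN (ts i) c) ∧
        ((m = 0 ∧ e' = e) ∨
          (1 ≤ m ∧ D.precN e' (ts 1) ∧
            (∀ i, 1 ≤ i → i < m → D.precN (D.tgt (ts i)) (ts (i + 1))) ∧
            D.tgt (ts m) = e)) := by
  intro N
  induction N with
  | zero =>
    intro k f e hN hf hchain he
    have hinj : Function.Injective (fun i : Fin (k+1) => f i) := by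
      intro i j hij
      exact Fin.ext (dfc_chain_inj D c k f hf hchain i (by omega) j (by omega) hij)
    have hcard : k + 1 ≤ Fintype.card α := by
      simpa using Fintype.card_le_of_injective _ hinj
    exact absurd hcard (by omega)
  | succ N ih =>
    intro k f e hN hf hchain he
    obtain ⟨y', ⟨hne, a', b', hb', ha', hiff⟩, -⟩ :=
      D.thin false false c (f k) e he (hf k le_rfl)
    have hab : a' ≠ b' := hiff.mp rfl
    cases a' with
    | true =>
      -- y' ≺⁺ c, so y' = γ c, and e ≺⁻ y' (since b' = false)
      have hb'f : b' = false := by cases b' with | false => rfl | true => exact absurd rfl hab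
      subst hb'f
      have hy' : y' = D.tgt c := D.precP_unique ha'
      refine ⟨0, e, fun _ => c, ?_, ?_, Or.inl ⟨rfl, rfl⟩⟩
      · rw [← hy']; exact hb'
      · intro i h1 h2; omega
    | false =>
      -- y' ≺⁻ c, e ≺⁺ y' so e = γ y'
      have hb't : b' = true := by cases b' with | true => rfl | false => exact absurd rfl hab
      subst hb't
      have hey : e = D.tgt y' := D.precP_unique hb'
      have hdim : 1 ≤ D.dim y' := by
        have := D.dim_precP hb'; omega
      obtain ⟨e₂, he₂⟩ := D.src_exists y' hdim
      set g : ℕ → α := fun j => if j ≤ k then f j else y' with hg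
      have hgk : ∀ j ≤ k, g j = f j := by intro j hj; show (if j ≤ k then f j else y') = f j; rw [if_pos hj]
      have hgk1 : g (k+1) = y' := by show (if k+1 ≤ k then f (k+1) else y') = y'; rw [if_neg (by omega)]
      obtain ⟨m, e', ts, hE, hTs, hcase⟩ := ih (k+1) g e₂ (by omega)
        (by
          intro j hj
          rcases Nat.lt_or_ge j (k+1) with h | h
          · rw [hgk j (by omega)]; exact hf j (by omega)
          · have : j = k + 1 := by omega
            rw [this, hgk1]; exact ha')
        (by
          intro j hj
          rcases Nat.lt_or_ge j k with h | h
          · rw [hgk (j+1) (by omega), hgk j (by omega)]; exact hchain j h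
          · have hjk : j = k := by omega
            rw [hjk, hgk1, hgk k le_rfl, ← hey]; exact he)
        (by rw [hgk1]; exact he₂)
      refine ⟨m + 1, e', fun i => if i = m + 1 then y' else ts i, hE, ?_, Or.inr ⟨by omega, ?_, ?_, ?_⟩⟩
      · intro i h1 h2
        show D.precN (if i = m + 1 then y' else ts i) c
        rcases eq_or_ne i (m+1) with h | h
        · rw [if_pos h]; exact ha'
        · rw [if_neg h]; exact hTs i h1 (by omega)
      · rcases hcase with ⟨hm0, he'⟩ | ⟨hm1, hstart, -, -⟩
        · show D.precN e' (if 1 = m + 1 then y' else ts 1)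
          rw [if_pos (by omega), he']; exact he₂
        · show D.precN e' (if 1 = m + 1 then y' else ts 1)
          rw [if_neg (by omega)]; exact hstart
      · intro i h1 h2
        rcases hcase with ⟨hm0, he'⟩ | ⟨hm1, -, hmid, hend⟩
        · omega
        · show D.precN (D.tgt (if i = m + 1 then y' else ts i)) (if i + 1 = m + 1 then y' else ts (i+1))
          rcases Nat.lt_or_ge i m with h | h
          · rw [if_neg (by omega), if_neg (by omega)]; exact hmid i h1 h
          · have him : i = m := by omega
            rw [if_neg (by omega), if_pos (by omega), him, hend]; exact he₂
      · show D.tgt (if m + 1 = m + 1 then y' else ts (m+1)) = e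
        rw [if_pos rfl]; exact hey.symm

end

/-- backward cell path: if `e ≺⁻ d ≺⁻ c`, then there is an upper
path, staying inside `δ(c)`, from some source `e'` of `γ(c)` to `e`: either the
path is trivial (`m = 0` and `e' = e`), or `m ≥ 1`, `e' ≺⁻ t₁`,
`γ(tᵢ) ≺⁻ t_{i+1}` for `1 ≤ i < m`, and `γ(t_m) = e`, with all `tᵢ ∈ δ(c)`. -/
theorem dfc_backward_cell_path {α : Type*} [Fintype α] (D : DFC α) (e d c : α)
    (h1 : D.precN e d) (h2 : D.precN d c) :
    ∃ (m : ℕ) (e' : α) (ts : ℕ → α),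
      D.precN e' (D.tgt c) ∧
      (∀ i, 1 ≤ i → i ≤ m → D.precN (ts i) c) ∧
      ((m = 0 ∧ e' = e) ∨
        (1 ≤ m ∧ D.precN e' (ts 1) ∧
          (∀ i, 1 ≤ i → i < m → D.precN (D.tgt (ts i)) (ts (i + 1))) ∧
          D.tgt (ts m) = e)) := by
  exact dfc_main D c (Fintype.card α) 0 (fun _ => d) e (by omega)
    (by intro j hj; interval_cases j; exact h2)
    (by intro j hj; omega)
    (h1)
end
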